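/- arXiv:1606.05564 — 12 statements merged into one kernel-verified Lean document; each statement's English description precedes it below -/
import Mathlib

section
/- If (σ₁, …, σ_t) is a tuple of increasing positive integers satisfying the changemaker condition and σ_s is not tight (i.e., σ_s ≤ σ₁ + ⋯ + σ_{s-1}), then there exists a subset A ⊆ {1, …, s-1} with σ_s = Σ_{i∈A} σᵢ. Moreover, if no σ_k with k > 1 is tight, then A can be chosen with 1 ∈ A. -/
lemma sum_attachFin' {n : ℕ} (g : Fin n → ℕ) (s : Finset ℕ) (h : ∀ m ∈ s, m < n) :
    ∑ i ∈ s.attachFin h, g i = ∑ i ∈ s, (if hi : i < n then g ⟨i, hi⟩ else 0) := by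
  refine Finset.sum_bij (fun a _ => (a : ℕ)) ?_ ?_ ?_ ?_
  · intro a ha; simpa using (Finset.mem_attachFin h).1 ha
  · intro a _ b _ hab; exact Fin.val_injective hab
  · intro b hb; exact ⟨⟨b, h b hb⟩, (Finset.mem_attachFin h).2 hb, rfl⟩
  · intro a ha; simp [a.isLt]

lemma greedy (f : ℕ → ℕ) (m : ℕ) (h : ∀ k < m, f k ≤ 1 + ∑ j ∈ Finset.range k, f j) :
    ∀ n ≤ ∑ j ∈ Finset.range m, f j, ∃ A ⊆ Finset.range m, n = ∑ i ∈ A, f i := by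
  induction m with
  | zero => intro n hn; simp at hn; exact ⟨∅, by simp, by simp [hn]⟩
  | succ m ih =>
    intro n hn
    by_cases hc : n ≤ ∑ j ∈ Finset.range m, f j
    · obtain ⟨A, hA, hsum⟩ := ih (fun k hk => h k (hk.trans (Nat.lt_succ_self m))) n hc
      exact ⟨A, hA.trans (Finset.range_subset_range.2 (Nat.le_succ m)), hsum⟩
    · push_neg at hc
      have hfm := h m (Nat.lt_succ_self m)
      rw [Finset.sum_range_succ] at hn
      have h1 : f m ≤ n := by omega
      obtain ⟨A, hA, hsum⟩ := ih (fun k hk => h k (hk.trans (Nat.lt_succ_self m)))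
        (n - f m) (by omega)
      have hm : m ∉ A := fun hmem => absurd (hA hmem) (by simp)
      refine ⟨insert m A, ?_, ?_⟩
      · intro x hx
        rcases Finset.mem_insert.1 hx with rfl | hx
        · simp
        · exact (hA.trans (Finset.range_subset_range.2 (Nat.le_succ m))) hx
      · rw [Finset.sum_insert hm]; omega

/-- a non-tight changemaker coefficient is a subset sum of the earlier
coefficients; if the tuple is slack the subset may be chosen to contain the first index. -/
theorem changemaker_not_tight_subset_sum (t : ℕ) (ht : 0 < t) (σ : Fin t → ℕ)
    (hpos : ∀ i, 0 < σ i) (hmono : Monotone σ)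
    (hcm : ∀ n : ℕ, 1 ≤ n → n ≤ ∑ i, σ i → ∃ A : Finset (Fin t), n = ∑ i ∈ A, σ i)
    (s : Fin t) (hns : σ s ≤ ∑ j ∈ Finset.Iio s, σ j) :
    (∃ A ⊆ Finset.Iio s, σ s = ∑ i ∈ A, σ i) ∧
      ((∀ k : Fin t, 0 < (k : ℕ) → σ k ≠ 1 + ∑ j ∈ Finset.Iio k, σ j) →
        ∃ A ⊆ Finset.Iio s, (⟨0, ht⟩ : Fin t) ∈ A ∧ σ s = ∑ i ∈ A, σ i) := by
  classical
  set f : ℕ → ℕ := fun j => if hj : j < t then σ ⟨j, hj⟩ else 0 with hf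
  -- Iio as attachFin
  have hIio : ∀ k : Fin t, Finset.Iio k =
      (Finset.range k.val).attachFin (fun m hm => lt_trans (Finset.mem_range.1 hm) k.isLt) := by
    intro k; ext i
    rw [Finset.mem_attachFin, Finset.mem_range, Finset.mem_Iio, Fin.lt_def]
  have hsumIio : ∀ k : Fin t, ∑ j ∈ Finset.Iio k, σ j = ∑ j ∈ Finset.range k.val, f j := by
    intro k
    rw [hIio k, sum_attachFin']
  -- changemaker bound: σ k ≤ 1 + ∑_{j < k} σ j
  have hbound : ∀ k : Fin t, σ k ≤ 1 + ∑ j ∈ Finset.Iio k, σ j := by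
    intro k
    by_contra hk
    push_neg at hk
    set S := ∑ j ∈ Finset.Iio k, σ j with hS
    have hsub : ∑ j ∈ Finset.Iio k, σ j ≤ ∑ i, σ i :=
      Finset.sum_le_sum_of_subset (Finset.subset_univ _)
    have hk' : σ k ≤ ∑ i, σ i := Finset.single_le_sum (fun i _ => Nat.zero_le _) (Finset.mem_univ k)
    obtain ⟨A, hA⟩ := hcm (1 + S) (by omega) (by omega)
    by_cases hAk : ∀ i ∈ A, i < k
    · have : ∑ i ∈ A, σ i ≤ S := Finset.sum_le_sum_of_subset
        (fun i hi => Finset.mem_Iio.2 (hAk i hi))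
      omega
    · push_neg at hAk
      obtain ⟨i, hiA, hik⟩ := hAk
      have : σ k ≤ σ i := hmono hik
      have : σ i ≤ ∑ i ∈ A, σ i := Finset.single_le_sum (fun i _ => Nat.zero_le _) hiA
      omega
  -- f satisfies the greedy hypothesis on range s.val
  have hfb : ∀ k < t, f k ≤ 1 + ∑ j ∈ Finset.range k, f j := by
    intro k hk
    have h1 := hbound ⟨k, hk⟩
    rw [hsumIio ⟨k, hk⟩] at h1
    simp only [show ((⟨k, hk⟩ : Fin t) : ℕ) = k from rfl] at h1
    have h2 : f k = σ ⟨k, hk⟩ := dif_pos hk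
    omega
  have hspos : 0 < s.val := by
    by_contra h0
    push_neg at h0
    have h' := hns
    rw [hsumIio s, Nat.le_zero.1 h0] at h'
    simp at h'
    have := hpos s
    omega
  -- σ 0 = 1
  have hσ0 : σ ⟨0, ht⟩ = 1 := by
    have h1 : (1 : ℕ) ≤ ∑ i, σ i :=
      le_trans (hpos ⟨0, ht⟩) (Finset.single_le_sum (fun i _ => Nat.zero_le _) (Finset.mem_univ _))
    obtain ⟨A, hA⟩ := hcm 1 le_rfl h1
    have hAne : A.Nonempty := by
      by_contra h
      rw [Finset.not_nonempty_iff_eq_empty] at h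
      simp [h] at hA
    obtain ⟨i, hi⟩ := hAne
    have h2 : σ i ≤ 1 := hA ▸ Finset.single_le_sum (fun i _ => Nat.zero_le _) hi
    have h3 : σ ⟨0, ht⟩ ≤ σ i := hmono (by simp [Fin.le_def])
    have := hpos ⟨0, ht⟩
    omega
  constructor
  · -- part 1
    have hb : ∀ k < s.val, f k ≤ 1 + ∑ j ∈ Finset.range k, f j :=
      fun k hk => hfb k (lt_trans hk s.isLt)
    obtain ⟨A, hA, hsum⟩ := greedy f s.val hb (σ s) (by rw [← hsumIio]; exact hns)
    have hAt : ∀ m ∈ A, m < t := fun m hm => lt_trans (Finset.mem_range.1 (hA hm)) s.isLt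
    refine ⟨A.attachFin hAt, ?_, ?_⟩
    · intro i hi
      have := (Finset.mem_attachFin hAt).1 hi
      exact Finset.mem_Iio.2 (Fin.lt_def.2 (Finset.mem_range.1 (hA this)))
    · rw [sum_attachFin', hsum]
  · -- part 2
    intro hslack
    set g : ℕ → ℕ := fun j => f (j + 1) with hg
    obtain ⟨m, hm⟩ : ∃ m, s.val = m + 1 := ⟨s.val - 1, by omega⟩
    have hgb : ∀ k < m, g k ≤ 1 + ∑ j ∈ Finset.range k, g j := by
      intro k hk
      have hk1 : k + 1 < t := by have := s.isLt; omega
      have hb1 := hbound ⟨k + 1, hk1⟩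
      have hb2 := hslack ⟨k + 1, hk1⟩ (by simp)
      have hb3 : σ ⟨k + 1, hk1⟩ ≤ ∑ j ∈ Finset.Iio (⟨k + 1, hk1⟩ : Fin t), σ j := by omega
      rw [hsumIio ⟨k + 1, hk1⟩] at hb3
      simp only [show ((⟨k + 1, hk1⟩ : Fin t) : ℕ) = k + 1 from rfl] at hb3
      rw [Finset.sum_range_succ'] at hb3
      have hf0 : f 0 = 1 := by rw [show f 0 = σ ⟨0, ht⟩ from dif_pos ht, hσ0]
      have hgk : g k = σ ⟨k + 1, hk1⟩ := dif_pos hk1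
      have hgg : ∑ j ∈ Finset.range k, f (j + 1) = ∑ j ∈ Finset.range k, g j := rfl
      omega
    have hf0 : f 0 = 1 := by rw [show f 0 = σ ⟨0, ht⟩ from dif_pos ht, hσ0]
    have hsums : ∑ j ∈ Finset.Iio s, σ j = f 0 + ∑ j ∈ Finset.range m, g j := by
      rw [hsumIio s, hm, Finset.sum_range_succ']
      have : ∑ j ∈ Finset.range m, f (j + 1) = ∑ j ∈ Finset.range m, g j := rfl
      omega
    have hs1 : 1 ≤ σ s := hpos s
    obtain ⟨A, hA, hsum⟩ := greedy g m hgb (σ s - 1) (by omega)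
    -- build A' = insert 0 ((A.image (·+1)))
    set A' : Finset ℕ := insert 0 (A.image (· + 1)) with hA'
    have hA't : ∀ x ∈ A', x < t := by
      intro x hx
      rcases Finset.mem_insert.1 hx with rfl | hx
      · exact ht
      · obtain ⟨a, ha, rfl⟩ := Finset.mem_image.1 hx
        have := Finset.mem_range.1 (hA ha)
        have := s.isLt; omega
    have h0A : (0 : ℕ) ∉ A.image (· + 1) := by simp
    have hsumA' : ∑ x ∈ A', f x = σ s := by
      rw [hA', Finset.sum_insert h0A, Finset.sum_image (by intro a _ b _ hab; simp only at hab; omega)]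
      have : ∑ x ∈ A, f (x + 1) = ∑ x ∈ A, g x := rfl
      omega
    refine ⟨A'.attachFin hA't, ?_, ?_, ?_⟩
    · intro i hi
      have hi' := (Finset.mem_attachFin hA't).1 hi
      refine Finset.mem_Iio.2 (Fin.lt_def.2 ?_)
      rcases Finset.mem_insert.1 hi' with h0 | hx
      · omega
      · obtain ⟨a, ha, hax⟩ := Finset.mem_image.1 hx
        have := Finset.mem_range.1 (hA ha)
        omega
    · exact (Finset.mem_attachFin hA't).2 (Finset.mem_insert_self 0 _)
    · rw [sum_attachFin', ← hsumA']
end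

section
/- Let Z^n have orthonormal basis e₁, …, e_n and let Λ ⊆ Z^n be a sublattice. Suppose z ∈ Λ can be written z = Σ_{i∈A} eᵢ − Σ_{j∈B} eⱼ for disjoint subsets A, B ⊆ {1, …, n}. If z = x + y for x, y ∈ Λ with x·y ≥ 0, then there exist A' ⊆ A and B' ⊆ B such that x = Σ_{i∈A'} eᵢ − Σ_{j∈B'} eⱼ and y = Σ_{i∈A∖A'} eᵢ − Σ_{j∈B∖B'} eⱼ. -/
/-- decompositions of sums/differences of orthonormal basis vectors in a
sublattice of ℤⁿ into pieces pairing non-negatively. -/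
theorem irred_decomposition (n : ℕ) (Λ : AddSubgroup (Fin n → ℤ)) (A B : Finset (Fin n))
    (hAB : Disjoint A B) (z x y : Fin n → ℤ)
    (hz : z ∈ Λ) (hx : x ∈ Λ) (hy : y ∈ Λ)
    (hzdef : z = fun i => (if i ∈ A then (1 : ℤ) else 0) - (if i ∈ B then (1 : ℤ) else 0))
    (hsum : z = x + y) (hdot : 0 ≤ ∑ i, x i * y i) :
    ∃ A' ⊆ A, ∃ B' ⊆ B,
      x = (fun i => (if i ∈ A' then (1 : ℤ) else 0) - (if i ∈ B' then (1 : ℤ) else 0)) ∧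
      y = (fun i => (if i ∈ A \ A' then (1 : ℤ) else 0) -
            (if i ∈ B \ B' then (1 : ℤ) else 0)) := by
  have hdisj : ∀ i, i ∈ A → i ∉ B := fun i hA hB =>
    Finset.disjoint_left.mp hAB hA hB
  have hy' : ∀ i, y i = z i - x i := by
    intro i; have := congrFun hsum i; simp only [Pi.add_apply] at this; linarith
  have hzv : ∀ i, z i = (if i ∈ A then (1 : ℤ) else 0) - (if i ∈ B then (1 : ℤ) else 0) := by
    intro i; rw [hzdef]
  have hterm : ∀ i, x i * y i ≤ 0 := by
    intro i
    rw [hy' i, hzv i]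
    by_cases hA : i ∈ A
    · have hB : i ∉ B := hdisj i hA
      simp only [hA, hB, if_true, if_false]
      rcases le_or_gt (x i) 0 with h | h
      · nlinarith
      · have h1 : 1 ≤ x i := h
        nlinarith
    · by_cases hB : i ∈ B
      · simp only [hA, hB, if_true, if_false]
        rcases le_or_gt (x i) (-1) with h | h
        · nlinarith
        · have h1 : 0 ≤ x i := by omega
          nlinarith
      · simp only [hA, hB, if_false]
        nlinarith [sq_nonneg (x i)]
  have hsum0 : ∑ i, x i * y i = 0 :=
    le_antisymm (Finset.sum_nonpos fun i _ => hterm i) hdot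
  have hzero : ∀ i, x i * y i = 0 := by
    intro i
    exact (Finset.sum_eq_zero_iff_of_nonpos fun i _ => hterm i).mp hsum0 i (Finset.mem_univ i)
  have key : ∀ i, x i = 0 ∨ x i = z i := by
    intro i
    rcases mul_eq_zero.mp (hzero i) with h | h
    · exact Or.inl h
    · right; have := hy' i; omega
  refine ⟨A.filter (fun i => x i ≠ 0), Finset.filter_subset _ _,
    B.filter (fun i => x i ≠ 0), Finset.filter_subset _ _, ?_, ?_⟩
  · funext i
    have hk := key i
    have hv := hzv i
    by_cases hA : i ∈ A
    · have hB : i ∉ B := hdisj i hA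
      by_cases hx0 : x i = 0 <;>
        simp [Finset.mem_filter, hA, hB, hx0] at hv ⊢ <;> omega
    · by_cases hB : i ∈ B
      · by_cases hx0 : x i = 0 <;>
          simp [Finset.mem_filter, hA, hB, hx0] at hv ⊢ <;> omega
      · simp [Finset.mem_filter, hA, hB] at hv ⊢; omega
  · funext i
    have hk := key i
    have hv := hzv i
    have hyv := hy' i
    by_cases hA : i ∈ A
    · have hB : i ∉ B := hdisj i hA
      by_cases hx0 : x i = 0 <;>
        simp [Finset.mem_sdiff, Finset.mem_filter, hA, hB, hx0] at hv ⊢ <;> omega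
    · by_cases hB : i ∈ B
      · by_cases hx0 : x i = 0 <;>
          simp [Finset.mem_sdiff, Finset.mem_filter, hA, hB, hx0] at hv ⊢ <;> omega
      · simp [Finset.mem_sdiff, Finset.mem_filter, hA, hB] at hv ⊢; omega
end

section
/- Let G = (V, E) be a finite connected undirected graph without self-loops, and let Λ(G) be its graph lattice. For any subset R ⊆ V with x = [R] = Σ_{v∈R} v ∈ Λ(G) and any z ∈ Λ(G), one has (x − z)·z ≤ 0. -/
/-- The simple graph underlying a multigraph given by an edge multiplicity function. -/
def graphOf {V : Type*} (e : V → V → ℕ) : SimpleGraph V where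
  Adj u v := u ≠ v ∧ (0 < e u v ∨ 0 < e v u)
  symm := ⟨fun u v h => ⟨h.1.symm, h.2.symm⟩⟩
  loopless := ⟨fun v h => h.1 rfl⟩

/-- The bilinear form of the graph lattice, computed on representatives in the free
abelian group on the vertices: on vertices it is `v·v = deg v`, `v·w = -e(v,w)`. -/
def Bform {V : Type*} [Fintype V] (e : V → V → ℕ) (x y : V → ℤ) : ℤ :=
  ∑ v, ∑ u, x v * (y v - y u) * (e v u : ℤ)

lemma key_term (c d : ℤ) (h1 : -1 ≤ c) (h2 : c ≤ 1) : (c - d) * d ≤ 0 := by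
  have hd : d ≤ d ^ 2 := by nlinarith [sq_nonneg d, sq_nonneg (d - 1)]
  have hd' : -d ≤ d ^ 2 := by nlinarith [sq_nonneg (d + 1)]
  interval_cases c <;> nlinarith

lemma Bform_symmetrize {V : Type*} [Fintype V] (e : V → V → ℕ)
    (hsymm : ∀ u v, e u v = e v u) (a b : V → ℤ) :
    2 * Bform e a b = ∑ v, ∑ u, (a v - a u) * (b v - b u) * (e v u : ℤ) := by
  have h : Bform e a b = ∑ v, ∑ u, a u * (b u - b v) * (e v u : ℤ) := by
    unfold Bform
    rw [Finset.sum_comm]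
    exact Finset.sum_congr rfl fun u _ => Finset.sum_congr rfl fun v _ => by rw [hsymm]
  have h2 : 2 * Bform e a b = Bform e a b + ∑ v, ∑ u, a u * (b u - b v) * (e v u : ℤ) := by
    rw [← h]; ring
  rw [h2]
  unfold Bform
  rw [← Finset.sum_add_distrib]
  refine Finset.sum_congr rfl fun v _ => ?_
  rw [← Finset.sum_add_distrib]
  exact Finset.sum_congr rfl fun u _ => by ring

/-- for a sum of vertices `x = [R]` and any `z` in the graph lattice,
`(x - z)·z ≤ 0`. -/
theorem graphLattice_useful_bound {V : Type*} [Fintype V] [DecidableEq V]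
    (e : V → V → ℕ) (hsymm : ∀ u v, e u v = e v u) (hloop : ∀ v, e v v = 0)
    (hconn : (graphOf e).Connected)
    (R : Finset V) (z : V → ℤ) :
    Bform e ((fun v => if v ∈ R then (1 : ℤ) else 0) - z) z ≤ 0 := by
  set x : V → ℤ := fun v => if v ∈ R then (1 : ℤ) else 0 with hx
  have hsym := Bform_symmetrize e hsymm (x - z) z
  have hle : ∑ v, ∑ u, ((x - z) v - (x - z) u) * (z v - z u) * (e v u : ℤ) ≤ 0 := by
    refine Finset.sum_nonpos fun v _ => Finset.sum_nonpos fun u _ => ?_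
    have hc1 : -1 ≤ x v - x u := by simp only [hx]; split_ifs <;> norm_num
    have hc2 : x v - x u ≤ 1 := by simp only [hx]; split_ifs <;> norm_num
    have := key_term (x v - x u) (z v - z u) hc1 hc2
    have he : (0 : ℤ) ≤ (e v u : ℤ) := Int.natCast_nonneg _
    have : ((x - z) v - (x - z) u) * (z v - z u) ≤ 0 := by
      simpa [sub_sub_sub_comm] using this
    calc ((x - z) v - (x - z) u) * (z v - z u) * (e v u : ℤ)
        ≤ 0 * (e v u : ℤ) := by exact mul_le_mul_of_nonneg_right this he
      _ = 0 := by ring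
  linarith
end

section
/- Let G = (V, E) be a finite connected multigraph without self-loops and Λ(G) its graph lattice. A nonzero element x ∈ Λ(G) is irreducible if and only if x = [R] for some subset R ⊆ V such that both the subgraph induced by R and the subgraph induced by V∖R are connected. -/
/-- Being zero in the graph lattice `Λ(G) = ℤ^V / ℤ[V]` means being a constant function. -/
def IsConstantFn {V : Type*} (x : V → ℤ) : Prop := ∃ c : ℤ, ∀ v, x v = c

private lemma twoBform {V : Type*} [Fintype V] (e : V → V → ℕ)
    (hsymm : ∀ u v, e u v = e v u) (y z : V → ℤ) :
    2 * Bform e y z = ∑ v, ∑ u, (y v - y u) * (z v - z u) * (e v u : ℤ) := by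
  have h1 : Bform e y z = ∑ v, ∑ u, y u * (z u - z v) * (e v u : ℤ) := by
    rw [Bform, Finset.sum_comm]
    refine Finset.sum_congr rfl fun v _ => Finset.sum_congr rfl fun u _ => ?_
    rw [hsymm]
  rw [two_mul]
  nth_rewrite 2 [h1]
  rw [Bform, ← Finset.sum_add_distrib]
  refine Finset.sum_congr rfl fun v _ => ?_
  rw [← Finset.sum_add_distrib]
  refine Finset.sum_congr rfl fun u _ => ?_
  ring

private lemma eq_on_of_preconnected {V : Type*} (G : SimpleGraph V) (s : Set V)
    (hc : (G.induce s).Preconnected) (y : V → ℤ)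
    (h : ∀ v u, v ∈ s → u ∈ s → G.Adj v u → y v = y u) :
    ∀ v u, v ∈ s → u ∈ s → y v = y u := by
  have key : ∀ (a b : s), (G.induce s).Walk a b → y a = y b := by
    intro a b w
    induction w with
    | nil => rfl
    | cons ha _ ih =>
      exact (h _ _ (Subtype.coe_prop _) (Subtype.coe_prop _)
        (SimpleGraph.comap_adj.mp ha)).trans ih
  intro v u hv hu
  obtain ⟨w⟩ := hc ⟨v, hv⟩ ⟨u, hu⟩
  exact key _ _ w

private lemma exists_cross {V : Type*} (G : SimpleGraph V) (s : Set V) :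
    ∀ {a b : V}, G.Walk a b → a ∈ s → b ∉ s →
      ∃ v u, v ∈ s ∧ u ∉ s ∧ G.Adj v u := by
  intro a b w
  induction w with
  | nil => intro h1 h2; exact absurd h1 h2
  | @cons a c b hadj p ih =>
    intro ha hb
    by_cases hc : c ∈ s
    · exact ih hc hb
    · exact ⟨a, c, ha, hc, hadj⟩

private lemma mul_sub_self_nonpos (d q : ℤ) (h1 : -1 ≤ q) (h2 : q ≤ 1) :
    d * (q - d) ≤ 0 := by
  rcases lt_trichotomy d 0 with h | h | h
  · exact mul_nonpos_iff.mpr (Or.inr ⟨by omega, by omega⟩)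
  · simp [h]
  · exact mul_nonpos_iff.mpr (Or.inl ⟨by omega, by omega⟩)

private lemma not_irred_of_disconnected {V : Type*} [Fintype V] (e : V → V → ℕ)
    (hsymm : ∀ u v, e u v = e v u) (hloop : ∀ v, e v v = 0)
    (x : V → ℤ) (c ε : ℤ) (s : Set V) [DecidablePred (· ∈ s)]
    (hx : ∀ v, x v = (if v ∈ s then ε else 0) + c)
    (hdis : ¬ ((graphOf e).induce s).Preconnected) (hε : ε ≠ 0) :
    ∃ y z : V → ℤ, x = y + z ∧ 0 ≤ Bform e y z ∧ ¬ IsConstantFn y ∧ ¬ IsConstantFn z := by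
  classical
  rw [SimpleGraph.Preconnected] at hdis
  push_neg at hdis
  obtain ⟨a, b, hab⟩ := hdis
  set A : Set V := {w | ∃ h : w ∈ s, ((graphOf e).induce s).Reachable a ⟨w, h⟩} with hA
  have haA : (a : V) ∈ A := ⟨a.2, by rw [Subtype.coe_eta]⟩
  have hAs : ∀ w ∈ A, w ∈ s := fun w hw => hw.1
  have hclose : ∀ w ∈ A, ∀ w', w' ∈ s → (graphOf e).Adj w w' → w' ∈ A := by
    rintro w ⟨hw, hr⟩ w' hw' hadj
    exact ⟨hw', hr.trans (SimpleGraph.Adj.reachable (SimpleGraph.comap_adj.mpr hadj))⟩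
  have hbA : (b : V) ∉ A := by
    rintro ⟨hb, hr⟩
    exact hab (by rwa [Subtype.coe_eta] at hr)
  refine ⟨fun v => if v ∈ A then ε else 0, fun v => x v - (if v ∈ A then ε else 0),
    by funext v; simp, ?_, ?_, ?_⟩
  · have hterm : ∀ v u : V,
        ((if v ∈ A then ε else 0) - (if u ∈ A then ε else 0)) *
          ((x v - (if v ∈ A then ε else 0)) - (x u - (if u ∈ A then ε else 0))) * (e v u : ℤ)
        = 0 := by
      intro v u
      by_cases hvu : e v u = 0
      · simp [hvu]
      have hne : v ≠ u := by rintro rfl; exact hvu (hloop v)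
      have hadj : (graphOf e).Adj v u := ⟨hne, Or.inl (Nat.pos_of_ne_zero hvu)⟩
      by_cases hv : v ∈ A <;> by_cases hu : u ∈ A
      · simp [hv, hu]
      · have hus : u ∉ s := fun h => hu (hclose v hv u h hadj)
        rw [hx v, hx u]
        simp [hv, hu, hAs v hv, hus]
      · have hvs : v ∉ s := fun h => hv (hclose u hu v h hadj.symm)
        rw [hx v, hx u]
        simp [hv, hu, hAs u hu, hvs]
      · simp [hv, hu]
    have h2 : 2 * Bform e (fun v => if v ∈ A then ε else 0)
        (fun v => x v - (if v ∈ A then ε else 0)) = 0 := by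
      rw [twoBform e hsymm]
      exact Finset.sum_eq_zero fun v _ => Finset.sum_eq_zero fun u _ => hterm v u
    linarith
  · rintro ⟨d, hd⟩
    have h1 := hd a
    have h2 := hd b
    simp [haA, hbA] at h1 h2
    exact hε (h1.trans h2.symm)
  · rintro ⟨d, hd⟩
    have h1 := hd a
    have h2 := hd b
    have hbs : (b : V) ∈ s := b.2
    have has : (a : V) ∈ s := a.2
    simp only [hx] at h1 h2
    simp [haA, hbA, has, hbs] at h1 h2
    omega

/-- a nonzero element of the graph lattice is irreducible iff it is `[R]`
for a subset `R` of vertices such that `R` and its complement induce connected subgraphs. -/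
theorem graphLattice_irreducible_iff {V : Type*} [Fintype V] [DecidableEq V]
    (e : V → V → ℕ) (hsymm : ∀ u v, e u v = e v u) (hloop : ∀ v, e v v = 0)
    (hconn : (graphOf e).Connected)
    (x : V → ℤ) (hx : ¬ IsConstantFn x) :
    (∀ y z : V → ℤ, x = y + z → 0 ≤ Bform e y z → IsConstantFn y ∨ IsConstantFn z) ↔
      ∃ R : Finset V,
        (∃ c : ℤ, ∀ v, x v = (if v ∈ R then (1 : ℤ) else 0) + c) ∧
        ((graphOf e).induce (↑R : Set V)).Connected ∧
        ((graphOf e).induce ((↑R : Set V)ᶜ)).Connected := by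
  classical
  have hG : (graphOf e).Preconnected := hconn.preconnected
  constructor
  · intro P
    have hVne : Nonempty V := hconn.nonempty
    obtain ⟨vM, _, hvM⟩ := Finset.exists_max_image Finset.univ x Finset.univ_nonempty
    obtain ⟨vm, _, hvm⟩ := Finset.exists_min_image Finset.univ x Finset.univ_nonempty
    set M := x vM with hMdef
    set m := x vm with hmdef
    have hle : ∀ v, m ≤ x v ∧ x v ≤ M :=
      fun v => ⟨hvm v (Finset.mem_univ v), hvM v (Finset.mem_univ v)⟩
    have hmM : m < M := by
      rcases lt_or_ge m M with h | h
      · exact h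
      · exact absurd ⟨m, fun v => by have h1 := (hle v).1; have h2 := (hle v).2; omega⟩ hx
    -- Step 1 : the values of x span exactly {m, m+1}
    have hM1 : M = m + 1 := by
      by_contra hMm
      have hsp : m + 2 ≤ M := by omega
      set y : V → ℤ := fun v => min (x v) (m + 1) with hy
      set z : V → ℤ := fun v => x v - min (x v) (m + 1) with hz
      have hB : 0 ≤ Bform e y z := by
        have hterm : ∀ v u, 0 ≤ (y v - y u) * (z v - z u) * (e v u : ℤ) := by
          intro v u
          have hnn : 0 ≤ (y v - y u) * (z v - z u) := by
            rcases le_or_gt (x v) (m + 1) with h1 | h1 <;>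
              rcases le_or_gt (x u) (m + 1) with h2 | h2
            · simp [hy, hz, min_eq_left h1, min_eq_left h2]
            · simp only [hy, hz, min_eq_left h1, min_eq_right h2.le]
              nlinarith
            · simp only [hy, hz, min_eq_right h1.le, min_eq_left h2]
              nlinarith
            · simp only [hy, hz, min_eq_right h1.le, min_eq_right h2.le]
              nlinarith
          exact mul_nonneg hnn (Int.natCast_nonneg _)
        have h2B := twoBform e hsymm y z
        have hS : 0 ≤ ∑ v, ∑ u, (y v - y u) * (z v - z u) * (e v u : ℤ) :=
          Finset.sum_nonneg fun v _ => Finset.sum_nonneg fun u _ => hterm v u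
        linarith
      have hyM : y vM = m + 1 := by simp only [hy]; rw [min_eq_right (by omega)]
      have hym : y vm = m := by simp only [hy]; rw [min_eq_left (by omega)]
      rcases P y z (by funext v; simp [hy, hz]) hB with ⟨d, hd⟩ | ⟨d, hd⟩
      · have h1 := hd vM; have h2 := hd vm; rw [hyM] at h1; rw [hym] at h2; omega
      · have h1 := hd vM; have h2 := hd vm
        simp only [hz] at h1 h2
        rw [min_eq_right (by omega : m + 1 ≤ x vM)] at h1
        rw [min_eq_left (by omega : x vm ≤ m + 1)] at h2
        omega
    -- Step 2 : so x = [R] + m for R the set where x is maximal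
    set R : Finset V := Finset.univ.filter (fun v => x v = m + 1) with hR
    have hxR : ∀ v, x v = (if v ∈ R then (1 : ℤ) else 0) + m := by
      intro v
      have h1 := (hle v).1; have h2 := (hle v).2
      by_cases hv : v ∈ R
      · have h3 := (Finset.mem_filter.mp hv).2
        rw [if_pos hv]; omega
      · have h3 : ¬ x v = m + 1 := fun hh => hv (Finset.mem_filter.mpr ⟨Finset.mem_univ v, hh⟩)
        rw [if_neg hv]; omega
    have hvMR : vM ∈ R := by simp [hR, ← hMdef, hM1]
    have hvmR : vm ∉ R := by simp [hR, ← hmdef]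
    refine ⟨R, ⟨m, hxR⟩, ?_, ?_⟩
    · -- R induces a connected graph
      haveI : Nonempty ↑(↑R : Set V) := ⟨⟨vM, by simpa using hvMR⟩⟩
      refine ⟨?_⟩
      by_contra hdis
      have hx' : ∀ v, x v = (if v ∈ (↑R : Set V) then (1 : ℤ) else 0) + m := by
        intro v; rw [hxR v]; simp [Finset.mem_coe]
      obtain ⟨y, z, h1, h2, h3, h4⟩ :=
        not_irred_of_disconnected e hsymm hloop x m 1 (↑R : Set V) hx' hdis one_ne_zero
      rcases P y z h1 h2 with h | h
      · exact h3 h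
      · exact h4 h
    · -- the complement of R induces a connected graph
      haveI : Nonempty ↑((↑R : Set V)ᶜ) := ⟨⟨vm, by simpa using hvmR⟩⟩
      refine ⟨?_⟩
      by_contra hdis
      have hx' : ∀ v, x v = (if v ∈ ((↑R : Set V)ᶜ) then (-1 : ℤ) else 0) + (m + 1) := by
        intro v; rw [hxR v]
        by_cases hv : v ∈ R <;> simp [hv] <;> omega
      obtain ⟨y, z, h1, h2, h3, h4⟩ :=
        not_irred_of_disconnected e hsymm hloop x (m + 1) (-1) ((↑R : Set V)ᶜ) hx' hdis
          (by norm_num)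
      rcases P y z h1 h2 with h | h
      · exact h3 h
      · exact h4 h
  · rintro ⟨R, ⟨c, hc⟩, hCR, hCRc⟩ y z hxyz hB
    have hz : ∀ v, z v = x v - y v := by
      intro v; have := congrFun hxyz v; simp only [Pi.add_apply] at this; omega
    set χ : V → ℤ := fun v => if v ∈ R then 1 else 0 with hχ
    have hdx : ∀ v u, x v - x u = χ v - χ u := by
      intro v u; rw [hc v, hc u]; simp only [hχ]; ring
    have hzz : ∀ v u, z v - z u = (χ v - χ u) - (y v - y u) := by
      intro v u; rw [hz v, hz u]; have := hdx v u; omega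
    have hδ : ∀ v u, χ v - χ u = -1 ∨ χ v - χ u = 0 ∨ χ v - χ u = 1 := by
      intro v u; by_cases hv : v ∈ R <;> by_cases hu : u ∈ R <;> simp [hχ, hv, hu]
    have hnonpos : ∀ v u, (y v - y u) * (z v - z u) * (e v u : ℤ) ≤ 0 := by
      intro v u
      have h1 : (y v - y u) * (z v - z u) ≤ 0 := by
        rw [hzz v u]
        have hd := hδ v u
        exact mul_sub_self_nonpos _ _ (by omega) (by omega)
      have he : (0 : ℤ) ≤ (e v u : ℤ) := Int.natCast_nonneg _
      nlinarith
    have hS0 : ∑ v, ∑ u, (y v - y u) * (z v - z u) * (e v u : ℤ) = 0 := by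
      have h1 : ∑ v, ∑ u, (y v - y u) * (z v - z u) * (e v u : ℤ) ≤ 0 :=
        Finset.sum_nonpos fun v _ => Finset.sum_nonpos fun u _ => hnonpos v u
      have h2 := twoBform e hsymm y z
      omega
    have hterm0 : ∀ v u, (y v - y u) * (z v - z u) * (e v u : ℤ) = 0 := by
      intro v u
      have h1 := (Finset.sum_eq_zero_iff_of_nonpos
        (fun v _ => Finset.sum_nonpos fun u _ => hnonpos v u)).mp hS0 v (Finset.mem_univ v)
      exact (Finset.sum_eq_zero_iff_of_nonpos
        (fun u _ => hnonpos v u)).mp h1 u (Finset.mem_univ u)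
    have hkey : ∀ v u, e v u ≠ 0 → y v - y u = 0 ∨ y v - y u = χ v - χ u := by
      intro v u h
      have h0 := hterm0 v u
      have h1 : (y v - y u) * (z v - z u) = 0 := by
        rcases mul_eq_zero.mp h0 with h' | h'
        · exact h'
        · exact absurd h' (by exact_mod_cast h)
      rcases mul_eq_zero.mp h1 with h' | h'
      · left; omega
      · right; rw [hzz v u] at h'; omega
    have hne_of_adj : ∀ v u, (graphOf e).Adj v u → e v u ≠ 0 := by
      intro v u hadj
      have hs := hsymm u v
      rcases hadj.2 with h | h <;> omega
    -- y is constant on R and on its complement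
    have hyR : ∀ v u, v ∈ (↑R : Set V) → u ∈ (↑R : Set V) → y v = y u := by
      refine eq_on_of_preconnected (graphOf e) _ hCR.preconnected y ?_
      intro v u hv hu hadj
      rcases hkey v u (hne_of_adj v u hadj) with h | h
      · omega
      · simp only [hχ, if_pos (Finset.mem_coe.mp hv), if_pos (Finset.mem_coe.mp hu)] at h
        omega
    have hyRc : ∀ v u, v ∈ ((↑R : Set V)ᶜ) → u ∈ ((↑R : Set V)ᶜ) → y v = y u := by
      refine eq_on_of_preconnected (graphOf e) _ hCRc.preconnected y ?_
      intro v u hv hu hadj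
      have hv' : v ∉ R := fun h => hv (Finset.mem_coe.mpr h)
      have hu' : u ∉ R := fun h => hu (Finset.mem_coe.mpr h)
      rcases hkey v u (hne_of_adj v u hadj) with h | h
      · omega
      · simp only [hχ, if_neg hv', if_neg hu'] at h
        omega
    -- a crossing edge
    obtain ⟨a⟩ := hCR.nonempty
    obtain ⟨b⟩ := hCRc.nonempty
    obtain ⟨w⟩ := hG (a : V) (b : V)
    obtain ⟨v0, u0, hv0, hu0, hadj0⟩ := exists_cross (graphOf e) (↑R : Set V) w a.2 b.2
    have hv0' : v0 ∈ R := Finset.mem_coe.mp hv0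
    have hu0' : u0 ∉ R := fun h => hu0 (Finset.mem_coe.mpr h)
    rcases hkey v0 u0 (hne_of_adj v0 u0 hadj0) with h | h
    · -- y is globally constant
      left
      refine ⟨y v0, fun w => ?_⟩
      by_cases hw : w ∈ R
      · exact hyR w v0 (Finset.mem_coe.mpr hw) hv0
      · have := hyRc w u0 (fun hh => hw (Finset.mem_coe.mp hh)) hu0
        omega
    · -- z is globally constant
      right
      simp only [hχ, if_pos hv0', if_neg hu0'] at h
      refine ⟨c - y u0, fun w => ?_⟩
      rw [hz w, hc w]
      by_cases hw : w ∈ R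
      · have := hyR w v0 (Finset.mem_coe.mpr hw) hv0
        simp only [if_pos hw]
        omega
      · have := hyRc w u0 (fun hh => hw (Finset.mem_coe.mp hh)) hu0
        simp only [if_neg hw]
        omega
end

section
/- Let G = (V, E) be a finite connected multigraph without self-loops. The graph lattice Λ(G) contains a vector of norm one if and only if G contains a cut edge (an edge whose deletion disconnects G). -/
/-- The multigraph obtained by deleting one copy of the edge `uv`. -/
def deleteEdge {V : Type*} [DecidableEq V] (e : V → V → ℕ) (u v : V) : V → V → ℕ :=
  fun a b => if (a = u ∧ b = v) ∨ (a = v ∧ b = u) then e a b - 1 else e a b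

section Aux

variable {V : Type*} [Fintype V] [DecidableEq V]

lemma Bform_double (e : V → V → ℕ) (hsymm : ∀ u v, e u v = e v u) (x : V → ℤ) :
    2 * Bform e x x = ∑ v, ∑ u, (e v u : ℤ) * (x v - x u) ^ 2 := by
  have h1 : Bform e x x = ∑ v, ∑ u, x u * (x u - x v) * (e v u : ℤ) := by
    rw [Bform, Finset.sum_comm]
    exact Finset.sum_congr rfl fun v _ => Finset.sum_congr rfl fun u _ => by rw [hsymm u v]
  rw [two_mul]
  nth_rewrite 2 [h1]
  rw [Bform, ← Finset.sum_add_distrib]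
  refine Finset.sum_congr rfl fun v _ => ?_
  rw [← Finset.sum_add_distrib]
  exact Finset.sum_congr rfl fun u _ => by ring

lemma sum_extract (f : V × V → ℤ) (hnn : ∀ p, 0 ≤ f p) (hsym : ∀ a b, f (a, b) = f (b, a))
    (hdiag : ∀ a, f (a, a) = 0) (hsum : ∑ p, f p = 2) :
    ∃ u v, u ≠ v ∧ f (u, v) = 1 ∧ ∀ p, p ≠ (u, v) → p ≠ (v, u) → f p = 0 := by
  have hex : ∃ p : V × V, 0 < f p := by
    by_contra h
    push_neg at h
    have h2 : ∑ p, f p ≤ 0 := Finset.sum_nonpos fun p _ => h p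
    omega
  obtain ⟨⟨u, v⟩, hp⟩ := hex
  have huv : u ≠ v := by rintro rfl; rw [hdiag] at hp; omega
  set S : Finset (V × V) := {(u, v), (v, u)} with hS
  have hmem : ((u, v) : V × V) ∉ ({(v, u)} : Finset (V × V)) := by
    simp only [Finset.mem_singleton, Prod.mk.injEq, not_and]
    exact fun h _ => huv h
  have hSsum : ∑ p ∈ S, f p = 2 * f (u, v) := by
    rw [hS, Finset.sum_insert hmem, Finset.sum_singleton, hsym v u]; ring
  have hle : ∑ p ∈ S, f p ≤ ∑ p, f p :=
    Finset.sum_le_sum_of_subset_of_nonneg (Finset.subset_univ S) fun p _ _ => hnn p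
  have hsplit : ∑ p ∈ Finset.univ \ S, f p + ∑ p ∈ S, f p = ∑ p, f p :=
    Finset.sum_sdiff (Finset.subset_univ S)
  have hnn2 : 0 ≤ ∑ p ∈ Finset.univ \ S, f p := Finset.sum_nonneg fun p _ => hnn p
  have hrest : ∑ p ∈ Finset.univ \ S, f p = 0 := by omega
  have hf1 : f (u, v) = 1 := by omega
  refine ⟨u, v, huv, hf1, fun p h1 h2 => ?_⟩
  have hpS : p ∈ Finset.univ \ S := by
    rw [Finset.mem_sdiff]
    refine ⟨Finset.mem_univ _, ?_⟩
    rw [hS]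
    simp only [Finset.mem_insert, Finset.mem_singleton]
    tauto
  exact (Finset.sum_eq_zero_iff_of_nonneg fun q _ => hnn q).mp hrest p hpS

lemma deleteEdge_le (e : V → V → ℕ) (u v a b : V) : deleteEdge e u v a b ≤ e a b := by
  unfold deleteEdge; split <;> omega

lemma adj_of_del_adj {e : V → V → ℕ} {u v a b : V}
    (h : (graphOf (deleteEdge e u v)).Adj a b) : (graphOf e).Adj a b := by
  refine ⟨h.1, h.2.imp (fun h' => lt_of_lt_of_le h' (deleteEdge_le e u v a b))
    (fun h' => lt_of_lt_of_le h' (deleteEdge_le e u v b a))⟩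

lemma del_adj (e : V → V → ℕ) {u v a b : V} (hne2 : ¬((a = u ∧ b = v) ∨ (a = v ∧ b = u)))
    (h : (graphOf e).Adj a b) : (graphOf (deleteEdge e u v)).Adj a b := by
  refine ⟨h.1, ?_⟩
  have h1 : deleteEdge e u v a b = e a b := if_neg hne2
  have h2 : deleteEdge e u v b a = e b a := if_neg (by tauto)
  rw [h1, h2]; exact h.2

lemma reach_const (G : SimpleGraph V) (x : V → ℤ) (h : ∀ a b, G.Adj a b → x a = x b)
    {a b : V} (hr : G.Reachable a b) : x a = x b := by
  obtain ⟨w⟩ := hr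
  induction w with
  | nil => rfl
  | cons h' _ ih => exact (h _ _ h').trans ih

lemma reach_del (e : V → V → ℕ) {u v : V}
    (hr : (graphOf (deleteEdge e u v)).Reachable u v) {a b : V} (w : (graphOf e).Walk a b) :
    (graphOf (deleteEdge e u v)).Reachable a b := by
  induction w with
  | nil => exact SimpleGraph.Reachable.refl _
  | @cons a c b hadj p ih =>
    refine SimpleGraph.Reachable.trans ?_ ih
    by_cases hcase : (a = u ∧ c = v) ∨ (a = v ∧ c = u)
    · rcases hcase with ⟨rfl, rfl⟩ | ⟨rfl, rfl⟩
      · exact hr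
      · exact hr.symm
    · exact (del_adj e hcase hadj).reachable

end Aux

/-- the graph lattice contains a vector of norm one iff `G` has a cut edge. -/
theorem graphLattice_norm_one_iff_cut_edge {V : Type*} [Fintype V] [DecidableEq V]
    (e : V → V → ℕ) (hsymm : ∀ u v, e u v = e v u) (hloop : ∀ v, e v v = 0)
    (hconn : (graphOf e).Connected) :
    (∃ x : V → ℤ, Bform e x x = 1) ↔
      ∃ u v : V, 0 < e u v ∧ ¬ (graphOf (deleteEdge e u v)).Connected := by
  constructor
  · rintro ⟨x, hx⟩
    have h2 : ∑ v, ∑ u, (e v u : ℤ) * (x v - x u) ^ 2 = 2 := by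
      rw [← Bform_double e hsymm x, hx]; ring
    have h3 : ∑ p : V × V, (e p.1 p.2 : ℤ) * (x p.1 - x p.2) ^ 2 = 2 := by
      rw [← Finset.univ_product_univ, Finset.sum_product]; exact h2
    obtain ⟨u, v, huv, hf1, hz⟩ := sum_extract
      (fun p => (e p.1 p.2 : ℤ) * (x p.1 - x p.2) ^ 2)
      (fun p => mul_nonneg (Nat.cast_nonneg _) (sq_nonneg _))
      (fun a b => by simp only; rw [hsymm a b]; ring)
      (fun a => by simp [hloop a])
      h3
    simp only at hf1 hz
    have heuv : (e u v : ℤ) = 1 ∧ (x u - x v) ^ 2 = 1 := by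
      rcases Int.mul_eq_one_iff_eq_one_or_neg_one.mp hf1 with ⟨h1, h2'⟩ | ⟨h1, h2'⟩
      · exact ⟨h1, h2'⟩
      · exfalso; have := Nat.cast_nonneg (α := ℤ) (e u v); omega
    have he1 : e u v = 1 := by exact_mod_cast heuv.1
    have hxne : x u ≠ x v := by
      intro h; rw [h] at heuv; simp at heuv
    refine ⟨u, v, by omega, ?_⟩
    intro hc
    have hconst : ∀ a b, (graphOf (deleteEdge e u v)).Adj a b → x a = x b := by
      intro a b hab
      by_cases hcase : (a = u ∧ b = v) ∨ (a = v ∧ b = u)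
      · exfalso
        have hvu : e v u = 1 := by rw [hsymm v u]; exact he1
        have e1 : deleteEdge e u v a b = 0 := by
          unfold deleteEdge; rw [if_pos hcase]
          rcases hcase with ⟨rfl, rfl⟩ | ⟨rfl, rfl⟩ <;> omega
        have e2 : deleteEdge e u v b a = 0 := by
          unfold deleteEdge; rw [if_pos (by tauto)]
          rcases hcase with ⟨rfl, rfl⟩ | ⟨rfl, rfl⟩ <;> omega
        rcases hab.2 with h' | h' <;> omega
      · by_cases hx0 : x a = x b
        · exact hx0
        exfalso
        have hz1 := hz (a, b) (by simp only [ne_eq, Prod.mk.injEq]; tauto)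
          (by simp only [ne_eq, Prod.mk.injEq]; tauto)
        have hz2 := hz (b, a) (by simp only [ne_eq, Prod.mk.injEq]; tauto)
          (by simp only [ne_eq, Prod.mk.injEq]; tauto)
        simp only at hz1 hz2
        have s1 : (x a - x b) ^ 2 ≠ 0 := pow_ne_zero _ (sub_ne_zero.mpr hx0)
        have s2 : (x b - x a) ^ 2 ≠ 0 :=
          pow_ne_zero _ (sub_ne_zero.mpr fun h => hx0 h.symm)
        have e1 : (e a b : ℤ) = 0 := by
          rcases mul_eq_zero.mp hz1 with h' | h'
          · exact h'
          · exact absurd h' s1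
        have e2 : (e b a : ℤ) = 0 := by
          rcases mul_eq_zero.mp hz2 with h' | h'
          · exact h'
          · exact absurd h' s2
        have e1' : e a b = 0 := by exact_mod_cast e1
        have e2' : e b a = 0 := by exact_mod_cast e2
        rcases (adj_of_del_adj hab).2 with h' | h' <;> omega
    exact hxne (reach_const _ x hconst (hc.preconnected u v))
  · rintro ⟨u, v, hpos, hdis⟩
    classical
    have huv : u ≠ v := by rintro rfl; rw [hloop u] at hpos; omega
    have he1 : e u v = 1 := by
      by_contra h
      have h2 : 2 ≤ e u v := by omega
      apply hdis
      have hiff : ∀ a b, 0 < deleteEdge e u v a b ↔ 0 < e a b := by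
        intro a b
        unfold deleteEdge
        split
        · rename_i hcase
          rcases hcase with ⟨ha, hb⟩ | ⟨ha, hb⟩
          · rw [ha, hb]; omega
          · rw [ha, hb]; have := hsymm v u; omega
        · exact Iff.rfl
      have hgeq : graphOf (deleteEdge e u v) = graphOf e := by
        ext a b
        exact and_congr_right fun _ => or_congr (hiff a b) (hiff b a)
      rw [hgeq]; exact hconn
    have hvu : e v u = 1 := (hsymm v u).trans he1
    have hur : ¬ (graphOf (deleteEdge e u v)).Reachable u v := by
      intro hr
      apply hdis
      haveI : Nonempty V := hconn.nonempty
      refine ⟨fun a b => ?_⟩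
      obtain ⟨w⟩ := hconn.preconnected a b
      exact reach_del e hr w
    set D := graphOf (deleteEdge e u v) with hD
    set x : V → ℤ := fun w => if D.Reachable u w then 1 else 0 with hxdef
    have hxu : x u = 1 := if_pos (SimpleGraph.Reachable.refl u)
    have hxv : x v = 0 := if_neg hur
    have hxadj : ∀ a b, D.Adj a b → x a = x b := by
      intro a b hab
      by_cases h : D.Reachable u a
      · have h2 : D.Reachable u b := h.trans hab.reachable
        simp [hxdef, h, h2]
      · have h2 : ¬ D.Reachable u b := fun h2 => h (h2.trans hab.symm.reachable)
        simp [hxdef, h, h2]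
    have hpt : ∀ a b, (e a b : ℤ) * (x a - x b) ^ 2 =
        (if (a, b) = (u, v) then 1 else 0) + (if (a, b) = (v, u) then 1 else 0) := by
      intro a b
      by_cases h1 : (a, b) = (u, v)
      · have hne : ((a, b) : V × V) ≠ (v, u) := by
          rw [h1]; intro hq; rw [Prod.mk.injEq] at hq; exact huv hq.1
        rw [Prod.mk.injEq] at h1
        rw [if_pos (Prod.mk.injEq .. ▸ h1 : ((a,b) : V × V) = (u,v)), if_neg hne,
          h1.1, h1.2, he1, hxu, hxv]; ring
      · by_cases h2 : (a, b) = (v, u)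
        · rw [Prod.mk.injEq] at h2
          rw [if_neg h1, if_pos (Prod.mk.injEq .. ▸ h2 : ((a,b) : V × V) = (v,u)),
            h2.1, h2.2, hvu, hxu, hxv]; ring
        · rw [if_neg h1, if_neg h2]
          by_cases hab : 0 < e a b
          · have hane : a ≠ b := by rintro rfl; rw [hloop a] at hab; omega
            have hcase : ¬((a = u ∧ b = v) ∨ (a = v ∧ b = u)) := by
              simp only [ne_eq, Prod.mk.injEq] at h1 h2; tauto
            have hadj : D.Adj a b := del_adj e hcase ⟨hane, Or.inl hab⟩
            rw [hxadj a b hadj]; ring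
          · have : e a b = 0 := by omega
            rw [this]; simp
    refine ⟨x, ?_⟩
    have hsum2 : ∑ a, ∑ b, (e a b : ℤ) * (x a - x b) ^ 2 = 2 := by
      have : ∑ a, ∑ b, (e a b : ℤ) * (x a - x b) ^ 2 =
          ∑ p : V × V, ((if p = (u, v) then (1 : ℤ) else 0) +
            (if p = (v, u) then 1 else 0)) := by
        rw [← Finset.univ_product_univ, Finset.sum_product]
        exact Finset.sum_congr rfl fun a _ => Finset.sum_congr rfl fun b _ => hpt a b
      rw [this, Finset.sum_add_distrib, Finset.sum_ite_eq' Finset.univ ((u, v) : V × V),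
        Finset.sum_ite_eq' Finset.univ ((v, u) : V × V)]
      simp
    have := Bform_double e hsymm x
    rw [hsum2] at this
    omega
end

section
/- Let G be a finite connected multigraph without self-loops or cut-edges, and suppose v is an irreducible vertex of Λ(G) with v = x + y, x, y ∈ Λ(G), and x·y = −1. Then there are subsets R, S partitioning V∖{v} with exactly one edge between R and S, such that {x, y} = {[R] + v, [S] + v}; moreover there are unique vertices u₁, u₂ ≠ v with x·u₁ = y·u₂ = 1, and every vertex w ∉ {v, u₁, u₂} satisfies w·x ≤ 0 and w·y ≤ 0. -/
/-- Equality in the graph lattice `ℤ^V/ℤ[V]`. -/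
def EqModConst {V : Type*} (x y : V → ℤ) : Prop := ∃ c : ℤ, ∀ v, x v = y v + c

/-- Pairing a vertex generator against `z`. -/
lemma Bform_delta {V : Type*} [Fintype V] [DecidableEq V] (e : V → V → ℕ) (w : V) (z : V → ℤ) :
    Bform e (fun u => if u = w then (1:ℤ) else 0) z = ∑ q, (z w - z q) * (e w q : ℤ) := by
  unfold Bform
  rw [Finset.sum_eq_single_of_mem w (Finset.mem_univ w)
    (fun p _ hpw => Finset.sum_eq_zero fun q _ => by simp [hpw])]
  simp

/-- splitting an irreducible vertex `v = x + y` with `x·y = -1` in a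
connected multigraph without cut edges. -/
theorem graphLattice_vertex_splitting {V : Type*} [Fintype V] [DecidableEq V]
    (e : V → V → ℕ) (hsymm : ∀ u v, e u v = e v u) (hloop : ∀ v, e v v = 0)
    (hconn : (graphOf e).Connected)
    (hnocut : ∀ u v : V, 0 < e u v → (graphOf (deleteEdge e u v)).Connected)
    (v : V)
    (hirr : ∀ y z : V → ℤ,
      EqModConst (fun u => if u = v then (1 : ℤ) else 0) (y + z) →
      0 ≤ Bform e y z → IsConstantFn y ∨ IsConstantFn z)
    (x y : V → ℤ)
    (hxy : EqModConst (fun u => if u = v then (1 : ℤ) else 0) (x + y))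
    (hB : Bform e x y = -1) :
    ∃ R S : Finset V, Disjoint R S ∧ R ∪ S = Finset.univ.erase v ∧
      (∑ a ∈ R, ∑ b ∈ S, e a b) = 1 ∧
      ((EqModConst x (fun u => (if u ∈ R then (1 : ℤ) else 0) + (if u = v then 1 else 0)) ∧
        EqModConst y (fun u => (if u ∈ S then (1 : ℤ) else 0) + (if u = v then 1 else 0))) ∨
       (EqModConst x (fun u => (if u ∈ S then (1 : ℤ) else 0) + (if u = v then 1 else 0)) ∧
        EqModConst y (fun u => (if u ∈ R then (1 : ℤ) else 0) + (if u = v then 1 else 0)))) ∧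
      ∃ u₁ u₂ : V, u₁ ≠ v ∧ u₂ ≠ v ∧
        Bform e (fun u => if u = u₁ then (1 : ℤ) else 0) x = 1 ∧
        Bform e (fun u => if u = u₂ then (1 : ℤ) else 0) y = 1 ∧
        (∀ u : V, u ≠ v → Bform e (fun w => if w = u then (1 : ℤ) else 0) x = 1 → u = u₁) ∧
        (∀ u : V, u ≠ v → Bform e (fun w => if w = u then (1 : ℤ) else 0) y = 1 → u = u₂) ∧
        (∀ w : V, w ≠ v → w ≠ u₁ → w ≠ u₂ →
          Bform e (fun u => if u = w then (1 : ℤ) else 0) x ≤ 0 ∧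
          Bform e (fun u => if u = w then (1 : ℤ) else 0) y ≤ 0) := by
  obtain ⟨c₀, hc₀⟩ := hxy
  have dxy : ∀ p q : V, (x p - x q) + (y p - y q)
      = (if p = v then (1:ℤ) else 0) - (if q = v then 1 else 0) := by
    intro p q
    have h1 := hc₀ p; have h2 := hc₀ q
    simp only [Pi.add_apply] at h1 h2
    linarith
  -- the symmetrized form
  have hT : ∑ p : V, ∑ q : V, (e p q : ℤ) * (x p - x q) * (y p - y q) = -2 := by
    have h1 : ∀ p q : V, (e p q : ℤ) * (x p - x q) * (y p - y q)
        = x p * (y p - y q) * (e p q : ℤ) + x q * (y q - y p) * (e p q : ℤ) := fun p q => by ring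
    have h2 : ∑ p : V, ∑ q : V, x q * (y q - y p) * (e p q : ℤ) = Bform e x y := by
      rw [Finset.sum_comm]
      unfold Bform
      refine Finset.sum_congr rfl fun p _ => Finset.sum_congr rfl fun q _ => ?_
      rw [hsymm q p]
    calc ∑ p : V, ∑ q : V, (e p q : ℤ) * (x p - x q) * (y p - y q)
        = ∑ p : V, ∑ q : V,
            (x p * (y p - y q) * (e p q : ℤ) + x q * (y q - y p) * (e p q : ℤ)) := by
          simp_rw [h1]
      _ = (∑ p : V, ∑ q : V, x p * (y p - y q) * (e p q : ℤ))
          + ∑ p : V, ∑ q : V, x q * (y q - y p) * (e p q : ℤ) := by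
          simp_rw [Finset.sum_add_distrib]
      _ = Bform e x y + Bform e x y := by rw [h2]; rfl
      _ = -2 := by rw [hB]; ring
  -- every term is nonpositive
  have hFle : ∀ p q : V, (e p q : ℤ) * (x p - x q) * (y p - y q) ≤ 0 := by
    intro p q
    have hd := dxy p q
    have hdval : (x p - x q) + (y p - y q) = 0 ∨ (x p - x q) + (y p - y q) = 1
        ∨ (x p - x q) + (y p - y q) = -1 := by
      rw [hd]; split_ifs <;> norm_num
    have hst : (x p - x q) * (y p - y q) ≤ 0 := by
      have hcase : (x p - x q) = 0 ∨ (y p - y q) = 0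
          ∨ (0 < x p - x q ∧ y p - y q < 0) ∨ (x p - x q < 0 ∧ 0 < y p - y q) := by omega
      rcases hcase with h|h|⟨h1,h2⟩|⟨h1,h2⟩
      · simp [h]
      · simp [h]
      · exact le_of_lt (mul_neg_of_pos_of_neg h1 h2)
      · exact le_of_lt (mul_neg_of_neg_of_pos h1 h2)
    calc (e p q:ℤ) * (x p - x q) * (y p - y q)
        = (e p q:ℤ) * ((x p - x q) * (y p - y q)) := by ring
      _ ≤ 0 := mul_nonpos_of_nonneg_of_nonpos (Int.natCast_nonneg _) hst
  -- existence of a strictly negative term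
  have hex : ∃ a b : V, (e a b : ℤ) * (x a - x b) * (y a - y b) < 0 := by
    by_contra h
    push_neg at h
    have h0 : (0:ℤ) ≤ ∑ p : V, ∑ q : V, (e p q : ℤ) * (x p - x q) * (y p - y q) :=
      Finset.sum_nonneg fun p _ => Finset.sum_nonneg fun q _ => h p q
    omega
  obtain ⟨a, b, hab_neg⟩ := hex
  have hab_ne : a ≠ b := by
    rintro rfl
    simp [sub_self] at hab_neg
  -- isolate the two mirror terms
  have hTP : ∑ pq ∈ Finset.univ ×ˢ Finset.univ,
      (e pq.1 pq.2 : ℤ) * (x pq.1 - x pq.2) * (y pq.1 - y pq.2) = -2 := by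
    rw [Finset.sum_product]; exact hT
  have hmem1 : ((a,b) : V × V) ∈ Finset.univ ×ˢ Finset.univ := by simp
  rw [← Finset.add_sum_erase _ _ hmem1] at hTP
  have hmem2 : ((b,a) : V × V) ∈ (Finset.univ ×ˢ Finset.univ).erase (a,b) := by
    refine Finset.mem_erase.mpr ⟨?_, by simp⟩
    simp only [ne_eq, Prod.mk.injEq, not_and]
    intro h; exact absurd h.symm hab_ne
  rw [← Finset.add_sum_erase _ _ hmem2] at hTP
  have hFsymm : (e b a : ℤ) * (x b - x a) * (y b - y a)
      = (e a b : ℤ) * (x a - x b) * (y a - y b) := by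
    rw [hsymm b a]; ring
  have hs₁le : ∑ pq ∈ ((Finset.univ ×ˢ Finset.univ).erase (a,b)).erase (b,a),
      (e pq.1 pq.2 : ℤ) * (x pq.1 - x pq.2) * (y pq.1 - y pq.2) ≤ 0 :=
    Finset.sum_nonpos fun pq _ => hFle pq.1 pq.2
  have hFab : (e a b : ℤ) * (x a - x b) * (y a - y b) = -1 := by
    simp only at hTP
    rw [hFsymm] at hTP
    omega
  have hSzero : ∑ pq ∈ ((Finset.univ ×ˢ Finset.univ).erase (a,b)).erase (b,a),
      (e pq.1 pq.2 : ℤ) * (x pq.1 - x pq.2) * (y pq.1 - y pq.2) = 0 := by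
    simp only at hTP
    rw [hFsymm, hFab] at hTP
    omega
  have Z : ∀ p q : V, ¬((p = a ∧ q = b) ∨ (p = b ∧ q = a)) →
      (e p q : ℤ) * (x p - x q) * (y p - y q) = 0 := by
    intro p q h
    have hmem : ((p,q) : V × V) ∈ ((Finset.univ ×ˢ Finset.univ).erase (a,b)).erase (b,a) := by
      refine Finset.mem_erase.mpr ⟨?_, Finset.mem_erase.mpr ⟨?_, by simp⟩⟩ <;>
        simp only [ne_eq, Prod.mk.injEq, not_and] <;> intro h1 h2 <;> exact h (by tauto)
    exact (Finset.sum_eq_zero_iff_of_nonpos (fun i _ => hFle i.1 i.2)).mp hSzero _ hmem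
  -- the distinguished edge
  have heab1 : e a b = 1 := by
    have hdvd : (e a b : ℤ) ∣ 1 := by
      refine (dvd_neg).mp ⟨(x a - x b) * (y a - y b), ?_⟩
      rw [← hFab]; ring
    have := Int.eq_one_of_dvd_one (Int.natCast_nonneg _) hdvd
    exact_mod_cast this
  have hstab : (x a - x b) * (y a - y b) = -1 := by
    rw [heab1] at hFab
    push_cast at hFab
    linarith
  have hsum0 : (x a - x b) + (y a - y b) = 0 ∧ (x a - x b = 1 ∨ x a - x b = -1) := by
    have hu : IsUnit (x a - x b) := isUnit_of_mul_isUnit_left (by rw [hstab]; exact isUnit_one.neg)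
    have hs := Int.isUnit_iff.mp hu
    constructor
    · rcases hs with h | h <;> rw [h] at hstab ⊢ <;> nlinarith
    · exact hs
  have hav : a ≠ v := by
    intro h
    have hd := dxy a b
    rw [if_pos h, if_neg (fun hh : b = v => hab_ne (h.trans hh.symm))] at hd
    omega
  have hbv : b ≠ v := by
    intro h
    have hd := dxy a b
    rw [if_neg hav, if_pos h] at hd
    omega
  -- orient the edge so that x drops from A to B
  have main : ∃ A B : V, A ≠ B ∧ A ≠ v ∧ B ≠ v ∧ e A B = 1 ∧ x A - x B = 1 ∧ y A - y B = -1 ∧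
      (∀ p q : V, ¬((p = A ∧ q = B) ∨ (p = B ∧ q = A)) →
        (e p q : ℤ) * (x p - x q) * (y p - y q) = 0) := by
    rcases hsum0.2 with h | h
    · exact ⟨a, b, hab_ne, hav, hbv, heab1, h, by omega, Z⟩
    · refine ⟨b, a, hab_ne.symm, hbv, hav, by rw [hsymm]; exact heab1, by omega, by omega, ?_⟩
      intro p q hpq
      exact Z p q (by tauto)
  clear hab_neg hFab hstab hsum0 hav hbv heab1 hab_ne Z hTP hmem1 hmem2 hFsymm hs₁le hSzero hT
  obtain ⟨A, B, hAB, hAv, hBv, heAB, hxAB, hyAB, Z⟩ := main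
  -- consequences of vanishing terms
  have X0 : ∀ p q : V, p ≠ v → q ≠ v → ¬((p = A ∧ q = B) ∨ (p = B ∧ q = A)) →
      (e p q : ℤ) * (x p - x q) = 0 := by
    intro p q hp hq hnp
    have hz := Z p q hnp
    have hd := dxy p q
    rw [if_neg hp, if_neg hq] at hd
    have hyx : y p - y q = -(x p - x q) := by linarith
    rw [hyx] at hz
    have h2 : ((e p q : ℤ) * (x p - x q)) * (x p - x q) = 0 := by linear_combination -hz
    rcases mul_eq_zero.mp h2 with h | h
    · exact h
    · rw [h, mul_zero]
  have Y0 : ∀ p q : V, p ≠ v → q ≠ v → ¬((p = A ∧ q = B) ∨ (p = B ∧ q = A)) →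
      (e p q : ℤ) * (y p - y q) = 0 := by
    intro p q hp hq hnp
    have hz := Z p q hnp
    have hd := dxy p q
    rw [if_neg hp, if_neg hq] at hd
    have hxy' : x p - x q = -(y p - y q) := by linarith
    rw [hxy'] at hz
    have h2 : ((e p q : ℤ) * (y p - y q)) * (y p - y q) = 0 := by linear_combination -hz
    rcases mul_eq_zero.mp h2 with h | h
    · exact h
    · rw [h, mul_zero]
  have XV : ∀ p : V, p ≠ v → 0 < e p v → x p = x v ∨ x p = x v - 1 := by
    intro p hp hpe
    have hz := Z p v (by rintro (⟨h1, h2⟩ | ⟨h1, h2⟩); exacts [hBv h2.symm, hAv h2.symm])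
    have hd := dxy p v
    rw [if_neg hp, if_pos rfl] at hd
    have hepos : (0:ℤ) < (e p v : ℤ) := by exact_mod_cast hpe
    have h2 : (e p v : ℤ) * ((x p - x v) * (y p - y v)) = 0 := by linear_combination hz
    rcases mul_eq_zero.mp h2 with h | h
    · exact absurd h hepos.ne'
    · rcases mul_eq_zero.mp h with h | h
      · left; omega
      · right; omega
  -- connectivity of the graph minus the edge AB gives the two-value property
  have hG' : (graphOf (deleteEdge e A B)).Connected := hnocut A B (by omega)
  have hdel_symm : ∀ p q : V, deleteEdge e A B p q = deleteEdge e A B q p := by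
    intro p q
    by_cases h : (p = A ∧ q = B) ∨ (p = B ∧ q = A)
    · have h' : (q = A ∧ p = B) ∨ (q = B ∧ p = A) := by tauto
      unfold deleteEdge
      rw [if_pos h, if_pos h', hsymm]
    · have h' : ¬((q = A ∧ p = B) ∨ (q = B ∧ p = A)) := by tauto
      unfold deleteEdge
      rw [if_neg h, if_neg h', hsymm]
  have hedge : ∀ p q : V, (graphOf (deleteEdge e A B)).Adj p q →
      0 < e p q ∧ ¬((p = A ∧ q = B) ∨ (p = B ∧ q = A)) := by
    intro p q hadj
    obtain ⟨hne, hlt⟩ := hadj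
    have hlt' : 0 < deleteEdge e A B p q := by
      rcases hlt with h | h
      · exact h
      · rw [hdel_symm]; exact h
    by_cases h : (p = A ∧ q = B) ∨ (p = B ∧ q = A)
    · exfalso
      unfold deleteEdge at hlt'
      rw [if_pos h] at hlt'
      have he : e p q = 1 := by
        rcases h with ⟨h1, h2⟩ | ⟨h1, h2⟩ <;> subst h1 <;> subst h2
        · exact heAB
        · rw [hsymm]; exact heAB
      omega
    · refine ⟨?_, h⟩
      unfold deleteEdge at hlt'
      rwa [if_neg h] at hlt'
  have step : ∀ p q : V, (graphOf (deleteEdge e A B)).Adj p q →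
      (x q = x v ∨ x q = x v - 1) → (x p = x v ∨ x p = x v - 1) := by
    intro p q hadj hq
    by_cases hp : p = v
    · left; rw [hp]
    obtain ⟨hpe, hns⟩ := hedge p q hadj
    by_cases hqv : q = v
    · exact XV p hp (hqv ▸ hpe)
    · have h0 := X0 p q hp hqv hns
      have hxeq : x p = x q := by
        rcases mul_eq_zero.mp h0 with h | h
        · exfalso; have : (0:ℤ) < (e p q : ℤ) := by exact_mod_cast hpe
          omega
        · omega
      omega
  have twoval : ∀ u : V, x u = x v ∨ x u = x v - 1 := by
    have key : ∀ (n : ℕ) (u : V) (w : (graphOf (deleteEdge e A B)).Walk u v),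
        w.length = n → (x u = x v ∨ x u = x v - 1) := by
      intro n
      induction n with
      | zero =>
        intro u w hw
        have hu := SimpleGraph.Walk.eq_of_length_eq_zero hw
        rw [hu]
        left; rfl
      | succ n ih =>
        intro u w hw
        cases w with
        | nil => simp at hw
        | cons h p => exact step _ _ h (ih _ p (by simpa using hw))
    intro u
    obtain ⟨w⟩ := hG'.preconnected u v
    exact key w.length u w rfl
  have hxA : x A = x v := by
    rcases twoval A with h | h
    · exact h
    · exfalso; rcases twoval B with h' | h' <;> omega
  have hxB : x B = x v - 1 := by omega
  -- define the partition
  refine ⟨Finset.univ.filter (fun u => u ≠ v ∧ x u = x v),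
    Finset.univ.filter (fun u => u ≠ v ∧ x u ≠ x v), ?_, ?_, ?_, ?_, ?_⟩
  · rw [Finset.disjoint_left]
    intro u h1 h2
    simp only [Finset.mem_filter] at h1 h2
    exact h2.2.2 h1.2.2
  · ext u
    simp only [Finset.mem_union, Finset.mem_filter, Finset.mem_erase, Finset.mem_univ,
      and_true, true_and]
    tauto
  · have hAR : A ∈ Finset.univ.filter (fun u => u ≠ v ∧ x u = x v) := by
      simp [Finset.mem_filter, hAv, hxA]
    have hBS : B ∈ Finset.univ.filter (fun u => u ≠ v ∧ x u ≠ x v) := by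
      simp only [Finset.mem_filter, Finset.mem_univ, true_and]
      exact ⟨hBv, by omega⟩
    have ez : ∀ p ∈ Finset.univ.filter (fun u => u ≠ v ∧ x u = x v),
        ∀ q ∈ Finset.univ.filter (fun u => u ≠ v ∧ x u ≠ x v),
        ¬(p = A ∧ q = B) → e p q = 0 := by
      intro p hp q hq hpq
      simp only [Finset.mem_filter, Finset.mem_univ, true_and] at hp hq
      have hpB : p ≠ B := by intro h; rw [h] at hp; omega
      have h0 := X0 p q hp.1 hq.1 (by tauto)
      have hxq : x q = x v - 1 := by rcases twoval q with h | h; exacts [absurd h hq.2, h]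
      have hone : x p - x q = 1 := by omega
      rw [hone, mul_one] at h0
      exact_mod_cast h0
    calc ∑ p ∈ Finset.univ.filter (fun u => u ≠ v ∧ x u = x v),
          ∑ q ∈ Finset.univ.filter (fun u => u ≠ v ∧ x u ≠ x v), e p q
        = ∑ q ∈ Finset.univ.filter (fun u => u ≠ v ∧ x u ≠ x v), e A q := by
          refine Finset.sum_eq_single_of_mem A hAR fun p hp hpA => Finset.sum_eq_zero ?_
          intro q hq
          exact ez p hp q hq (fun h => hpA h.1)
      _ = e A B := by
          refine Finset.sum_eq_single_of_mem B hBS fun q hq hqB => ?_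
          exact ez A hAR q hq (fun h => hqB h.2)
      _ = 1 := heAB
  · left
    constructor
    · refine ⟨x v - 1, fun u => ?_⟩
      dsimp only
      by_cases huv : u = v
      · rw [if_neg (by simp [Finset.mem_filter, huv]), if_pos huv, huv]
        ring
      · by_cases huR : x u = x v
        · rw [if_pos (by simp [Finset.mem_filter, huv, huR]), if_neg huv]
          omega
        · have hxu : x u = x v - 1 := by
            rcases twoval u with h | h; exacts [absurd h huR, h]
          rw [if_neg (by simp [Finset.mem_filter]; tauto), if_neg huv]
          omega
    · refine ⟨-(x v) - c₀, fun u => ?_⟩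
      dsimp only
      have hyu : y u = (if u = v then (1:ℤ) else 0) - x u - c₀ := by
        have := hc₀ u
        simp only [Pi.add_apply] at this
        linarith
      by_cases huv : u = v
      · rw [if_pos huv] at hyu
        rw [if_neg (by simp [Finset.mem_filter, huv]), if_pos huv]
        have hxv : x u = x v := by rw [huv]
        omega
      · rw [if_neg huv] at hyu
        by_cases huS : x u = x v
        · rw [if_neg (by simp [Finset.mem_filter]; tauto), if_neg huv]
          omega
        · have hxu : x u = x v - 1 := by
            rcases twoval u with h | h; exacts [absurd h huS, h]
          rw [if_pos (by simp [Finset.mem_filter]; tauto), if_neg huv]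
          omega
  · -- the distinguished vertices
    have hxle : ∀ u : V, u ≠ v → u ≠ A →
        Bform e (fun w => if w = u then (1:ℤ) else 0) x ≤ 0 := by
      intro u huv huA
      rw [Bform_delta]
      apply Finset.sum_nonpos
      intro q _
      by_cases hqv : q = v
      · have hs : x u - x q ≤ 0 := by rw [hqv]; rcases twoval u with h | h <;> omega
        exact mul_nonpos_of_nonpos_of_nonneg hs (Int.natCast_nonneg _)
      by_cases hspec : u = B ∧ q = A
      · have hxs : x u - x q = -1 := by rw [hspec.1, hspec.2]; omega
        rw [hxs]
        have : (0:ℤ) ≤ (e u q : ℤ) := Int.natCast_nonneg _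
        linarith
      · have h0 := X0 u q huv hqv (by tauto)
        have hz : (x u - x q) * (e u q : ℤ) = 0 := by linear_combination h0
        exact le_of_eq hz
    have hyle : ∀ u : V, u ≠ v → u ≠ B →
        Bform e (fun w => if w = u then (1:ℤ) else 0) y ≤ 0 := by
      intro u huv huB
      rw [Bform_delta]
      apply Finset.sum_nonpos
      intro q _
      by_cases hqv : q = v
      · have hd := dxy u v
        rw [if_neg huv, if_pos rfl] at hd
        have hs : y u - y q ≤ 0 := by rw [hqv]; rcases twoval u with h | h <;> omega
        exact mul_nonpos_of_nonpos_of_nonneg hs (Int.natCast_nonneg _)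
      by_cases hspec : u = A ∧ q = B
      · have hys : y u - y q = -1 := by rw [hspec.1, hspec.2]; exact hyAB
        rw [hys]
        have : (0:ℤ) ≤ (e u q : ℤ) := Int.natCast_nonneg _
        linarith
      · have h0 := Y0 u q huv hqv (by tauto)
        have hz : (y u - y q) * (e u q : ℤ) = 0 := by linear_combination h0
        exact le_of_eq hz
    have hBxA : Bform e (fun u => if u = A then (1:ℤ) else 0) x = 1 := by
      rw [Bform_delta]
      have h1 : ∀ q ∈ Finset.univ, q ≠ B → (x A - x q) * (e A q : ℤ) = 0 := by
        intro q _ hqB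
        by_cases hqv : q = v
        · have hz : x A - x q = 0 := by rw [hqv, hxA]; ring
          rw [hz, zero_mul]
        · have h0 := X0 A q hAv hqv
            (fun h => h.elim (fun hh => hqB hh.2) (fun hh => hAB hh.1))
          linear_combination h0
      rw [Finset.sum_eq_single_of_mem B (Finset.mem_univ B) h1, hxAB, heAB]
      norm_num
    have hByB : Bform e (fun u => if u = B then (1:ℤ) else 0) y = 1 := by
      rw [Bform_delta]
      have h1 : ∀ q ∈ Finset.univ, q ≠ A → (y B - y q) * (e B q : ℤ) = 0 := by
        intro q _ hqA
        by_cases hqv : q = v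
        · have hd := dxy B v
          rw [if_neg hBv, if_pos rfl] at hd
          have hz : y B - y q = 0 := by rw [hqv]; omega
          rw [hz, zero_mul]
        · have h0 := Y0 B q hBv hqv
            (fun h => h.elim (fun hh => hAB hh.1.symm) (fun hh => hqA hh.2))
          linear_combination h0
      rw [Finset.sum_eq_single_of_mem A (Finset.mem_univ A) h1]
      have h2 : y B - y A = 1 := by omega
      rw [h2, hsymm B A, heAB]
      norm_num
    refine ⟨A, B, hAv, hBv, hBxA, hByB, ?_, ?_, ?_⟩
    · intro u huv h1
      by_contra hne
      have := hxle u huv hne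
      omega
    · intro u huv h1
      by_contra hne
      have := hyle u huv hne
      omega
    · intro w h1 h2 h3
      exact ⟨hxle w h1 h2, hyle w h1 h3⟩
end

section
/- Let p/q > 0 with continued fraction p/q = [a₀, a₁, …, a_l]⁻ where a₀ ≥ 1 and aᵢ ≥ 2 for i ≥ 1. Then the (l+1)×(l+1) tridiagonal matrix M with diagonal entries a₀, …, a_l and off-diagonal entries −1 is positive-definite, and det M = p. -/
/-- Negative continued fraction `[a₀, a₁, …]⁻ = a₀ - 1/(a₁ - 1/(⋯))`. -/
def ncfZ : List ℤ → ℚ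
  | [] => 0
  | x :: xs => (x : ℚ) - (ncfZ xs)⁻¹

/-- The tridiagonal matrix with diagonal `a₀, …, a_l` and off-diagonal entries `-1`. -/
def triMat (l : ℕ) (a : Fin (l + 1) → ℤ) : Matrix (Fin (l + 1)) (Fin (l + 1)) ℚ :=
  Matrix.of fun i j =>
    if i = j then (a i : ℚ)
    else if (i : ℕ) + 1 = (j : ℕ) ∨ (j : ℕ) + 1 = (i : ℕ) then -1 else 0

/-! ### Auxiliary: quadratic form identity -/

open Finset in
lemma quadNat (L : ℕ) (A X : ℕ → ℚ) :
    ∑ n ∈ range (L+1), ∑ m ∈ range (L+1),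
      X n * (if n = m then A n else if n+1 = m ∨ m+1 = n then -1 else 0) * X m
    = (A 0 - 1) * X 0^2 + X L^2
      + ∑ n ∈ range L, ((A (n+1) - 2) * X (n+1)^2 + (X n - X (n+1))^2) := by
  induction L with
  | zero => simp; ring
  | succ L ih =>
      have h1 : ∀ n ∈ range (L+1),
          X n * (if n = L+1 then A n else if n+1 = L+1 ∨ (L+1)+1 = n then -1 else 0) * X (L+1)
          = if n = L then -(X L * X (L+1)) else 0 := by
        intro n hn
        simp only [mem_range] at hn
        by_cases h : n = L
        · subst h
          rw [if_neg (by omega : ¬(n = n+1)), if_pos (Or.inl rfl), if_pos rfl]; ring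
        · rw [if_neg (by omega : ¬(n = L+1)), if_neg (by omega : ¬(n+1 = L+1 ∨ (L+1)+1 = n)),
            if_neg h]; ring
      have h2 : ∀ m ∈ range (L+1),
          X (L+1) * (if L+1 = m then A (L+1) else if (L+1)+1 = m ∨ m+1 = L+1 then -1 else 0) * X m
          = if m = L then -(X L * X (L+1)) else 0 := by
        intro m hm
        simp only [mem_range] at hm
        by_cases h : m = L
        · subst h
          rw [if_neg (by omega : ¬(m+1 = m)), if_pos (Or.inr rfl), if_pos rfl]; ring
        · rw [if_neg (by omega : ¬(L+1 = m)), if_neg (by omega : ¬((L+1)+1 = m ∨ m+1 = L+1)),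
            if_neg h]; ring
      have e1 : ∀ n ∈ range (L+1), (∑ m ∈ range (L+1+1),
            X n * (if n = m then A n else if n+1 = m ∨ m+1 = n then -1 else 0) * X m)
          = (∑ m ∈ range (L+1),
            X n * (if n = m then A n else if n+1 = m ∨ m+1 = n then -1 else 0) * X m)
            + (if n = L then -(X L * X (L+1)) else 0) := by
        intro n hn; rw [sum_range_succ, h1 n hn]
      rw [sum_range_succ (fun n => ∑ m ∈ range (L+1+1),
        X n * (if n = m then A n else if n+1 = m ∨ m+1 = n then -1 else 0) * X m) (L+1),
        sum_congr rfl e1, sum_add_distrib,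
        sum_range_succ (fun m =>
          X (L+1) * (if L+1 = m then A (L+1) else if (L+1)+1 = m ∨ m+1 = L+1 then -1 else 0) * X m) (L+1),
        sum_congr rfl h2, ih,
        Finset.sum_ite_eq' (range (L+1)) L (fun _ => -(X L * X (L+1))),
        if_pos (self_mem_range_succ L),
        sum_range_succ (fun n => (A (n+1) - 2) * X (n+1)^2 + (X n - X (n+1))^2) L]
      simp only [if_neg (by omega : ¬(L+1 = L+1+1)),
        if_pos (Or.inl rfl : L+1+1 = L+1+1 ∨ (L+1+1)+1 = L+1), if_true]
      ring

/-! ### Auxiliary: continuants -/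

/-- Continuant of the negative continued fraction. -/
def contD : List ℤ → ℤ
  | [] => 1
  | [x] => x
  | x :: y :: xs => x * contD (y :: xs) - contD xs

@[simp] lemma contD_nil : contD [] = 1 := rfl
@[simp] lemma contD_single (x : ℤ) : contD [x] = x := rfl
lemma contD_cons (x y : ℤ) (xs : List ℤ) :
    contD (x :: y :: xs) = x * contD (y :: xs) - contD xs := rfl

lemma ncfZ_cons (x : ℤ) (xs : List ℤ) : ncfZ (x :: xs) = (x : ℚ) - (ncfZ xs)⁻¹ := rfl

lemma coprime_step (x b c : ℤ) (h : IsCoprime b c) : IsCoprime (x * b - c) b := by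
  obtain ⟨u, v, huv⟩ := h
  exact ⟨-v, u + v * x, by linear_combination huv⟩

lemma contD_tail (xs : List ℤ) (h : ∀ y ∈ xs, 2 ≤ y) :
    1 ≤ contD xs ∧ IsCoprime (contD xs) (contD xs.tail) ∧
      (xs ≠ [] → contD xs.tail < contD xs ∧
        ncfZ xs = (contD xs : ℚ) / (contD xs.tail : ℚ) ∧ 1 < ncfZ xs) := by
  induction xs with
  | nil => exact ⟨le_refl 1, isCoprime_one_left, fun h => absurd rfl h⟩
  | cons x t ih =>
      have hx : 2 ≤ x := h x List.mem_cons_self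
      have ht : ∀ y ∈ t, 2 ≤ y := fun y hy => h y (List.mem_cons_of_mem x hy)
      obtain ⟨ih1, ih2, ih3⟩ := ih ht
      cases t with
      | nil =>
          refine ⟨by simpa using hx.trans' one_le_two, by simpa using isCoprime_one_right,
            fun _ => ⟨by simpa using lt_of_lt_of_le one_lt_two hx, ?_, ?_⟩⟩
          · simp [ncfZ_cons, ncfZ]
          · rw [ncfZ_cons]; simp [ncfZ]
            exact_mod_cast lt_of_lt_of_le one_lt_two hx
      | cons y ys =>
          obtain ⟨hlt, hncf, hgt1⟩ := ih3 (List.cons_ne_nil y ys)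
          simp only [List.tail_cons] at hlt hncf ih2
          have htpos : (1 : ℤ) ≤ contD (y :: ys) := ih1
          have hd : contD (y :: ys) < contD (x :: y :: ys) := by
            rw [contD_cons]; nlinarith
          have h1 : 1 ≤ contD (x :: y :: ys) := htpos.trans hd.le
          refine ⟨h1, ?_, fun _ => ⟨hd, ?_, ?_⟩⟩
          · rw [contD_cons]
            exact coprime_step x _ _ ih2
          · have hne : (contD (y :: ys) : ℚ) ≠ 0 := by
              exact_mod_cast htpos.trans_lt' zero_lt_one |>.ne'
            simp only [List.tail_cons]
            rw [ncfZ_cons, hncf, contD_cons]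
            rw [inv_div]
            push_cast
            field_simp
          · have hinv : (ncfZ (y :: ys))⁻¹ < 1 := by
              rw [inv_lt_one_iff₀]; right; exact hgt1
            have : (2 : ℚ) ≤ (x : ℚ) := by exact_mod_cast hx
            rw [ncfZ_cons]; linarith

lemma contD_head (x : ℤ) (hx : 1 ≤ x) (xs : List ℤ) (hxs : ∀ y ∈ xs, 2 ≤ y) :
    1 ≤ contD (x :: xs) ∧ IsCoprime (contD (x :: xs)) (contD xs) ∧
      ncfZ (x :: xs) = (contD (x :: xs) : ℚ) / (contD xs : ℚ) := by
  obtain ⟨h1, h2, h3⟩ := contD_tail xs hxs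
  cases xs with
  | nil =>
      refine ⟨by simpa using hx, by simpa using isCoprime_one_right, ?_⟩
      simp [ncfZ_cons, ncfZ]
  | cons y ys =>
      obtain ⟨hlt, hncf, hgt1⟩ := h3 (List.cons_ne_nil y ys)
      simp only [List.tail_cons] at hlt hncf h2
      refine ⟨?_, ?_, ?_⟩
      · rw [contD_cons]; nlinarith
      · rw [contD_cons]; exact coprime_step x _ _ h2
      · have hne : (contD (y :: ys) : ℚ) ≠ 0 := by
          exact_mod_cast h1.trans_lt' zero_lt_one |>.ne'
        rw [ncfZ_cons, hncf, contD_cons, inv_div]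
        push_cast
        field_simp

/-! ### Auxiliary: determinant of the tridiagonal matrix -/

lemma triMat_shift (l : ℕ) (a : Fin (l + 2) → ℤ) (i j : Fin (l + 1)) :
    triMat (l + 1) a i.succ j.succ = triMat l (fun k => a k.succ) i j := by
  rcases eq_or_ne i j with rfl | h
  · simp [triMat]
  · simp only [triMat, Matrix.of_apply, Fin.succ_inj, if_neg h, Fin.val_succ]
    exact if_congr (by omega) rfl rfl

lemma det_triMat (l : ℕ) (a : Fin (l + 1) → ℤ) :
    (triMat l a).det = (contD (List.ofFn a) : ℚ) := by
  induction l using Nat.strong_induction_on with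
  | _ l ih =>
    match l, ih with
    | 0, _ =>
        rw [Matrix.det_fin_one]
        simp [triMat, List.ofFn_succ]
    | 1, _ =>
        rw [Matrix.det_fin_two]
        simp [triMat, List.ofFn_succ, contD_cons, Fin.ext_iff]
    | (l + 2), ih =>
        have IH1 := ih (l + 1) (by omega) (fun i => a i.succ)
        have IH0 := ih l (by omega) (fun i => a i.succ.succ)
        set M := triMat (l + 2) a with hM
        have hS0 : M.submatrix Fin.succ ((0 : Fin (l + 3)).succAbove)
            = triMat (l + 1) (fun i => a i.succ) := by
          ext i j
          rw [Matrix.submatrix_apply, Fin.succAbove_zero, hM, triMat_shift]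
        have hS1col0 : ∀ i : Fin (l + 1),
            (M.submatrix Fin.succ ((1 : Fin (l + 3)).succAbove)) i.succ 0 = 0 := by
          intro i
          rw [Matrix.submatrix_apply]
          have h0 : (1 : Fin (l + 3)).succAbove 0 = 0 :=
            Fin.succAbove_of_castSucc_lt _ _ (by simp [Fin.lt_def])
          rw [h0, hM]
          simp only [triMat, Matrix.of_apply]
          rw [if_neg (Fin.succ_ne_zero _)]; rw [if_neg]; simp only [Fin.val_succ, Fin.val_zero]; omega
        have hS100 : (M.submatrix Fin.succ ((1 : Fin (l + 3)).succAbove)) 0 0 = -1 := by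
          rw [Matrix.submatrix_apply]
          have h0 : (1 : Fin (l + 3)).succAbove 0 = 0 :=
            Fin.succAbove_of_castSucc_lt _ _ (by simp [Fin.lt_def])
          rw [h0, hM]
          simp only [triMat, Matrix.of_apply]
          rw [if_neg (by simp [Fin.ext_iff]), if_pos (by simp)]
        have hS1sub : (M.submatrix Fin.succ ((1 : Fin (l + 3)).succAbove)).submatrix
            ((0 : Fin (l + 2)).succAbove) Fin.succ = triMat l (fun i => a i.succ.succ) := by
          ext i j
          simp only [Matrix.submatrix_apply, Fin.succAbove_zero]
          have h1 : (1 : Fin (l + 3)).succAbove j.succ = j.succ.succ :=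
            Fin.succAbove_of_le_castSucc _ _ (by simp [Fin.le_def])
          rw [h1, hM, triMat_shift, triMat_shift]
        have hM00 : M 0 0 = (a 0 : ℚ) := by rw [hM]; simp [triMat]
        have hM01 : M 0 1 = -1 := by
          rw [hM]; simp only [triMat, Matrix.of_apply]
          rw [if_neg (by simp [Fin.ext_iff]), if_pos (by simp [Fin.ext_iff])]
        have hM0j : ∀ j : Fin (l + 1), M 0 j.succ.succ = 0 := by
          intro j
          rw [hM]; simp only [triMat, Matrix.of_apply]
          rw [if_neg (Fin.succ_ne_zero _).symm]; rw [if_neg]; simp only [Fin.val_succ, Fin.val_zero]; omega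
        rw [Matrix.det_succ_row_zero, Fin.sum_univ_succ, Fin.sum_univ_succ]
        simp only [Fin.succ_zero_eq_one, Fin.val_succ, Fin.val_zero, Fin.val_one, pow_zero, pow_one]
        rw [hM00, hM01]
        rw [Finset.sum_eq_zero (fun (j : Fin (l+1)) _ => by rw [hM0j]; ring)]
        rw [Matrix.det_succ_column_zero (M.submatrix Fin.succ ((1 : Fin (l + 3)).succAbove))]
        rw [Fin.sum_univ_succ]
        rw [Finset.sum_eq_zero (fun (i : Fin (l+1)) _ => by rw [hS1col0]; ring)]
        rw [hS100, hS0, hS1sub, IH1, IH0]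
        have e1 : List.ofFn (fun i : Fin (l+2) => a i.succ)
            = a (Fin.succ 0) :: List.ofFn (fun i : Fin (l+1) => a i.succ.succ) := by
          simp [List.ofFn_succ]
        have e2 : List.ofFn a = a 0 :: a (Fin.succ 0) :: List.ofFn (fun i : Fin (l+1) => a i.succ.succ) := by
          simp [List.ofFn_succ]
        rw [e2, contD_cons, ← e1]
        push_cast
        simp only [Fin.val_zero, pow_zero]
        ring

/-! ### Auxiliary: extension of a `Fin` tuple to `ℕ` -/

def extQ (l : ℕ) (x : Fin (l + 1) → ℚ) : ℕ → ℚ :=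
  fun n => if h : n < l + 1 then x ⟨n, h⟩ else 0

lemma extQ_coe (l : ℕ) (x : Fin (l + 1) → ℚ) (i : Fin (l + 1)) :
    extQ l x (i : ℕ) = x i := by
  simp [extQ, i.isLt]

/-- the tridiagonal matrix of a negative continued fraction expansion of
`p/q > 0` is positive definite with determinant `p`. -/
theorem triMat_posDef_det (l : ℕ) (a : Fin (l + 1) → ℤ) (ha0 : 1 ≤ a 0)
    (ha : ∀ i : Fin (l + 1), 0 < (i : ℕ) → 2 ≤ a i)
    (p q : ℕ) (hq : 0 < q) (hcop : Nat.Coprime p q)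
    (hpq : (p : ℚ) / q = ncfZ (List.ofFn a)) (hpos : 0 < (p : ℚ) / q) :
    (triMat l a).IsSymm ∧
    (∀ x : Fin (l + 1) → ℚ, x ≠ 0 → 0 < ∑ i, ∑ j, x i * triMat l a i j * x j) ∧
    (triMat l a).det = p := by
  refine ⟨?_, ?_, ?_⟩
  · -- symmetry
    ext i j
    rcases eq_or_ne i j with rfl | h
    · rfl
    · show triMat l a j i = triMat l a i j
      simp only [triMat, Matrix.of_apply, if_neg h, if_neg (Ne.symm h)]
      exact if_congr or_comm rfl rfl
  · -- positive definiteness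
    intro x hx
    set X : ℕ → ℚ := extQ l x with hX
    set A : ℕ → ℚ := extQ l (fun i => (a i : ℚ)) with hA
    have hterm : ∀ i j : Fin (l + 1), x i * triMat l a i j * x j
        = X (i : ℕ) * (if (i : ℕ) = (j : ℕ) then A (i : ℕ)
            else if (i : ℕ)+1 = (j : ℕ) ∨ (j : ℕ)+1 = (i : ℕ) then -1 else 0) * X (j : ℕ) := by
      intro i j
      rw [hX, hA, extQ_coe, extQ_coe, extQ_coe]
      congr 1
      congr 1
      simp only [triMat, Matrix.of_apply]
      exact if_congr Fin.ext_iff rfl rfl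
    have hQ : ∑ i, ∑ j, x i * triMat l a i j * x j
        = ∑ n ∈ Finset.range (l+1), ∑ m ∈ Finset.range (l+1),
            X n * (if n = m then A n else if n+1 = m ∨ m+1 = n then -1 else 0) * X m := by
      rw [← Fin.sum_univ_eq_sum_range (fun n => ∑ m ∈ Finset.range (l+1),
        X n * (if n = m then A n else if n+1 = m ∨ m+1 = n then -1 else 0) * X m) (l+1)]
      refine Finset.sum_congr rfl (fun i _ => ?_)
      rw [← Fin.sum_univ_eq_sum_range (fun m =>
        X (i : ℕ) * (if (i : ℕ) = m then A (i : ℕ)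
          else if (i : ℕ)+1 = m ∨ m+1 = (i : ℕ) then -1 else 0) * X m) (l+1)]
      exact Finset.sum_congr rfl (fun j _ => hterm i j)
    rw [hQ, quadNat]
    -- nonnegativity of all terms
    have hA0 : 1 ≤ A 0 := by
      have h : A 0 = ((a 0 : ℤ) : ℚ) := by rw [hA]; simp [extQ]
      rw [h]; exact_mod_cast ha0
    have hAn : ∀ n, n < l → 2 ≤ A (n+1) := by
      intro n hn
      have hlt : n + 1 < l + 1 := by omega
      have h : A (n+1) = ((a ⟨n+1, hlt⟩ : ℤ) : ℚ) := by rw [hA]; simp [extQ, hlt]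
      rw [h]
      exact_mod_cast ha ⟨n+1, hlt⟩ (by simp)
    have hsumnn : ∀ n ∈ Finset.range l,
        0 ≤ (A (n+1) - 2) * X (n+1)^2 + (X n - X (n+1))^2 := by
      intro n hn
      have h2 := hAn n (Finset.mem_range.mp hn)
      nlinarith [sq_nonneg (X (n+1)), sq_nonneg (X n - X (n+1))]
    have hSnonneg : 0 ≤ ∑ n ∈ Finset.range l,
        ((A (n+1) - 2) * X (n+1)^2 + (X n - X (n+1))^2) :=
      Finset.sum_nonneg hsumnn
    have ht1 : 0 ≤ (A 0 - 1) * X 0 ^ 2 := by nlinarith [sq_nonneg (X 0)]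
    by_contra hle
    push_neg at hle
    have hXl : X l = 0 := by
      have h2 : X l ^ 2 = 0 := le_antisymm (by nlinarith [sq_nonneg (X l)]) (sq_nonneg _)
      exact (pow_eq_zero_iff two_ne_zero).mp h2
    have hSzero : ∑ n ∈ Finset.range l, ((A (n+1) - 2) * X (n+1)^2 + (X n - X (n+1))^2) = 0 := by
      nlinarith [sq_nonneg (X l)]
    have heach := (Finset.sum_eq_zero_iff_of_nonneg hsumnn).mp hSzero
    have hstep : ∀ n, n < l → X n = X (n+1) := by
      intro n hn
      have h := heach n (Finset.mem_range.mpr hn)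
      have h2 := hAn n hn
      have h3 : (X n - X (n+1))^2 = 0 := by
        nlinarith [sq_nonneg (X (n+1)), sq_nonneg (X n - X (n+1))]
      have h4 := (pow_eq_zero_iff two_ne_zero).mp h3
      linarith [sub_eq_zero.mp h4]
    have hzero : ∀ m, X (l - m) = 0 := by
      intro m
      induction m with
      | zero => simpa using hXl
      | succ m ihm =>
          by_cases h : m < l
          · have hs := hstep (l - (m+1)) (by omega)
            rw [show l - (m+1) + 1 = l - m from by omega] at hs
            rw [hs]; exact ihm
          · rw [show l - (m+1) = l - m from by omega]; exact ihm
    apply hx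
    funext i
    have hi := i.isLt
    have h5 := hzero (l - (i : ℕ))
    rw [show l - (l - (i:ℕ)) = (i:ℕ) from by omega] at h5
    rw [hX, extQ_coe] at h5
    simpa using h5
  · -- determinant
    have e : List.ofFn a = a 0 :: List.ofFn (fun i : Fin l => a i.succ) := by
      simp [List.ofFn_succ]
    have hT : ∀ y ∈ List.ofFn (fun i : Fin l => a i.succ), 2 ≤ y := by
      intro y hy
      obtain ⟨i, rfl⟩ := List.mem_ofFn.mp hy
      exact ha i.succ (by simp)
    obtain ⟨hD1, hDcop, hDfrac⟩ := contD_head (a 0) ha0 _ hT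
    obtain ⟨hDT1, -, -⟩ := contD_tail _ hT
    have hpne : p ≠ 0 := by rintro rfl; simp at hpos
    have hqQ : ((q:ℚ)) ≠ 0 := Nat.cast_ne_zero.mpr hq.ne'
    have hDTQ : ((contD (List.ofFn (fun i : Fin l => a i.succ)) : ℚ)) ≠ 0 :=
      Int.cast_ne_zero.mpr (by omega)
    rw [e, hDfrac, div_eq_div_iff hqQ hDTQ] at hpq
    have hZ : (p : ℤ) * contD (List.ofFn (fun i : Fin l => a i.succ))
        = contD (a 0 :: List.ofFn (fun i : Fin l => a i.succ)) * q := by exact_mod_cast hpq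
    have hcopZ : IsCoprime ((q:ℤ)) ((p:ℤ)) := Nat.isCoprime_iff_coprime.mpr hcop.symm
    have hq_dvd : (q:ℤ) ∣ contD (List.ofFn (fun i : Fin l => a i.succ)) :=
      hcopZ.dvd_of_dvd_mul_left (hZ ▸ dvd_mul_left (q:ℤ) _)
    have hDT_dvd : contD (List.ofFn (fun i : Fin l => a i.succ)) ∣ (q:ℤ) :=
      hDcop.symm.dvd_of_dvd_mul_left (hZ ▸ dvd_mul_left _ (p:ℤ))
    have hDTq : contD (List.ofFn (fun i : Fin l => a i.succ)) = (q:ℤ) :=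
      Int.dvd_antisymm (by omega) (by positivity) hDT_dvd hq_dvd
    have hpD : (p:ℤ) = contD (a 0 :: List.ofFn (fun i : Fin l => a i.succ)) := by
      rw [hDTq] at hZ
      exact mul_right_cancel₀ (by exact_mod_cast hq.ne') hZ
    rw [det_triMat, e, ← hpD]
    push_cast
    rfl
end

section
/- Let q/r = [a₁, …, a_l]⁻ with aᵢ ≥ 2 for 1 ≤ i < l and a_l ≥ 2, where 0 < r < q. Define the complementary sequence of norms ‖μ₀‖, …, ‖μ_m‖ as follows: writing α_k = Σ_{i=1}^{k}(aᵢ − 1) and M = {0, …, α_l}∖{α₀, …, α_l} = {β₁ < ⋯ < β_m}, set β_{m+1} = α_l and let ‖μ₀‖ = β₁ + 1 and for 1 ≤ i ≤ m, ‖μᵢ‖ = β_{i+1} − βᵢ + 1. Then [‖μ₀‖, …, ‖μ_m‖]⁻ = q/(q−r). -/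
/-- Negative continued fraction `[a₀, a₁, …]⁻ = a₀ - 1/(a₁ - 1/(⋯))`. -/
def ncfN : List ℕ → ℚ
  | [] => 0
  | x :: xs => (x : ℚ) - (ncfN xs)⁻¹

/-- `α_k = Σ_{i<k} (aᵢ - 1)`. -/
def alphaSeq (a : ℕ → ℕ) (k : ℕ) : ℕ := ∑ i ∈ Finset.range k, (a i - 1)

/-- The sorted complementary set `{0,…,α_l} ∖ {α₀,…,α_l} = {β₁ < ⋯ < β_m}`, with the
extra final entry `β_{m+1} = α_l` appended. -/
def betaList (a : ℕ → ℕ) (l : ℕ) : List ℕ :=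
  ((Finset.range (alphaSeq a l + 1) \ (Finset.range (l + 1)).image (alphaSeq a)).sort (· ≤ ·))
    ++ [alphaSeq a l]

/-- The complementary sequence of norms `‖μ₀‖ = β₁ + 1`, `‖μᵢ‖ = β_{i+1} - βᵢ + 1`. -/
def normsList (a : ℕ → ℕ) (l : ℕ) : List ℕ :=
  ((betaList a l).headI + 1) ::
    List.zipWith (fun x y => y - x + 1) (betaList a l) (betaList a l).tail

/- auxiliary -/
def blockL (a : ℕ → ℕ) (k : ℕ) : List ℕ := (List.range (a k - 2)).map (· + (alphaSeq a k + 1))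

def gapsList (a : ℕ → ℕ) (l : ℕ) : List ℕ := (List.range l).flatMap (blockL a)

lemma alphaSeq_zero (a : ℕ → ℕ) : alphaSeq a 0 = 0 := by simp [alphaSeq]

lemma alphaSeq_succ (a : ℕ → ℕ) (k : ℕ) : alphaSeq a (k + 1) = alphaSeq a k + (a k - 1) := by
  simp [alphaSeq, Finset.sum_range_succ]

lemma alphaSeq_mono (a : ℕ → ℕ) {k j : ℕ} (h : k ≤ j) : alphaSeq a k ≤ alphaSeq a j := by
  unfold alphaSeq
  exact Finset.sum_le_sum_of_subset (Finset.range_subset_range.2 h)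

lemma mem_blockL {a : ℕ → ℕ} {k x : ℕ} :
    x ∈ blockL a k ↔ alphaSeq a k < x ∧ x < alphaSeq a (k + 1) := by
  simp only [blockL, List.mem_map, List.mem_range, alphaSeq_succ]
  constructor
  · rintro ⟨i, hi, rfl⟩; omega
  · intro h; exact ⟨x - (alphaSeq a k + 1), by omega, by omega⟩

lemma gapsList_succ (a : ℕ → ℕ) (l : ℕ) :
    gapsList a (l + 1) = gapsList a l ++ blockL a l := by
  rw [gapsList, List.range_succ, List.flatMap_append, List.flatMap_singleton]; rfl

lemma mem_gapsList {a : ℕ → ℕ} {l x : ℕ} :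
    x ∈ gapsList a l ↔ x ≤ alphaSeq a l ∧ ∀ k ≤ l, x ≠ alphaSeq a k := by
  induction l with
  | zero =>
    constructor
    · intro h; simp [gapsList] at h
    · rintro ⟨h1, h2⟩
      have := h2 0 le_rfl
      rw [alphaSeq_zero] at this h1
      omega
  | succ l ih =>
    rw [gapsList_succ, List.mem_append, ih, mem_blockL]
    have hm := alphaSeq_mono a (show l ≤ l + 1 by omega)
    constructor
    · rintro (⟨h1, h2⟩ | ⟨h1, h2⟩)
      · refine ⟨by omega, fun k hk hx => ?_⟩
        rcases le_or_gt k l with hkl | hkl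
        · exact h2 k hkl hx
        · have hk1 : k = l + 1 := by omega
          subst hk1
          have := h2 l le_rfl
          omega
      · refine ⟨by omega, fun k hk hx => ?_⟩
        rcases le_or_gt k l with hkl | hkl
        · have := alphaSeq_mono a hkl; omega
        · have hk1 : k = l + 1 := by omega
          subst hk1; omega
    · rintro ⟨h1, h2⟩
      rcases le_or_gt x (alphaSeq a l) with hx | hx
      · exact Or.inl ⟨hx, fun k hk => h2 k (by omega)⟩
      · exact Or.inr ⟨hx, lt_of_le_of_ne h1 (h2 (l+1) le_rfl)⟩

lemma sorted_blockL (a : ℕ → ℕ) (k : ℕ) : List.Pairwise (· < ·) (blockL a k) := by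
  exact List.Pairwise.map _ (fun x y h => by omega) (List.pairwise_lt_range)

lemma sorted_gapsList (a : ℕ → ℕ) (l : ℕ) : List.Pairwise (· < ·) (gapsList a l) := by
  induction l with
  | zero => simp [gapsList]
  | succ l ih =>
    rw [gapsList_succ]
    refine List.pairwise_append.2 ⟨ih, sorted_blockL a l, fun x hx y hy => ?_⟩
    have h1 := (mem_gapsList.1 hx).1
    have h2 := (mem_gapsList.1 hx).2 l le_rfl
    have h3 := (mem_blockL.1 hy).1
    omega

lemma betaList_eq (a : ℕ → ℕ) (l : ℕ) :
    betaList a l = gapsList a l ++ [alphaSeq a l] := by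
  unfold betaList
  congr 1
  refine List.Perm.eq_of_pairwise' (Finset.pairwise_sort _ _) ((sorted_gapsList a l).imp le_of_lt)
    (List.perm_of_nodup_nodup_toFinset_eq (Finset.sort_nodup _ _)
      ((sorted_gapsList a l).nodup) ?_)
  rw [Finset.sort_toFinset]
  ext x
  simp only [List.mem_toFinset, mem_gapsList, Finset.mem_sdiff, Finset.mem_range,
    Finset.mem_image, not_exists]
  push_neg
  constructor
  · rintro ⟨h1, h2⟩
    exact ⟨by omega, fun k hk => (h2 k (by omega)).symm⟩
  · rintro ⟨h1, h2⟩
    exact ⟨by omega, fun k hk => (h2 k (by omega)).symm⟩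
def diffsL (b : List ℕ) : List ℕ := List.zipWith (fun x y => y - x + 1) b b.tail

def nlist (b : List ℕ) : List ℕ := (b.headI + 1) :: diffsL b

lemma normsList_eq_nlist (a : ℕ → ℕ) (l : ℕ) : normsList a l = nlist (betaList a l) := rfl

lemma diffsL_map_add (c : ℕ) (L : List ℕ) :
    diffsL (L.map (· + c)) = diffsL L := by
  induction L with
  | nil => rfl
  | cons x t ih =>
    cases t with
    | nil => rfl
    | cons y s =>
      simp only [diffsL, List.map_cons, List.tail_cons, List.zipWith_cons_cons] at *
      rw [ih]
      congr 1
      all_goals omega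

lemma nlist_cons_one (M : List ℕ) (hM : M ≠ []) :
    nlist (1 :: M.map (· + 1)) = 2 :: nlist M := by
  cases M with
  | nil => exact absurd rfl hM
  | cons m t =>
    simp only [nlist, List.headI, List.map_cons, diffsL, List.tail_cons,
      List.zipWith_cons_cons]
    have := diffsL_map_add 1 (m :: t)
    simp only [diffsL, List.map_cons, List.tail_cons] at this
    rw [this]
    try congr 2
    all_goals omega

lemma nlist_shift (k : ℕ) (L : List ℕ) (hL : L ≠ []) :
    nlist ((List.range k).map (· + 1) ++ L.map (· + (k + 1))) =
      List.replicate k 2 ++ (L.headI + 2) :: diffsL L := by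
  induction k with
  | zero =>
    cases L with
    | nil => exact absurd rfl hL
    | cons m t =>
      simp only [List.range_zero, List.map_nil, List.nil_append, List.map_cons,
        List.replicate_zero, nlist, List.headI]
      have := diffsL_map_add 1 (m :: t)
      simp only [List.map_cons] at this
      rw [this]
  | succ k ih =>
    have h1 : (List.range (k+1)).map (· + 1) = 1 :: ((List.range k).map (· + 1)).map (· + 1) := by
      rw [List.range_succ_eq_map]
      simp [List.map_map, Function.comp]
    have h2 : L.map (· + (k + 2)) = (L.map (· + (k + 1))).map (· + 1) := by
      rw [List.map_map]
      have hfun : ((· + 1) ∘ (· + (k + 1)) : ℕ → ℕ) = (· + (k + 2)) := by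
        funext x
        show x + (k + 1) + 1 = x + (k + 2)
        omega
      rw [hfun]
    have hM : (List.range k).map (· + 1) ++ L.map (· + (k + 1)) ≠ [] := by
      simp [hL]
    calc nlist ((List.range (k+1)).map (· + 1) ++ L.map (· + (k + 1 + 1)))
        = nlist (1 :: ((List.range k).map (· + 1) ++ L.map (· + (k + 1))).map (· + 1)) := by
          rw [h1, List.map_append, h2]
          rfl
      _ = 2 :: nlist ((List.range k).map (· + 1) ++ L.map (· + (k + 1))) :=
          nlist_cons_one _ hM
      _ = 2 :: (List.replicate k 2 ++ (L.headI + 2) :: diffsL L) := by rw [ih]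
      _ = List.replicate (k+1) 2 ++ (L.headI + 2) :: diffsL L := by
          simp [List.replicate_succ]
lemma ncfN_cons (x : ℕ) (t : List ℕ) : ncfN (x :: t) = (x : ℚ) - (ncfN t)⁻¹ := rfl

lemma ncfN_gt_one : ∀ (L : List ℕ), L ≠ [] → (∀ x ∈ L, 2 ≤ x) → 1 < ncfN L := by
  intro L
  induction L with
  | nil => intro h; exact absurd rfl h
  | cons x t ih =>
    intro _ h2
    have hx : 2 ≤ x := h2 x (List.mem_cons_self)
    have hx2 : (2:ℚ) ≤ x := by exact_mod_cast hx
    cases t with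
    | nil =>
      rw [ncfN_cons]
      norm_num [ncfN]
      linarith
    | cons y s =>
      have ht := ih (by simp) (fun z hz => h2 z (List.mem_cons_of_mem x hz))
      rw [ncfN_cons]
      have h0 : 0 < (ncfN (y::s))⁻¹ := inv_pos.2 (lt_trans one_pos ht)
      have h1 : (ncfN (y::s))⁻¹ < 1 := by
        rw [inv_lt_one_iff₀]
        right; exact ht
      linarith

lemma ncfN_head_succ (h : ℕ) (s : List ℕ) : ncfN ((h+1) :: s) = ncfN (h :: s) + 1 := by
  rw [ncfN_cons, ncfN_cons]
  push_cast
  ring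

lemma ncfN_replicate (k : ℕ) (t : List ℕ) (hv : 1 < ncfN t) :
    ncfN (List.replicate k 2 ++ t) =
      (((k:ℚ)+1) * ncfN t - k) / ((k:ℚ) * ncfN t - ((k:ℚ) - 1)) := by
  induction k with
  | zero => simp
  | succ k ih =>
    have hk0 : (0:ℚ) ≤ (k:ℚ) := Nat.cast_nonneg k
    have hd : 0 < (k:ℚ) * ncfN t - ((k:ℚ) - 1) := by nlinarith
    have hn : 0 < ((k:ℚ)+1) * ncfN t - k := by nlinarith
    rw [List.replicate_succ, List.cons_append, ncfN_cons, ih]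
    have hd' : (k:ℚ) * ncfN t - ((k:ℚ) - 1) ≠ 0 := ne_of_gt hd
    have hn' : ((k:ℚ)+1) * ncfN t - (k:ℚ) ≠ 0 := ne_of_gt hn
    have hdd : ((k:ℚ)+1) * ncfN t - ((k:ℚ)+1-1) ≠ 0 := by push_cast; nlinarith
    push_cast
    rw [inv_div, eq_div_iff hdd]
    rw [sub_div' hn', div_mul_eq_mul_div, div_eq_iff hn']
    ring
lemma alphaSeq_shift (a : ℕ → ℕ) (l : ℕ) :
    alphaSeq a (l + 1) = alphaSeq (fun i => a (i+1)) l + (a 0 - 1) := by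
  unfold alphaSeq
  rw [Finset.sum_range_succ']

lemma blockL_shift (a : ℕ → ℕ) (k : ℕ) :
    blockL a (k + 1) = (blockL (fun i => a (i+1)) k).map (· + (a 0 - 1)) := by
  unfold blockL
  rw [List.map_map]
  congr 1
  funext x
  simp only [Function.comp_apply]
  rw [alphaSeq_shift]
  omega

lemma gapsList_shift (a : ℕ → ℕ) (l : ℕ) :
    gapsList a (l + 1) =
      (List.range (a 0 - 2)).map (· + 1) ++ (gapsList (fun i => a (i+1)) l).map (· + (a 0 - 1)) := by
  induction l with
  | zero =>
    rw [gapsList_succ]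
    have h0 : gapsList a 0 = [] := rfl
    have h0' : gapsList (fun i => a (i+1)) 0 = [] := rfl
    rw [h0, h0', List.nil_append, List.map_nil, List.append_nil]
    unfold blockL
    rw [alphaSeq_zero]
  | succ l ih =>
    rw [gapsList_succ, ih, gapsList_succ, List.map_append, List.append_assoc, blockL_shift]

lemma betaList_shift (a : ℕ → ℕ) (l : ℕ) :
    betaList a (l + 1) =
      (List.range (a 0 - 2)).map (· + 1) ++ (betaList (fun i => a (i+1)) l).map (· + (a 0 - 1)) := by
  rw [betaList_eq, betaList_eq, gapsList_shift, List.map_append, List.append_assoc]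
  congr 2
  rw [alphaSeq_shift]
  simp

lemma betaList_ne_nil (a : ℕ → ℕ) (l : ℕ) : betaList a l ≠ [] := by
  rw [betaList_eq]
  simp
lemma main_aux : ∀ l, 1 ≤ l → ∀ (a : ℕ → ℕ) (q r : ℕ), (∀ i < l, 2 ≤ a i) → 0 < r → r < q →
    Nat.Coprime q r → (q:ℚ)/r = ncfN ((List.range l).map a) →
    ncfN (normsList a l) = (q : ℚ) / ((q - r : ℕ) : ℚ) := by
  intro l hl
  induction l, hl using Nat.le_induction with
  | base =>
    intro a q r ha hr hrq hcop hcf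
    have ha0 : 2 ≤ a 0 := ha 0 one_pos
    have hrQ : (r:ℚ) ≠ 0 := Nat.cast_ne_zero.2 (by omega)
    rw [show (List.range 1).map a = [a 0] from rfl, ncfN_cons,
      show ncfN [] = 0 from rfl, inv_zero, sub_zero, div_eq_iff hrQ] at hcf
    have hq : q = a 0 * r := by exact_mod_cast hcf
    have hr1 : r = 1 := Nat.Coprime.eq_one_of_dvd hcop.symm ⟨a 0, by rw [hq]; ring⟩
    subst hr1
    have hq1 : q = a 0 := by omega
    subst hq1
    have hbeta : betaList a 1 = (List.range (a 0 - 2)).map (· + 1) ++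
        [0].map (· + ((a 0 - 2) + 1)) := by
      rw [betaList_eq]
      have hg : gapsList a 1 = (List.range (a 0 - 2)).map (· + 1) := by
        rw [show (1:ℕ) = 0 + 1 from rfl, gapsList_succ]
        have h0 : gapsList a 0 = [] := rfl
        rw [h0, List.nil_append]
        unfold blockL
        rw [alphaSeq_zero]
      rw [hg]
      congr 1
      simp only [List.map_cons, List.map_nil, List.cons.injEq, and_true]
      rw [alphaSeq_succ, alphaSeq_zero]
      omega
    have hns : normsList a 1 = List.replicate (a 0 - 1) 2 := by
      rw [normsList_eq_nlist, hbeta, nlist_shift _ _ (by simp)]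
      rw [show diffsL [0] = [] from rfl, show ([0]:List ℕ).headI + 2 = 2 from rfl,
        ← List.replicate_succ']
      congr 1
      omega
    rw [hns]
    obtain ⟨m, hm⟩ : ∃ m, a 0 - 1 = m + 1 := ⟨a 0 - 2, by omega⟩
    have h2v : ncfN [2] = 2 := by
      rw [ncfN_cons, show ncfN [] = 0 from rfl]
      norm_num
    rw [hm, List.replicate_succ', ncfN_replicate m [2] (by rw [h2v]; norm_num), h2v]
    have hcm : (m:ℚ) = (a 0:ℚ) - 2 := by
      have hm2 : m = a 0 - 2 := by omega
      rw [hm2, Nat.cast_sub ha0]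
      norm_num
    have hA : (2:ℚ) ≤ (a 0:ℚ) := by exact_mod_cast ha0
    rw [show ((m+1:ℕ):ℚ) = (m:ℚ)+1 by push_cast; ring, hcm]
    rw [div_eq_div_iff (by nlinarith) (by nlinarith)]
    ring
  | succ l hl ih =>
    intro a q r ha hr hrq hcop hcf
    set a' : ℕ → ℕ := fun i => a (i+1) with ha'def
    have ha' : ∀ i < l, 2 ≤ a' i := fun i hi => ha (i+1) (by omega)
    have ha0 : 2 ≤ a 0 := ha 0 (by omega)
    set v := ncfN ((List.range l).map a') with hvdef
    have hvgt : 1 < v := by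
      apply ncfN_gt_one
      · simp
        omega
      · intro x hx
        simp only [List.mem_map, List.mem_range] at hx
        obtain ⟨i, hi, rfl⟩ := hx
        exact ha' i hi
    set q' := v.num.natAbs with hq'def
    set r' := v.den with hr'def
    have hnum_nonneg : 0 ≤ v.num := Rat.num_nonneg.2 (le_of_lt (lt_trans one_pos hvgt))
    have hq'cast : ((q' : ℕ) : ℚ) = ((v.num : ℤ) : ℚ) := by
      rw [hq'def, Nat.cast_natAbs]
      exact_mod_cast abs_of_nonneg hnum_nonneg
    have hr'pos : 0 < r' := v.den_pos
    have hv_eq : ((q':ℕ):ℚ) / ((r':ℕ):ℚ) = v := by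
      rw [hq'cast]
      exact_mod_cast Rat.num_div_den v
    have hr'q' : r' < q' := by
      by_contra h
      push_neg at h
      have h1 : ((q':ℕ):ℚ) ≤ ((r':ℕ):ℚ) := by exact_mod_cast h
      have h2 : (0:ℚ) < ((r':ℕ):ℚ) := by exact_mod_cast hr'pos
      have : v ≤ 1 := by
        rw [← hv_eq, div_le_one h2]
        exact h1
      linarith
    have hcop' : Nat.Coprime q' r' := v.reduced
    have hy := ih a' q' r' ha' hr'pos hr'q' hcop' (by rw [hv_eq])
    have hlist : (List.range (l+1)).map a = a 0 :: (List.range l).map a' := by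
      rw [List.range_succ_eq_map, List.map_cons, List.map_map]
      rfl
    rw [hlist, ncfN_cons, ← hvdef] at hcf
    have hQ : ((q':ℕ):ℚ) ≠ 0 := Nat.cast_ne_zero.2 (by omega)
    have hR : ((r':ℕ):ℚ) ≠ 0 := Nat.cast_ne_zero.2 (by omega)
    have hrC : ((r:ℕ):ℚ) ≠ 0 := Nat.cast_ne_zero.2 (by omega)
    have hvinv : v⁻¹ = ((r':ℕ):ℚ) / ((q':ℕ):ℚ) := by rw [← hv_eq, inv_div]
    set N := a 0 * q' - r' with hNdef
    have h2q' : 2 * q' ≤ a 0 * q' := Nat.mul_le_mul_right q' ha0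
    have hNbound : r' < a 0 * q' := by omega
    have hNcast : ((N:ℕ):ℚ) = (a 0:ℚ) * ((q':ℕ):ℚ) - ((r':ℕ):ℚ) := by
      rw [hNdef, Nat.cast_sub (le_of_lt hNbound)]
      push_cast
      ring
    have hstep : (q:ℚ)/(r:ℚ) = ((a 0:ℚ) * ((q':ℕ):ℚ) - ((r':ℕ):ℚ))/((q':ℕ):ℚ) := by
      rw [hcf, hvinv]
      field_simp
    rw [div_eq_div_iff hrC hQ] at hstep
    have hqq : q * q' = N * r := by
      have : (q:ℚ) * ((q':ℕ):ℚ) = ((N:ℕ):ℚ) * (r:ℚ) := by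
        rw [hNcast]
        linarith [hstep]
      exact_mod_cast this
    have hNq' : Nat.Coprime N q' := by
      have h1 : N.gcd q' ∣ N := Nat.gcd_dvd_left _ _
      have h2 : N.gcd q' ∣ q' := Nat.gcd_dvd_right _ _
      have h3 : N.gcd q' ∣ r' := by
        have h4 : N.gcd q' ∣ a 0 * q' := Dvd.dvd.mul_left h2 _
        have h5 := Nat.dvd_sub h4 h1
        rwa [show a 0 * q' - N = r' by omega] at h5
      have h6 : N.gcd q' ∣ Nat.gcd q' r' := Nat.dvd_gcd h2 h3
      rw [hcop'] at h6
      exact Nat.dvd_one.mp h6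
    have hqN : q = N := by
      have hd1 : q ∣ N := Nat.Coprime.dvd_of_dvd_mul_right hcop ⟨q', hqq.symm⟩
      have hd2 : N ∣ q := Nat.Coprime.dvd_of_dvd_mul_right hNq' ⟨r, hqq⟩
      exact Nat.dvd_antisymm hd1 hd2
    have hrq'' : r = q' := by
      have hqpos : 0 < q := by omega
      have : q * q' = q * r := by rw [hqq, hqN]
      exact (Nat.eq_of_mul_eq_mul_left hqpos this).symm
    -- structural computation
    have hbeta := betaList_shift a l
    rw [show a 0 - 1 = (a 0 - 2) + 1 by omega] at hbeta
    have hfull : normsList a (l+1) = List.replicate (a 0 - 2) 2 ++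
        (((betaList a' l).headI + 2) :: diffsL (betaList a' l)) := by
      rw [normsList_eq_nlist, hbeta]
      exact nlist_shift _ _ (betaList_ne_nil a' l)
    have htval : ncfN (((betaList a' l).headI + 2) :: diffsL (betaList a' l)) =
        ncfN (normsList a' l) + 1 := by
      rw [show (betaList a' l).headI + 2 = ((betaList a' l).headI + 1) + 1 from rfl,
        ncfN_head_succ]
      rfl
    have hscast : ((q' - r' : ℕ):ℚ) = ((q':ℕ):ℚ) - ((r':ℕ):ℚ) := Nat.cast_sub (by omega)
    have hQRpos : (0:ℚ) < ((q':ℕ):ℚ) - ((r':ℕ):ℚ) := by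
      have : ((r':ℕ):ℚ) < ((q':ℕ):ℚ) := by exact_mod_cast hr'q'
      linarith
    have hRpos : (0:ℚ) < ((r':ℕ):ℚ) := by exact_mod_cast hr'pos
    have hypos : (1:ℚ) < ncfN (normsList a' l) := by
      rw [hy, hscast, one_lt_div hQRpos]
      linarith
    have htgt : 1 < ncfN (((betaList a' l).headI + 2) :: diffsL (betaList a' l)) := by
      rw [htval]
      linarith
    rw [hfull, ncfN_replicate _ _ htgt, htval, hy, hscast]
    have hk : ((a 0 - 2:ℕ):ℚ) = (a 0:ℚ) - 2 := by
      rw [Nat.cast_sub ha0]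
      norm_num
    subst hqN
    subst hrq''
    have hNsub : ((N - q' : ℕ):ℚ) = ((N:ℕ):ℚ) - ((q':ℕ):ℚ) := Nat.cast_sub (by omega)
    rw [hk, hNsub, hNcast]
    have hA : (2:ℚ) ≤ (a 0:ℚ) := by exact_mod_cast ha0
    set Q := ((q':ℕ):ℚ)
    set R := ((r':ℕ):ℚ)
    set A := ((a 0:ℕ):ℚ)
    have hden1 : ((A - 2) * (Q / (Q - R) + 1) - (A - 2 - 1)) ≠ 0 := by
      have hq0 : 0 < Q / (Q - R) := div_pos (by linarith) hQRpos
      nlinarith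
    have hden2 : (A * Q - R - Q) ≠ 0 := by
      nlinarith
    rw [div_eq_div_iff hden1 hden2]
    field_simp
    ring


/-- if `q/r = [a₁,…,a_l]⁻` with all `aᵢ ≥ 2`, then the complementary
sequence of norms satisfies `[‖μ₀‖,…,‖μ_m‖]⁻ = q/(q-r)`. -/
theorem norms_continued_fraction (l q r : ℕ) (hl : 1 ≤ l) (a : ℕ → ℕ)
    (ha : ∀ i < l, 2 ≤ a i) (hr : 0 < r) (hrq : r < q) (hcop : Nat.Coprime q r)
    (hcf : (q : ℚ) / r = ncfN ((List.range l).map a)) :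
    ncfN (normsList a l) = (q : ℚ) / ((q - r : ℕ) : ℚ) := by
  exact main_aux l hl a q r ha hr hrq hcop hcf
end

section
/- Let L = ⟨w₀⟩^⊥ ⊆ Z^t be an integer changemaker lattice with changemaker coefficients 1 = σ₁ ≤ ⋯ ≤ σ_t and stable coefficients σ_m ≤ ⋯ ≤ σ_t (those equal to at least 2, with m minimal such that σ_m ≥ 2). If L is decomposable as an orthogonal direct sum of two nonzero sublattices, then σ_m = m − 1. -/
/-- The orthogonal complement of a vector `w` in `ℤ^t`, as an additive subgroup. -/
def perpLat {t : ℕ} (w : Fin t → ℤ) : AddSubgroup (Fin t → ℤ) where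
  carrier := {x | ∑ i, x i * w i = 0}
  zero_mem' := by simp
  add_mem' := by
    intro a b ha hb
    simp only [Set.mem_setOf_eq, Pi.add_apply, add_mul, Finset.sum_add_distrib] at *
    omega
  neg_mem' := by
    intro a ha
    simp only [Set.mem_setOf_eq, Pi.neg_apply, neg_mul, Finset.sum_neg_distrib] at *
    omega

lemma mem_perpLat {t : ℕ} (w : Fin t → ℤ) (x : Fin t → ℤ) :
    x ∈ perpLat w ↔ ∑ i, x i * w i = 0 := Iff.rfl

namespace CMaux

variable {t : ℕ}

lemma sum_split (K : Fin t) {M : Type*} [AddCommMonoid M] (f : Fin t → M) :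
    ∑ i, f i = (∑ i ∈ Finset.univ.filter (fun i => i < K), f i)
      + (f K + ∑ i ∈ Finset.univ.filter (fun i => K < i), f i) := by
  rw [← Finset.sum_filter_add_sum_filter_not Finset.univ (fun i => i < K) f]
  congr 1
  have h : Finset.univ.filter (fun i => ¬ i < K)
      = insert K (Finset.univ.filter (fun i => K < i)) := by
    ext j
    simp only [Finset.mem_filter, Finset.mem_univ, true_and, Finset.mem_insert, not_lt]
    constructor
    · intro h
      rcases eq_or_lt_of_le h with h' | h'
      · exact Or.inl h'.symm
      · exact Or.inr h'
    · rintro (rfl | h)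
      · exact le_refl _
      · exact le_of_lt h
  rw [h, Finset.sum_insert (by simp)]

lemma card_below (K : Fin t) :
    (Finset.univ.filter (fun i => i < K)).card = (K : ℕ) := by
  have h : Finset.univ.filter (fun i => i < K) = Finset.Iio K := by
    ext j; simp
  rw [h, Fin.card_Iio]

lemma sq_sum_extract (A : Finset (Fin t)) (f : Fin t → ℤ)
    (h : ∑ i ∈ A, f i * f i = 1) :
    ∃ j ∈ A, (f j = 1 ∨ f j = -1) ∧ ∀ i ∈ A, i ≠ j → f i = 0 := by
  have hex : ∃ j ∈ A, f j ≠ 0 := by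
    by_contra hc
    push_neg at hc
    rw [Finset.sum_eq_zero (fun i hi => by rw [hc i hi]; ring)] at h
    omega
  obtain ⟨j, hjA, hj0⟩ := hex
  have h1 : 1 ≤ f j * f j := by
    rcases lt_or_gt_of_ne hj0 with h' | h' <;> nlinarith
  have hsplit : ∑ i ∈ A.erase j, f i * f i + f j * f j = ∑ i ∈ A, f i * f i :=
    Finset.sum_erase_add A _ hjA
  have hrest0 : ∑ i ∈ A.erase j, f i * f i = 0 := by
    have hge : 0 ≤ ∑ i ∈ A.erase j, f i * f i :=
      Finset.sum_nonneg fun i _ => mul_self_nonneg _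
    omega
  have hz : ∀ i ∈ A.erase j, f i = 0 := by
    intro i hi
    have := (Finset.sum_eq_zero_iff_of_nonneg
      (fun i _ => mul_self_nonneg (f i))).mp hrest0 i hi
    exact mul_self_eq_zero.mp this
  refine ⟨j, hjA, ?_, ?_⟩
  · have : f j * f j = 1 := by omega
    exact mul_self_eq_one_iff.mp this
  · intro i hi hij
    exact hz i (Finset.mem_erase.mpr ⟨hij, hi⟩)

def chmVec (σ : Fin t → ℕ) (i0 K : Fin t) : Fin t → ℤ :=
  fun i => if i = K then 1 else if i = i0 then -(σ K : ℤ) else 0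

lemma chmVec_apply_K (σ : Fin t → ℕ) (i0 K : Fin t) : chmVec σ i0 K K = 1 := by
  simp [chmVec]

lemma chmVec_apply_i0 (σ : Fin t → ℕ) (i0 K : Fin t) (h : i0 ≠ K) :
    chmVec σ i0 K i0 = -(σ K : ℤ) := by
  simp [chmVec, h]

lemma chmVec_apply_other (σ : Fin t → ℕ) (i0 K : Fin t) {i : Fin t}
    (h1 : i ≠ K) (h2 : i ≠ i0) : chmVec σ i0 K i = 0 := by
  simp [chmVec, h1, h2]

lemma chmVec_pair (σ : Fin t → ℕ) (i0 K : Fin t) (h : i0 ≠ K) (y : Fin t → ℤ) :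
    ∑ i, chmVec σ i0 K i * y i = y K - (σ K : ℤ) * y i0 := by
  have hrw : ∀ i : Fin t, chmVec σ i0 K i * y i
      = (if i = K then y K else 0) + (if i = i0 then -(σ K : ℤ) * y i0 else 0) := by
    intro i
    simp only [chmVec]
    by_cases h1 : i = K
    · subst h1
      rw [if_pos rfl, if_pos rfl, if_neg (fun hh => h hh.symm)]
      ring
    · rw [if_neg h1, if_neg h1]
      by_cases h2 : i = i0
      · subst h2
        rw [if_pos rfl, if_pos rfl]
        ring
      · rw [if_neg h2, if_neg h2]
        ring
  rw [Finset.sum_congr rfl (fun i _ => hrw i), Finset.sum_add_distrib,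
    Finset.sum_ite_eq' Finset.univ K (fun _ => y K),
    Finset.sum_ite_eq' Finset.univ i0 (fun _ => -(σ K : ℤ) * y i0)]
  simp only [Finset.mem_univ, if_true]
  ring


lemma int_sq_sub_nonneg (x : ℤ) : 0 ≤ x * x - x := by
  rcases le_or_gt x 0 with h | h
  · nlinarith [mul_self_nonneg x]
  · nlinarith

lemma int_le_sq {x : ℤ} (h : 1 ≤ x) : x ≤ x * x := by nlinarith

lemma int_two_le {x : ℤ} (h1 : 1 ≤ x) (h2 : 0 < x * x - x) : 2 ≤ x := by nlinarith

lemma int_two_le_sq {x : ℤ} (h : 2 ≤ x) : 2 ≤ x * x - x := by nlinarith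

lemma int_eq_one {x : ℤ} (h1 : 1 ≤ x) (h0 : x * x - x = 0) : x = 1 := by nlinarith

lemma int_one_le_mul_self {x : ℤ} (h : 1 ≤ x) : 1 ≤ x * x := by nlinarith

lemma int_two_le_sq' {x : ℤ} (h : x ≤ -1 ∨ 2 ≤ x) : 2 ≤ x * x - x := by
  rcases h with h | h <;> nlinarith

lemma quad {t m : ℕ} (hm : m < t) (σ : Fin t → ℕ)
    (hpos : ∀ i, 0 < σ i) (hmono : Monotone σ)
    (hstable : 2 ≤ σ ⟨m, hm⟩) (hne : ¬ σ ⟨m, hm⟩ = m)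
    (hones : ∀ i : Fin t, (i : ℕ) < m → σ i = 1)
    (i0 K : Fin t) (hi0 : (i0 : ℕ) = 0) (hK1 : 1 ≤ (K : ℕ))
    (hcmK : (σ K : ℤ) ≤ 1 + ∑ i ∈ Finset.univ.filter (fun i => i < K), (σ i : ℤ))
    (b : Fin t → ℤ)
    (hbL : ∑ i, b i * (σ i : ℤ) = 0)
    (horth : ∑ i, (chmVec σ i0 K i - b i) * b i = 0)
    (hIH : ∀ i : Fin t, i < K → b i = (σ i : ℤ) * b i0) :
    b = 0 ∨ b = chmVec σ i0 K := by
  classical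
  have hi0K : i0 ≠ K := fun h => by rw [h] at hi0; omega
  have hA : ∑ i ∈ Finset.univ.filter (fun i => i < K), b i * (σ i : ℤ)
      = (∑ i ∈ Finset.univ.filter (fun i => i < K), (σ i : ℤ) * (σ i : ℤ)) * b i0 := by
    rw [Finset.sum_mul]
    refine Finset.sum_congr rfl fun i hi => ?_
    rw [hIH i (Finset.mem_filter.mp hi).2]; ring
  have hB : ∑ i ∈ Finset.univ.filter (fun i => i < K), b i * b i
      = (∑ i ∈ Finset.univ.filter (fun i => i < K), (σ i : ℤ) * (σ i : ℤ)) * (b i0 * b i0) := by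
    rw [Finset.sum_mul]
    refine Finset.sum_congr rfl fun i hi => ?_
    rw [hIH i (Finset.mem_filter.mp hi).2]; ring
  rw [sum_split K, hA] at hbL
  have hN0 : ∑ i, b i * b i = b K - (σ K : ℤ) * b i0 := by
    have h1 : ∑ i, (chmVec σ i0 K i - b i) * b i
        = ∑ i, (chmVec σ i0 K i * b i - b i * b i) :=
      Finset.sum_congr rfl (fun i _ => by ring)
    rw [h1, Finset.sum_sub_distrib, chmVec_pair σ i0 K hi0K b] at horth
    linarith
  rw [sum_split K, hB] at hN0
  set S := ∑ i ∈ Finset.univ.filter (fun i => i < K), (σ i : ℤ) * (σ i : ℤ) with hSdef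
  set Q := ∑ i ∈ Finset.univ.filter (fun i => i < K), (σ i : ℤ) with hQdef
  set T := ∑ i ∈ Finset.univ.filter (fun i => K < i), b i * b i with hTdef
  set U := ∑ i ∈ Finset.univ.filter (fun i => K < i), b i * (σ i : ℤ) with hUdef
  clear_value S Q T U
  -- hbL : S * b i0 + (b K * σ K + U) = 0
  -- hN0 : S * (b i0 * b i0) + (b K * b K + T) = b K - σ K * b i0
  have hT0 : (0:ℤ) ≤ T := by
    rw [hTdef]
    exact Finset.sum_nonneg fun i _ => mul_self_nonneg _
  have hsk1 : (1 : ℤ) ≤ (σ K : ℤ) := by exact_mod_cast hpos K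
  have hQk : ((K : ℕ) : ℤ) ≤ Q := by
    rw [hQdef]
    have h1 : ∀ i ∈ Finset.univ.filter (fun i => i < K), (1:ℤ) ≤ (σ i : ℤ) :=
      fun i _ => by exact_mod_cast hpos i
    calc ((K:ℕ):ℤ) = (Finset.univ.filter (fun i => i < K)).card • (1:ℤ) := by
          rw [card_below]; simp
      _ ≤ _ := Finset.card_nsmul_le_sum _ _ _ h1
  have hQS : Q ≤ S := by
    rw [hQdef, hSdef]
    refine Finset.sum_le_sum fun i hi => ?_
    have h1 : (1:ℤ) ≤ (σ i : ℤ) := by exact_mod_cast hpos i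
    exact int_le_sq h1
  have hS1 : (1:ℤ) ≤ S := le_trans (by exact_mod_cast hK1) (le_trans hQk hQS)
  have hbKsq : 0 ≤ b K * b K - b K := int_sq_sub_nonneg (b K)
  have hterm : ∀ i ∈ Finset.univ.filter (fun i => i < K),
      (0:ℤ) ≤ (σ i:ℤ)*(σ i:ℤ) - (σ i:ℤ) := by
    intro i _
    have h1 : (1:ℤ) ≤ (σ i : ℤ) := by exact_mod_cast hpos i
    have := int_le_sq h1
    linarith
  have hsubSQ : ∑ i ∈ Finset.univ.filter (fun i => i < K),
      ((σ i:ℤ)*(σ i:ℤ) - (σ i:ℤ)) = S - Q := by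
    rw [Finset.sum_sub_distrib, ← hSdef, ← hQdef]
  have hSQ_eq : S ≤ Q + 1 → S = Q := by
    intro h
    by_contra hc
    obtain ⟨i, hi, hipos⟩ : ∃ i ∈ Finset.univ.filter (fun i => i < K),
        (0:ℤ) < (σ i:ℤ)*(σ i:ℤ) - (σ i:ℤ) := by
      by_contra hc2
      push_neg at hc2
      have h0 : ∑ i ∈ Finset.univ.filter (fun i => i < K),
          ((σ i:ℤ)*(σ i:ℤ) - (σ i:ℤ)) = 0 :=
        le_antisymm (Finset.sum_nonpos fun i hi => hc2 i hi) (Finset.sum_nonneg hterm)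
      rw [hsubSQ] at h0
      exact hc (by omega)
    have h1 : (1:ℤ) ≤ (σ i : ℤ) := by exact_mod_cast hpos i
    have h2i : (2:ℤ) ≤ (σ i : ℤ) := int_two_le h1 hipos
    have h2t : (2:ℤ) ≤ (σ i:ℤ)*(σ i:ℤ) - (σ i:ℤ) := int_two_le_sq h2i
    have h3 := Finset.single_le_sum hterm hi
    rw [hsubSQ] at h3
    linarith
  have hallone : S = Q → ∀ i ∈ Finset.univ.filter (fun i => i < K), σ i = 1 := by
    intro hSQ i hi
    have h0 : ∑ i ∈ Finset.univ.filter (fun i => i < K),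
        ((σ i:ℤ)*(σ i:ℤ) - (σ i:ℤ)) = 0 := by rw [hsubSQ]; omega
    have h2 := (Finset.sum_eq_zero_iff_of_nonneg hterm).mp h0 i hi
    have h1 : (1:ℤ) ≤ (σ i : ℤ) := by exact_mod_cast hpos i
    have h3 : (σ i : ℤ) = 1 := int_eq_one h1 h2
    exact_mod_cast h3
  have hQisk : (∀ i ∈ Finset.univ.filter (fun i => i < K), σ i = 1) → Q = ((K:ℕ):ℤ) := by
    intro h
    rw [hQdef, Finset.sum_congr rfl (fun i hi => by rw [h i hi]; norm_num :
      ∀ i ∈ Finset.univ.filter (fun i => i < K), ((σ i : ℕ):ℤ) = 1),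
      Finset.sum_const, card_below]
    simp
  have hkm : (∀ i ∈ Finset.univ.filter (fun i => i < K), σ i = 1) → (K:ℕ) ≤ m := by
    intro h
    by_contra hc
    push_neg at hc
    have hmem : (⟨m, hm⟩ : Fin t) ∈ Finset.univ.filter (fun i => i < K) := by
      simp only [Finset.mem_filter, Finset.mem_univ, true_and, Fin.lt_def]
      exact hc
    have := h _ hmem
    omega
  rcases (by omega : (1:ℤ) ≤ b i0 ∨ b i0 = 0 ∨ b i0 = -1 ∨ b i0 ≤ -2) with hb0 | hb0 | hb0 | hb0
  · -- b i0 ≥ 1 : impossible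
    exfalso
    have e1 : (1:ℤ) ≤ b i0 * b i0 := int_one_le_mul_self hb0
    have e2 : S ≤ S * (b i0 * b i0) := le_mul_of_one_le_right (by linarith) e1
    have e3 : (σ K:ℤ) ≤ (σ K:ℤ) * b i0 := le_mul_of_one_le_right (by linarith) hb0
    linarith
  · -- b i0 = 0 : b = 0
    left
    have hN1 : b K * b K + T - b K = 0 := by
      linear_combination hN0 - (S * b i0 + (σ K:ℤ)) * hb0
    have hL1 : b K * (σ K:ℤ) + U = 0 := by
      linear_combination hbL - S * hb0
    have hT : T = 0 := by linarith
    have hE : b K * b K - b K = 0 := by linarith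
    have hbk : b K = 0 ∨ b K = 1 := by
      have hf : b K * (b K - 1) = 0 := by linear_combination hE
      rcases mul_eq_zero.mp hf with h | h
      · exact Or.inl h
      · right; omega
    have habz : ∀ i ∈ Finset.univ.filter (fun i => K < i), b i = 0 := by
      intro i hi
      have h0 : ∑ i ∈ Finset.univ.filter (fun i => K < i), b i * b i = 0 := by
        rw [← hTdef]; exact hT
      have := (Finset.sum_eq_zero_iff_of_nonneg
        (fun i _ => mul_self_nonneg (b i))).mp h0 i hi
      exact mul_self_eq_zero.mp this
    have hU : U = 0 := by
      rw [hUdef]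
      exact Finset.sum_eq_zero fun i hi => by rw [habz i hi]; ring
    have hbK0 : b K = 0 := by
      rcases hbk with h | h
      · exact h
      · exfalso; rw [h, hU] at hL1; simp at hL1; omega
    funext i
    simp only [Pi.zero_apply]
    rcases lt_trichotomy i K with h | h | h
    · rw [hIH i h, hb0]; ring
    · rw [h]; exact hbK0
    · exact habz i (by simp only [Finset.mem_filter, Finset.mem_univ, true_and]; exact h)
  · -- b i0 = -1
    have hN : S + (b K * b K + T) = b K + (σ K:ℤ) := by
      linear_combination hN0 + (S*(1 - b i0) - (σ K:ℤ)) * hb0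
    have hL : -S + (b K * (σ K:ℤ) + U) = 0 := by
      linear_combination hbL + (-S) * hb0
    have hD0 : S ≤ (σ K:ℤ) := by linarith
    have hD1 : (σ K:ℤ) ≤ S + 1 := by linarith
    rcases (by omega : (σ K:ℤ) = S ∨ (σ K:ℤ) = S + 1) with hsx | hsx
    · -- σ K = S
      have hSQ : S = Q := hSQ_eq (by linarith)
      have h1 := hallone hSQ
      have hQk' : Q = ((K:ℕ):ℤ) := hQisk h1
      have hT : T = 0 := by linarith
      have hE : b K * b K - b K = 0 := by linarith
      have habz : ∀ i ∈ Finset.univ.filter (fun i => K < i), b i = 0 := by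
        intro i hi
        have h0 : ∑ i ∈ Finset.univ.filter (fun i => K < i), b i * b i = 0 := by
          rw [← hTdef]; exact hT
        have := (Finset.sum_eq_zero_iff_of_nonneg
          (fun i _ => mul_self_nonneg (b i))).mp h0 i hi
        exact mul_self_eq_zero.mp this
      have hU : U = 0 := by
        rw [hUdef]
        exact Finset.sum_eq_zero fun i hi => by rw [habz i hi]; ring
      have hbK1 : b K = 1 := by
        have hf : (b K - 1) * (σ K:ℤ) = 0 := by
          rw [hU] at hL
          linear_combination hL - hsx
        rcases mul_eq_zero.mp hf with h | h
        · omega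
        · omega
      have hkm' : (K:ℕ) ≤ m := hkm h1
      have hsKk : (σ K:ℤ) = ((K:ℕ):ℤ) := by omega
      rcases lt_or_eq_of_le hkm' with hlt | heq
      · -- K < m : σ K = 1, K = 1
        have hσK1 : σ K = 1 := hones K hlt
        have hk1 : (K:ℕ) = 1 := by
          rw [hσK1] at hsKk
          omega
        right
        funext i
        rcases lt_trichotomy i K with h | h | h
        · have hii0 : i = i0 := by
            have hval := Fin.lt_def.mp h
            exact Fin.ext (by omega)
          rw [hii0, chmVec_apply_i0 σ i0 K hi0K, hIH i0 (by rw [Fin.lt_def]; omega)]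
          have hσ0 : σ i0 = 1 := h1 i0 (by
            simp only [Finset.mem_filter, Finset.mem_univ, true_and, Fin.lt_def]; omega)
          rw [hσ0, hσK1, hb0]
          norm_num
        · rw [h, chmVec_apply_K]
          exact hbK1
        · rw [chmVec_apply_other σ i0 K (ne_of_gt h)
            (by intro hh; rw [hh] at h; exact absurd (Fin.lt_def.mp h) (by omega))]
          exact habz i (by simp only [Finset.mem_filter, Finset.mem_univ, true_and]; exact h)
      · -- K = m : contradiction with hne
        exfalso
        have hKm : K = (⟨m, hm⟩ : Fin t) := Fin.ext (by simp [← heq])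
        rw [hKm] at hsKk
        have hfin : ((σ ⟨m,hm⟩ : ℕ) : ℤ) = (m : ℤ) := hsKk
        exact hne (by exact_mod_cast hfin)
    · -- σ K = S + 1
      exfalso
      have hSQ : S = Q := le_antisymm (by linarith) hQS
      have h1 := hallone hSQ
      have hQk' : Q = ((K:ℕ):ℤ) := hQisk h1
      have hET : (b K * b K - b K) + T = 1 := by linarith
      have hbk01 : b K = 0 ∨ b K = 1 := by
        by_contra hc
        push_neg at hc
        have h2 : 2 ≤ b K * b K - b K := int_two_le_sq' (by omega)
        linarith
      have hE0 : b K * b K - b K = 0 := by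
        rcases hbk01 with h | h <;> rw [h] <;> ring
      have hT1 : T = 1 := by linarith
      obtain ⟨j, hjmem, hj1, hjz⟩ := sq_sum_extract _ b (by rw [← hTdef]; exact hT1)
      have hjK : K < j := (Finset.mem_filter.mp hjmem).2
      have hU : U = b j * (σ j:ℤ) := by
        rw [hUdef]
        exact Finset.sum_eq_single_of_mem j hjmem
          (fun i hi hne' => by rw [hjz i hi hne']; ring)
      have hσj : (σ K:ℤ) ≤ (σ j:ℤ) := by exact_mod_cast hmono (le_of_lt hjK)
      have hKZ : (1:ℤ) ≤ ((K:ℕ):ℤ) := by exact_mod_cast hK1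
      rw [hU] at hL
      rcases hbk01 with h | h <;> rcases hj1 with h' | h' <;> rw [h, h'] at hL <;> linarith
  · -- b i0 ≤ -2
    have hc2 : (2:ℤ) ≤ -(b i0) := by omega
    have h1 : S * (b i0 * b i0) + (σ K:ℤ) * b i0 ≤ 0 := by linarith
    have h2 : S * (-(b i0)) ≤ (σ K:ℤ) := by
      have hpos' : (0:ℤ) < -(b i0) := by omega
      have h3 : (S * (-(b i0))) * (-(b i0)) ≤ (σ K:ℤ) * (-(b i0)) := by
        have he : (S * (-(b i0))) * (-(b i0)) = S * (b i0 * b i0) := by ring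
        rw [he]
        linarith
      exact le_of_mul_le_mul_right h3 hpos'
    have h4 : 2 * S ≤ S * (-(b i0)) := by
      have := mul_le_mul_of_nonneg_left hc2 (by linarith : (0:ℤ) ≤ S)
      linarith
    have h5 : S = 1 := by linarith
    have h6 : (σ K:ℤ) = 2 := le_antisymm (by linarith) (by linarith)
    have h7 : b i0 = -2 := by
      have h8 : -(b i0) ≤ 2 := by
        rw [h5] at h2
        omega
      omega
    rw [h5, h6, h7] at hN0 hbL
    have hET : b K * b K - b K + T = 0 := by linear_combination hN0
    have hT : T = 0 := by linarith
    have hE : b K * b K - b K = 0 := by linarith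
    have habz : ∀ i ∈ Finset.univ.filter (fun i => K < i), b i = 0 := by
      intro i hi
      have h0 : ∑ i ∈ Finset.univ.filter (fun i => K < i), b i * b i = 0 := by
        rw [← hTdef]; exact hT
      have := (Finset.sum_eq_zero_iff_of_nonneg
        (fun i _ => mul_self_nonneg (b i))).mp h0 i hi
      exact mul_self_eq_zero.mp this
    have hU : U = 0 := by
      rw [hUdef]
      exact Finset.sum_eq_zero fun i hi => by rw [habz i hi]; ring
    have hbK1 : b K = 1 := by
      rw [hU] at hbL
      linarith
    have hk1 : (K:ℕ) = 1 := by
      have hKZ : (1:ℤ) ≤ ((K:ℕ):ℤ) := by exact_mod_cast hK1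
      have : ((K:ℕ):ℤ) = 1 := by linarith
      exact_mod_cast this
    right
    funext i
    rcases lt_trichotomy i K with h | h | h
    · have hii0 : i = i0 := by
        have hval := Fin.lt_def.mp h
        exact Fin.ext (by omega)
      rw [hii0, chmVec_apply_i0 σ i0 K hi0K, h6, h7]
    · rw [h, chmVec_apply_K]
      exact hbK1
    · rw [chmVec_apply_other σ i0 K (ne_of_gt h)
        (by intro hh; rw [hh] at h; exact absurd (Fin.lt_def.mp h) (by omega))]
      exact habz i (by simp only [Finset.mem_filter, Finset.mem_univ, true_and]; exact h)

lemma core {t m : ℕ} (hm : m < t) (σ : Fin t → ℕ)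
    (hpos : ∀ i, 0 < σ i) (hmono : Monotone σ)
    (hstable : 2 ≤ σ ⟨m, hm⟩) (hne : ¬ σ ⟨m, hm⟩ = m)
    (hones : ∀ i : Fin t, (i : ℕ) < m → σ i = 1)
    (hm1 : 1 ≤ m)
    (hcmb : ∀ K : Fin t, (σ K : ℤ) ≤ 1 + ∑ i ∈ Finset.univ.filter (fun i => i < K), (σ i : ℤ))
    (i0 : Fin t) (hi0 : (i0 : ℕ) = 0)
    (i1 : Fin t) (hi1 : (i1 : ℕ) = 1)
    (L1 L2 : AddSubgroup (Fin t → ℤ)) (h2ne : L2 ≠ ⊥)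
    (horth : ∀ x ∈ L1, ∀ y ∈ L2, ∑ i, x i * y i = 0)
    (hsup : L1 ⊔ L2 = perpLat (fun i => (σ i : ℤ)))
    (hv1 : chmVec σ i0 i1 ∈ L1) : False := by
  classical
  have hσ0 : σ i0 = 1 := hones i0 (by omega)
  have hL2le : L2 ≤ perpLat (fun i => (σ i : ℤ)) := hsup ▸ le_sup_right
  have hvmem : ∀ K : Fin t, 1 ≤ (K:ℕ) →
      chmVec σ i0 K ∈ perpLat (fun i => (σ i : ℤ)) := by
    intro K hK
    have hi0K : i0 ≠ K := fun h => by rw [h] at hi0; omega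
    rw [mem_perpLat, chmVec_pair σ i0 K hi0K, hσ0]
    push_cast
    ring
  have main : ∀ k : ℕ, ∀ hk : k < t, ∀ y ∈ L2,
      y ⟨k, hk⟩ = (σ ⟨k, hk⟩ : ℤ) * y i0 := by
    intro k
    induction k using Nat.strong_induction_on with
    | _ k IH =>
      intro hk y hy
      by_cases hk0 : k = 0
      · subst hk0
        have hKi0 : (⟨0, hk⟩ : Fin t) = i0 := Fin.ext (by simp [hi0])
        rw [hKi0]
        have : σ i0 = 1 := hσ0
        rw [this]
        push_cast
        ring
      · have hK1 : 1 ≤ k := by omega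
        set K : Fin t := ⟨k, hk⟩ with hKdef
        have hvL := hvmem K hK1
        rw [← hsup] at hvL
        obtain ⟨a, ha, b, hb, hab⟩ := AddSubgroup.mem_sup.mp hvL
        have ha' : ∀ i, a i = chmVec σ i0 K i - b i := by
          intro i
          have := congrFun hab i
          simp only [Pi.add_apply] at this
          linarith
        have hbL : ∑ i, b i * (σ i : ℤ) = 0 := hL2le hb
        have horthab : ∑ i, (chmVec σ i0 K i - b i) * b i = 0 := by
          have h := horth a ha b hb
          have heq : ∑ i, (chmVec σ i0 K i - b i) * b i = ∑ i, a i * b i :=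
            Finset.sum_congr rfl fun i _ => by rw [← ha' i]
          rw [heq]
          exact h
        have hIHb : ∀ i : Fin t, i < K → b i = (σ i : ℤ) * b i0 := by
          intro i hilt
          have hv : (i : ℕ) < k := hilt
          have := IH (i : ℕ) hv i.isLt b hb
          simpa using this
        rcases quad hm σ hpos hmono hstable hne hones i0 K hi0 hK1 (hcmb K)
          b hbL horthab hIHb with hbz | hbv
        · -- b = 0, so chmVec ∈ L1 and we get the relation
          have haeq : a = chmVec σ i0 K := by
            funext i
            rw [ha' i, hbz]
            simp
          have h := horth a ha y hy
          rw [haeq] at h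
          have hi0K : i0 ≠ K := fun hh => by rw [hh] at hi0; simp [hKdef] at hi0; omega
          rw [chmVec_pair σ i0 K hi0K y] at h
          linarith
        · -- b = chmVec ∈ L2
          rw [hbv] at hb
          exfalso
          by_cases hk1 : k = 1
          · -- contradicts chmVec ∈ L1
            have hKi1 : K = i1 := Fin.ext (by simp [hKdef, hi1, hk1])
            rw [hKi1] at hb
            have h := horth _ hv1 _ hb
            have hi01 : i0 ≠ i1 := fun hh => by rw [hh] at hi0; omega
            rw [chmVec_pair σ i0 i1 hi01 (chmVec σ i0 i1)] at h
            rw [chmVec_apply_K, chmVec_apply_i0 σ i0 i1 hi01] at h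
            have hsk1 : (1 : ℤ) ≤ (σ i1 : ℤ) := by exact_mod_cast hpos i1
            nlinarith
          · -- k ≥ 2 : use IH at index 1
            have h1k : (1:ℕ) < k := by omega
            have h1t : (1:ℕ) < t := lt_trans h1k hk
            have h := IH 1 h1k h1t _ hb
            have hne1K : (⟨1, h1t⟩ : Fin t) ≠ K := by
              intro hh
              have : (1:ℕ) = k := congrArg Fin.val hh
              omega
            have hne10 : (⟨1, h1t⟩ : Fin t) ≠ i0 := by
              intro hh
              have : (1:ℕ) = (i0:ℕ) := congrArg Fin.val hh
              omega
            rw [chmVec_apply_other σ i0 K hne1K hne10] at h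
            have hi0K : i0 ≠ K := fun hh => by rw [hh] at hi0; simp [hKdef] at hi0; omega
            rw [chmVec_apply_i0 σ i0 K hi0K] at h
            have hs1 : (1 : ℤ) ≤ (σ ⟨1, h1t⟩ : ℤ) := by exact_mod_cast hpos _
            have hsK : (1 : ℤ) ≤ (σ K : ℤ) := by exact_mod_cast hpos K
            nlinarith
  have hall : ∀ y ∈ L2, y = 0 := by
    intro y hy
    have hy0 : y i0 = 0 := by
      have hyL : ∑ i, y i * (σ i : ℤ) = 0 := hL2le hy
      have hrw : ∑ i, y i * (σ i : ℤ) = (∑ i, (σ i : ℤ) * (σ i : ℤ)) * y i0 := by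
        rw [Finset.sum_mul]
        refine Finset.sum_congr rfl fun i _ => ?_
        have := main (i : ℕ) i.isLt y hy
        simp only [Fin.eta] at this
        rw [this]
        ring
      rw [hrw] at hyL
      have hpos' : (0:ℤ) < ∑ i, (σ i : ℤ) * (σ i : ℤ) := by
        refine Finset.sum_pos (fun i _ => ?_) ⟨i0, Finset.mem_univ i0⟩
        have h1 : (1:ℤ) ≤ (σ i : ℤ) := by exact_mod_cast hpos i
        nlinarith
      rcases mul_eq_zero.mp hyL with h | h
      · exfalso; omega
      · exact h
    funext i
    simp only [Pi.zero_apply]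
    have := main (i : ℕ) i.isLt y hy
    simp only [Fin.eta] at this
    rw [this, hy0]
    ring
  exact h2ne ((AddSubgroup.eq_bot_iff_forall L2).mpr hall)

end CMaux



open CMaux in
/-- if an integer changemaker lattice is decomposable, then its smallest
stable coefficient `σ_m` equals the number of changemaker coefficients preceding it
(in 0-indexed form, `σ m = m` where `m` is the first index with `σ m ≥ 2`). -/
theorem decomposable_changemaker_stable_coeff (t m : ℕ) (hm : m < t) (σ : Fin t → ℕ)
    (hpos : ∀ i, 0 < σ i) (hmono : Monotone σ)
    (hcm : ∀ n : ℕ, 1 ≤ n → n ≤ ∑ i, σ i → ∃ A : Finset (Fin t), n = ∑ i ∈ A, σ i)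
    (hones : ∀ i : Fin t, (i : ℕ) < m → σ i = 1)
    (hstable : 2 ≤ σ ⟨m, hm⟩)
    (hdec : ∃ L₁ L₂ : AddSubgroup (Fin t → ℤ), L₁ ≠ ⊥ ∧ L₂ ≠ ⊥ ∧
      (∀ x ∈ L₁, ∀ y ∈ L₂, ∑ i, x i * y i = 0) ∧
      L₁ ⊔ L₂ = perpLat (fun i => (σ i : ℤ))) :
    σ ⟨m, hm⟩ = m := by
  classical
  by_contra hne
  have ht0 : 0 < t := by omega
  set i0 : Fin t := ⟨0, ht0⟩ with hi0def
  have hi0 : (i0 : ℕ) = 0 := rfl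
  -- m ≥ 1
  have hm1 : 1 ≤ m := by
    by_contra hc
    push_neg at hc
    have hm0 : m = 0 := by omega
    have h2 : 2 ≤ σ i0 := by
      have : (⟨m, hm⟩ : Fin t) = i0 := Fin.ext (by simp [hm0, hi0])
      rw [← this]
      exact hstable
    have hsum : 1 ≤ ∑ i, σ i := by
      have := Finset.single_le_sum (f := σ) (fun i _ => Nat.zero_le _) (Finset.mem_univ i0)
      omega
    obtain ⟨A, hA⟩ := hcm 1 le_rfl hsum
    rcases A.eq_empty_or_nonempty with rfl | ⟨j, hj⟩
    · simp at hA
    · have h2j : 2 ≤ σ j := le_trans h2 (hmono (by rw [Fin.le_def]; omega))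
      have hge : σ j ≤ ∑ i ∈ A, σ i :=
        Finset.single_le_sum (fun _ _ => Nat.zero_le _) hj
      omega
  have h1t : 1 < t := by omega
  set i1 : Fin t := ⟨1, h1t⟩ with hi1def
  have hi1 : (i1 : ℕ) = 1 := rfl
  have hσ0 : σ i0 = 1 := hones i0 (by omega)
  -- changemaker bound
  have hcmbN : ∀ K : Fin t, σ K ≤ 1 + ∑ i ∈ Finset.univ.filter (fun i => i < K), σ i := by
    intro K
    by_contra hc
    push_neg at hc
    set Qn : ℕ := ∑ i ∈ Finset.univ.filter (fun i => i < K), σ i with hQndef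
    have hsum : 1 + Qn ≤ ∑ i, σ i := by
      rw [sum_split K σ]
      have h0 : 0 ≤ ∑ i ∈ Finset.univ.filter (fun i => K < i), σ i := Nat.zero_le _
      omega
    obtain ⟨A, hA⟩ := hcm (1 + Qn) (by omega) hsum
    have hsub : A ⊆ Finset.univ.filter (fun i => i < K) := by
      intro j hj
      simp only [Finset.mem_filter, Finset.mem_univ, true_and]
      by_contra hcj
      have hKj : K ≤ j := not_lt.mp hcj
      have hσKj : σ K ≤ σ j := hmono hKj
      have hge : σ j ≤ ∑ i ∈ A, σ i :=
        Finset.single_le_sum (fun _ _ => Nat.zero_le _) hj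
      omega
    have hle : ∑ i ∈ A, σ i ≤ Qn := Finset.sum_le_sum_of_subset hsub
    omega
  have hcmb : ∀ K : Fin t, (σ K : ℤ) ≤ 1 + ∑ i ∈ Finset.univ.filter (fun i => i < K), (σ i : ℤ) := by
    intro K
    have := hcmbN K
    have hcast : ((∑ i ∈ Finset.univ.filter (fun i => i < K), σ i : ℕ) : ℤ)
        = ∑ i ∈ Finset.univ.filter (fun i => i < K), (σ i : ℤ) := by push_cast; rfl
    rw [← hcast]
    exact_mod_cast this
  obtain ⟨L1, L2, h1ne, h2ne, horth, hsup⟩ := hdec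
  -- split the anchor vector
  have hi01 : i0 ≠ i1 := fun hh => by
    have : (0:ℕ) = 1 := congrArg Fin.val hh
    omega
  have hvL : chmVec σ i0 i1 ∈ perpLat (fun i => (σ i : ℤ)) := by
    rw [mem_perpLat, chmVec_pair σ i0 i1 hi01, hσ0]
    push_cast
    ring
  rw [← hsup] at hvL
  obtain ⟨a, ha, b, hb, hab⟩ := AddSubgroup.mem_sup.mp hvL
  have ha' : ∀ i, a i = chmVec σ i0 i1 i - b i := by
    intro i
    have := congrFun hab i
    simp only [Pi.add_apply] at this
    linarith
  have hL2le : L2 ≤ perpLat (fun i => (σ i : ℤ)) := hsup ▸ le_sup_right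
  have hbL : ∑ i, b i * (σ i : ℤ) = 0 := hL2le hb
  have horthab : ∑ i, (chmVec σ i0 i1 i - b i) * b i = 0 := by
    have h := horth a ha b hb
    have heq : ∑ i, (chmVec σ i0 i1 i - b i) * b i = ∑ i, a i * b i :=
      Finset.sum_congr rfl fun i _ => by rw [← ha' i]
    rw [heq]
    exact h
  have hIHb : ∀ i : Fin t, i < i1 → b i = (σ i : ℤ) * b i0 := by
    intro i hilt
    have hval : (i : ℕ) < 1 := hilt
    have hii0 : i = i0 := Fin.ext (by omega)
    rw [hii0, hσ0]
    push_cast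
    ring
  rcases quad hm σ hpos hmono hstable hne hones i0 i1 hi0 (by omega) (hcmb i1)
    b hbL horthab hIHb with hbz | hbv
  · -- b = 0 : anchor in L1
    have haeq : a = chmVec σ i0 i1 := by
      funext i
      rw [ha' i, hbz]
      simp
    exact core hm σ hpos hmono hstable hne hones hm1 hcmb i0 hi0 i1 hi1 L1 L2
      h2ne horth hsup (haeq ▸ ha)
  · -- b = chmVec : anchor in L2, swap roles
    have horth' : ∀ x ∈ L2, ∀ y ∈ L1, ∑ i, x i * y i = 0 := by
      intro x hx y hy
      have h := horth y hy x hx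
      have heq : ∑ i, x i * y i = ∑ i, y i * x i :=
        Finset.sum_congr rfl fun i _ => mul_comm _ _
      rw [heq]
      exact h
    have hsup' : L2 ⊔ L1 = perpLat (fun i => (σ i : ℤ)) := by
      rw [sup_comm]
      exact hsup
    exact core hm σ hpos hmono hstable hne hones hm1 hcmb i0 hi0 i1 hi1 L2 L1
      h1ne horth' hsup' (hbv ▸ hb)
end

section
/- The orthogonal complements ⟨4e₀ + e₁ + e₂ + e₃ + e₄ + e₅⟩^⊥ and ⟨2e₀ + 2e₁ + 2e₂ + 2e₃ + 2e₄ + e₅⟩^⊥ in Z⁶ are isomorphic as lattices: both admit a basis in which the Gram matrix is the 5×5 tridiagonal matrix with diagonal (5, 2, 2, 2, 2) and off-diagonal entries −1. -/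
/-- The 5×5 tridiagonal Gram matrix with diagonal `(5,2,2,2,2)` and off-diagonal `-1`. -/
def gram5 : Matrix (Fin 5) (Fin 5) ℤ :=
  Matrix.of fun i j =>
    if i = j then (if (i : ℕ) = 0 then 5 else 2)
    else if (i : ℕ) + 1 = (j : ℕ) ∨ (j : ℕ) + 1 = (i : ℕ) then -1 else 0

@[local simp] lemma fin6_mk2 (h : 2 < 6) : (⟨2, h⟩ : Fin 6) = 2 := rfl
@[local simp] lemma fin6_mk3 (h : 3 < 6) : (⟨3, h⟩ : Fin 6) = 3 := rfl
@[local simp] lemma fin6_mk4 (h : 4 < 6) : (⟨4, h⟩ : Fin 6) = 4 := rfl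
@[local simp] lemma fin6_mk5 (h : 5 < 6) : (⟨5, h⟩ : Fin 6) = 5 := rfl
@[local simp] lemma fin5_mk2 (h : 2 < 5) : (⟨2, h⟩ : Fin 5) = 2 := rfl
@[local simp] lemma fin5_mk3 (h : 3 < 5) : (⟨3, h⟩ : Fin 5) = 3 := rfl
@[local simp] lemma fin5_mk4 (h : 4 < 5) : (⟨4, h⟩ : Fin 5) = 4 := rfl
@[local simp] lemma vec6_0 {α : Type*} (a b c d e f : α) : ![a,b,c,d,e,f] 0 = a := rfl
@[local simp] lemma vec6_1 {α : Type*} (a b c d e f : α) : ![a,b,c,d,e,f] 1 = b := rfl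
@[local simp] lemma vec6_2 {α : Type*} (a b c d e f : α) : ![a,b,c,d,e,f] 2 = c := rfl
@[local simp] lemma vec6_3 {α : Type*} (a b c d e f : α) : ![a,b,c,d,e,f] 3 = d := rfl
@[local simp] lemma vec6_4 {α : Type*} (a b c d e f : α) : ![a,b,c,d,e,f] 4 = e := rfl
@[local simp] lemma vec6_5 {α : Type*} (a b c d e f : α) : ![a,b,c,d,e,f] 5 = f := rfl
@[local simp] lemma vec5_0 {α : Type*} (a b c d e : α) : ![a,b,c,d,e] 0 = a := rfl
@[local simp] lemma vec5_1 {α : Type*} (a b c d e : α) : ![a,b,c,d,e] 1 = b := rfl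
@[local simp] lemma vec5_2 {α : Type*} (a b c d e : α) : ![a,b,c,d,e] 2 = c := rfl
@[local simp] lemma vec5_3 {α : Type*} (a b c d e : α) : ![a,b,c,d,e] 3 = d := rfl
@[local simp] lemma vec5_4 {α : Type*} (a b c d e : α) : ![a,b,c,d,e] 4 = e := rfl


/-- Basis of the first lattice. -/
def vA : Fin 5 → (Fin 6 → ℤ) :=
  ![![-1, 0, 1, 1, 1, 1],
    ![0, 1, -1, 0, 0, 0],
    ![0, 0, 1, -1, 0, 0],
    ![0, 0, 0, 1, -1, 0],
    ![0, 0, 0, 0, 1, -1]]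

/-- Basis of the second lattice. -/
def vB : Fin 5 → (Fin 6 → ℤ) :=
  ![![-1, 0, 0, 0, 0, 2],
    ![1, -1, 0, 0, 0, 0],
    ![0, 1, -1, 0, 0, 0],
    ![0, 0, 1, -1, 0, 0],
    ![0, 0, 0, 1, -1, 0]]

def Fmap : (Fin 6 → ℤ) → (Fin 6 → ℤ) := fun x =>
  ![x 0 + x 1, x 0 + x 2, x 0 + x 3, x 0 + x 4, x 0 + x 5, -2 * x 0]

def Gmap : (Fin 6 → ℤ) → (Fin 6 → ℤ) := fun y =>
  ![y 0 + y 1 + y 2 + y 3 + y 4,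
    -(y 1 + y 2 + y 3 + y 4),
    -(y 0 + y 2 + y 3 + y 4),
    -(y 0 + y 1 + y 3 + y 4),
    -(y 0 + y 1 + y 2 + y 4),
    -(y 0 + y 1 + y 2 + y 3)]

lemma memA_iff (x : Fin 6 → ℤ) :
    x ∈ perpLat (![4, 1, 1, 1, 1, 1] : Fin 6 → ℤ) ↔
      4 * x 0 + x 1 + x 2 + x 3 + x 4 + x 5 = 0 := by
  rw [mem_perpLat, Fin.sum_univ_six]
  constructor <;> intro h <;> simp at * <;> omega

lemma memB_iff (x : Fin 6 → ℤ) :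
    x ∈ perpLat (![2, 2, 2, 2, 2, 1] : Fin 6 → ℤ) ↔
      2 * x 0 + 2 * x 1 + 2 * x 2 + 2 * x 3 + 2 * x 4 + x 5 = 0 := by
  rw [mem_perpLat, Fin.sum_univ_six]
  constructor <;> intro h <;> simp at * <;> omega

lemma closureA :
    AddSubgroup.closure (Set.range vA) = perpLat (![4, 1, 1, 1, 1, 1] : Fin 6 → ℤ) := by
  apply le_antisymm
  · rw [AddSubgroup.closure_le]
    rintro _ ⟨i, rfl⟩
    rw [SetLike.mem_coe, memA_iff]
    fin_cases i <;> decide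
  · intro x hx
    rw [memA_iff] at hx
    have h : ∀ i : Fin 5, vA i ∈ AddSubgroup.closure (Set.range vA) :=
      fun i => AddSubgroup.subset_closure ⟨i, rfl⟩
    have hxe : x = (-x 0) • vA 0 + (x 1) • vA 1 + (x 0 + x 1 + x 2) • vA 2 +
        (2 * x 0 + x 1 + x 2 + x 3) • vA 3 + (3 * x 0 + x 1 + x 2 + x 3 + x 4) • vA 4 := by
      funext i
      fin_cases i <;> simp [vA] <;> omega
    rw [hxe]
    exact add_mem (add_mem (add_mem (add_mem (AddSubgroup.zsmul_mem _ (h 0) _)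
      (AddSubgroup.zsmul_mem _ (h 1) _)) (AddSubgroup.zsmul_mem _ (h 2) _))
      (AddSubgroup.zsmul_mem _ (h 3) _)) (AddSubgroup.zsmul_mem _ (h 4) _)

lemma closureB :
    AddSubgroup.closure (Set.range vB) = perpLat (![2, 2, 2, 2, 2, 1] : Fin 6 → ℤ) := by
  apply le_antisymm
  · rw [AddSubgroup.closure_le]
    rintro _ ⟨i, rfl⟩
    rw [SetLike.mem_coe, memB_iff]
    fin_cases i <;> decide
  · intro x hx
    rw [memB_iff] at hx
    have h : ∀ i : Fin 5, vB i ∈ AddSubgroup.closure (Set.range vB) :=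
      fun i => AddSubgroup.subset_closure ⟨i, rfl⟩
    have hxe : x = (-(x 0 + x 1 + x 2 + x 3 + x 4)) • vB 0 +
        (-(x 1 + x 2 + x 3 + x 4)) • vB 1 + (-(x 2 + x 3 + x 4)) • vB 2 +
        (-(x 3 + x 4)) • vB 3 + (-(x 4)) • vB 4 := by
      funext i
      fin_cases i <;> simp [vB] <;> omega
    rw [hxe]
    exact add_mem (add_mem (add_mem (add_mem (AddSubgroup.zsmul_mem _ (h 0) _)
      (AddSubgroup.zsmul_mem _ (h 1) _)) (AddSubgroup.zsmul_mem _ (h 2) _))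
      (AddSubgroup.zsmul_mem _ (h 3) _)) (AddSubgroup.zsmul_mem _ (h 4) _)

lemma Fmap_mem {x : Fin 6 → ℤ} (hx : x ∈ perpLat (![4, 1, 1, 1, 1, 1] : Fin 6 → ℤ)) :
    Fmap x ∈ perpLat (![2, 2, 2, 2, 2, 1] : Fin 6 → ℤ) := by
  rw [memA_iff] at hx
  rw [memB_iff]
  simp [Fmap]
  omega

lemma Gmap_mem {y : Fin 6 → ℤ} (hy : y ∈ perpLat (![2, 2, 2, 2, 2, 1] : Fin 6 → ℤ)) :
    Gmap y ∈ perpLat (![4, 1, 1, 1, 1, 1] : Fin 6 → ℤ) := by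
  rw [memB_iff] at hy
  rw [memA_iff]
  simp [Gmap]
  omega

/-- The explicit lattice isomorphism. -/
def fEquiv : perpLat (![4, 1, 1, 1, 1, 1] : Fin 6 → ℤ) ≃+
    perpLat (![2, 2, 2, 2, 2, 1] : Fin 6 → ℤ) where
  toFun x := ⟨Fmap x, Fmap_mem x.2⟩
  invFun y := ⟨Gmap y, Gmap_mem y.2⟩
  left_inv := by
    rintro ⟨x, hx⟩
    rw [memA_iff] at hx
    apply Subtype.ext
    funext i
    fin_cases i <;> simp [Fmap, Gmap] <;> omega
  right_inv := by
    rintro ⟨y, hy⟩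
    rw [memB_iff] at hy
    apply Subtype.ext
    funext i
    fin_cases i <;> simp [Fmap, Gmap] <;> omega
  map_add' := by
    rintro ⟨x, hx⟩ ⟨y, hy⟩
    apply Subtype.ext
    funext i
    fin_cases i <;> simp only [Fmap] <;> simp <;> ring

/-- `⟨4e₀+e₁+⋯+e₅⟩^⊥` and `⟨2e₀+2e₁+2e₂+2e₃+2e₄+e₅⟩^⊥` in `ℤ⁶` are
isomorphic lattices; both admit generating bases with Gram matrix `gram5`. -/
theorem changemaker_lattices_isomorphic :
    (∃ f : perpLat (![4, 1, 1, 1, 1, 1] : Fin 6 → ℤ) ≃+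
        perpLat (![2, 2, 2, 2, 2, 1] : Fin 6 → ℤ),
      ∀ x y : perpLat (![4, 1, 1, 1, 1, 1] : Fin 6 → ℤ),
        ∑ i, (x : Fin 6 → ℤ) i * (y : Fin 6 → ℤ) i =
          ∑ i, ((f x : Fin 6 → ℤ) i) * ((f y : Fin 6 → ℤ) i)) ∧
    (∃ v : Fin 5 → (Fin 6 → ℤ),
      AddSubgroup.closure (Set.range v) = perpLat (![4, 1, 1, 1, 1, 1] : Fin 6 → ℤ) ∧
      ∀ i j, ∑ k, v i k * v j k = gram5 i j) ∧
    (∃ v : Fin 5 → (Fin 6 → ℤ),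
      AddSubgroup.closure (Set.range v) = perpLat (![2, 2, 2, 2, 2, 1] : Fin 6 → ℤ) ∧
      ∀ i j, ∑ k, v i k * v j k = gram5 i j) := by
  refine ⟨⟨fEquiv, ?_⟩, ⟨vA, closureA, by intro i j; fin_cases i <;> fin_cases j <;> rfl⟩, ⟨vB, closureB, by intro i j; fin_cases i <;> fin_cases j <;> rfl⟩⟩
  rintro ⟨x, hx⟩ ⟨y, hy⟩
  rw [memA_iff] at hx hy
  show ∑ i, x i * y i = ∑ i, Fmap x i * Fmap y i
  rw [Fin.sum_univ_six, Fin.sum_univ_six]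
  simp only [Fmap, vec6_0, vec6_1, vec6_2, vec6_3, vec6_4, vec6_5]
  linear_combination (-(x 0)) * hy - (y 0) * hx
end

section
/- Let ρ = (ρ₁, …, ρ_t) with ρ₁ ≥ ρ₂ ≥ ⋯ ≥ ρ_t ≥ 0 be integers, g = (1/2)Σρᵢ(ρᵢ−1), and V₀ = the value determined by 8V₀ = min{‖c‖² − t : c characteristic in Z^t, |c·ρ| = Σρᵢ²}. If V₀ ≤ 1, then g ≤ 3, and the multiset of ρᵢ exceeding 1 is: empty if g = 0; {2} if g = 1; {2,2} if g = 2; {3} if g = 3. -/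
/-- if `V₀ ≤ 1` then `g ≤ 3` and the multiset of coefficients of `ρ`
exceeding `1` is `∅`, `{2}`, `{2,2}`, or `{3}` according to `g = 0, 1, 2, 3`. -/
theorem V0_le_one_classification (t : ℕ) (ρ : Fin t → ℕ) (g V₀ : ℕ)
    (hanti : Antitone ρ) (hone : ∀ i, 1 ≤ ρ i)
    (hg : 2 * g = ∑ i, ρ i * (ρ i - 1))
    (hV : IsLeast {m : ℤ | ∃ c : Fin t → ℤ, (∀ i, Odd (c i)) ∧
        |∑ i, c i * (ρ i : ℤ)| = ∑ i, (ρ i : ℤ) ^ 2 ∧ m = (∑ i, (c i) ^ 2) - t}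
      (8 * V₀))
    (hV0 : V₀ ≤ 1) :
    g ≤ 3 ∧
    (g = 0 → Multiset.map ρ (Finset.univ.filter fun i => 1 < ρ i).val = 0) ∧
    (g = 1 → Multiset.map ρ (Finset.univ.filter fun i => 1 < ρ i).val = {2}) ∧
    (g = 2 → Multiset.map ρ (Finset.univ.filter fun i => 1 < ρ i).val = {2, 2}) ∧
    (g = 3 → Multiset.map ρ (Finset.univ.filter fun i => 1 < ρ i).val = {3}) := by
  obtain ⟨⟨c, hodd, habs, hm⟩, _hlb⟩ := hV
  -- Cauchy–Schwarz gives ∑ ρ² ≤ ∑ c²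
  have hcs : (∑ i, c i * (ρ i : ℤ)) ^ 2 ≤ (∑ i, (c i) ^ 2) * ∑ i, ((ρ i : ℤ)) ^ 2 :=
    Finset.sum_mul_sq_le_sq_mul_sq _ _ _
  have habs2 : (∑ i, c i * (ρ i : ℤ)) ^ 2 = (∑ i, ((ρ i : ℤ)) ^ 2) ^ 2 := by
    rw [← sq_abs, habs]
  have hρnonneg : (0 : ℤ) ≤ ∑ i, ((ρ i : ℤ)) ^ 2 :=
    Finset.sum_nonneg fun i _ => sq_nonneg _
  have hkey : (∑ i, ((ρ i : ℤ)) ^ 2) ≤ ∑ i, (c i) ^ 2 := by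
    rcases hρnonneg.eq_or_lt with h0 | hpos
    · rw [← h0]; exact Finset.sum_nonneg fun i _ => sq_nonneg _
    · have := habs2 ▸ hcs
      nlinarith
  -- hence ∑ ρ² ≤ t + 8 in ℤ
  have hV8 : (8 * (V₀ : ℤ)) ≤ 8 := by
    have : (V₀ : ℤ) ≤ 1 := by exact_mod_cast hV0
    linarith
  have hZ : (∑ i, ((ρ i : ℤ)) ^ 2) ≤ t + 8 := by
    have : (8 * V₀ : ℤ) = (∑ i, (c i) ^ 2) - t := hm
    linarith
  have hnat : ∑ i, ρ i ^ 2 ≤ t + 8 := by exact_mod_cast hZ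
  -- combinatorics
  set S := Finset.univ.filter fun i => 1 < ρ i with hS
  have hmemS : ∀ i ∈ S, 2 ≤ ρ i := by
    intro i hi; have := (Finset.mem_filter.mp hi).2; omega
  have hnotS : ∀ i ∈ Finset.univ.filter (fun i => ¬ 1 < ρ i), ρ i = 1 := by
    intro i hi; have := (Finset.mem_filter.mp hi).2; have := hone i; omega
  have hsplit : ∑ i ∈ S, ρ i ^ 2 + ∑ i ∈ Finset.univ.filter (fun i => ¬ 1 < ρ i), ρ i ^ 2
      = ∑ i, ρ i ^ 2 :=
    Finset.sum_filter_add_sum_filter_not _ _ _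
  have hcardsplit : S.card + (Finset.univ.filter (fun i => ¬ 1 < ρ i)).card = t := by
    rw [Finset.card_filter_add_card_filter_not]; simp
  have hnot1 : ∑ i ∈ Finset.univ.filter (fun i => ¬ 1 < ρ i), ρ i ^ 2
      = (Finset.univ.filter (fun i => ¬ 1 < ρ i)).card := by
    rw [Finset.card_eq_sum_ones]
    exact Finset.sum_congr rfl fun i hi => by rw [hnotS i hi]; ring
  have hSsum : ∑ i ∈ S, ρ i ^ 2 ≤ S.card + 8 := by omega
  have hSlb : 4 * S.card ≤ ∑ i ∈ S, ρ i ^ 2 := by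
    calc 4 * S.card = ∑ _i ∈ S, 4 := by rw [Finset.sum_const]; ring
    _ ≤ ∑ i ∈ S, ρ i ^ 2 := Finset.sum_le_sum fun i hi => by
        have := hmemS i hi; nlinarith
  have hcard : S.card ≤ 2 := by omega
  -- 2g = sum over S
  have hgS : 2 * g = ∑ i ∈ S, ρ i * (ρ i - 1) := by
    rw [hg, ← Finset.sum_filter_add_sum_filter_not Finset.univ (fun i => 1 < ρ i)]
    have : ∑ i ∈ Finset.univ.filter (fun i => ¬ 1 < ρ i), ρ i * (ρ i - 1) = 0 := by
      apply Finset.sum_eq_zero; intro i hi; rw [hnotS i hi]; ring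
    rw [this, add_zero]
  interval_cases hc : S.card
  · -- card 0
    have hE : S = ∅ := Finset.card_eq_zero.mp hc
    rw [hE] at hgS
    simp only [Finset.sum_empty] at hgS
    rw [hE]
    exact ⟨by omega, fun _ => by simp, fun h => by omega, fun h => by omega, fun h => by omega⟩
  · obtain ⟨i, hi⟩ := Finset.card_eq_one.mp hc
    have hiS : i ∈ S := by rw [hi]; simp
    have h2 : 2 ≤ ρ i := hmemS i hiS
    rw [hi] at hgS hSsum ⊢
    simp only [Finset.sum_singleton] at hgS hSsum
    have h3 : ρ i ≤ 3 := by
      rcases Nat.lt_or_ge (ρ i) 4 with h | h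
      · omega
      · have := Nat.pow_le_pow_left h 2; omega
    have hmap : Multiset.map ρ ({i} : Finset (Fin t)).val = {ρ i} := by simp
    rw [hmap]
    interval_cases hri : ρ i
    · exact ⟨by omega, fun h => by omega, fun _ => rfl, fun h => by omega, fun h => by omega⟩
    · exact ⟨by omega, fun h => by omega, fun h => by omega, fun h => by omega, fun _ => rfl⟩
  · obtain ⟨i, j, hij, hijS⟩ := Finset.card_eq_two.mp hc
    have hiS : i ∈ S := by rw [hijS]; simp
    have hjS : j ∈ S := by rw [hijS]; simp
    have h2i : 2 ≤ ρ i := hmemS i hiS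
    have h2j : 2 ≤ ρ j := hmemS j hjS
    rw [hijS] at hgS hSsum ⊢
    rw [Finset.sum_pair hij] at hSsum
    rw [Finset.sum_pair hij] at hgS
    have h4i : 4 ≤ ρ i ^ 2 := by calc 4 = 2 ^ 2 := rfl
                                    _ ≤ ρ i ^ 2 := Nat.pow_le_pow_left h2i 2
    have h4j : 4 ≤ ρ j ^ 2 := by calc 4 = 2 ^ 2 := rfl
                                    _ ≤ ρ j ^ 2 := Nat.pow_le_pow_left h2j 2
    have hri : ρ i = 2 := by
      rcases Nat.lt_or_ge (ρ i) 3 with h | h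
      · omega
      · have := Nat.pow_le_pow_left h 2; omega
    have hrj : ρ j = 2 := by
      rcases Nat.lt_or_ge (ρ j) 3 with h | h
      · omega
      · have := Nat.pow_le_pow_left h 2; omega
    have hmap : Multiset.map ρ ({i, j} : Finset (Fin t)).val = {ρ i, ρ j} := by
      rw [Finset.insert_val, Multiset.ndinsert_of_notMem (by simpa using hij)]
      simp
    rw [hmap, hri, hrj]
    rw [hri, hrj] at hgS
    exact ⟨by omega, fun h => by omega, fun h => by omega, fun _ => rfl, fun h => by omega⟩
end

section
/- Let p/q = [a₀, …, a_l]⁻ with a₀ ≥ 1 and aᵢ ≥ 2 for i ≥ 1, and write p/q = a₀ − r/q where q/r = [a₁, …, a_l]⁻ (with r = 0, q = 1 when l = 0). Define C to be the set of integer tuples (c₀, …, c_l) with cᵢ ≡ aᵢ (mod 2) and 2 − aᵢ ≤ cᵢ ≤ aᵢ for all i, containing no full tank (no indices i < j with cᵢ = aᵢ, cⱼ = aⱼ, and c_k = a_k − 2 for all i < k < j). Then |C| = p; moreover, for each residue c ≡ a₀ (mod 2), the number of elements of C with c₀ = c equals q if −a₀ < c < a₀ and equals q − r if c = a₀. -/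
/-- A tuple `c` contains no full tank with respect to `a`: there are no indices `i < j`
with `cᵢ = aᵢ`, `cⱼ = aⱼ` and `c_k = a_k - 2` for all `i < k < j`. -/
def TankFree (l : ℕ) (a c : Fin (l + 1) → ℤ) : Prop :=
  ¬ ∃ i j : Fin (l + 1), i < j ∧ c i = a i ∧ c j = a j ∧
      ∀ k, i < k → k < j → c k = a k - 2

/-- The set `C` of tuples with `cᵢ ≡ aᵢ (mod 2)`, `2 - aᵢ ≤ cᵢ ≤ aᵢ`, and no full tank. -/
def Cset (l : ℕ) (a : Fin (l + 1) → ℤ) : Set (Fin (l + 1) → ℤ) :=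
  {c | (∀ i, (2 : ℤ) ∣ (c i - a i)) ∧ (∀ i, 2 - a i ≤ c i ∧ c i ≤ a i) ∧ TankFree l a c}

/-! ### Auxiliary development -/

/-- Continuant pair: `cnt L = (K L, K (tail L))` with `cnt [] = (1,0)`. -/
def cnt : List ℤ → ℤ × ℤ
  | [] => (1, 0)
  | x :: xs => (x * (cnt xs).1 - (cnt xs).2, (cnt xs).1)

lemma cnt_pos {L : List ℤ} (h : ∀ y ∈ L, 2 ≤ y) :
    0 ≤ (cnt L).2 ∧ (cnt L).2 < (cnt L).1 := by
  induction L with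
  | nil => simp [cnt]
  | cons x xs ih =>
    have h2 : 2 ≤ x := h x (by simp)
    obtain ⟨ih1, ih2⟩ := ih (fun y hy => h y (by simp [hy]))
    simp only [cnt]
    refine ⟨by omega, ?_⟩
    have h3 : (cnt xs).1 ≤ (x - 1) * (cnt xs).1 :=
      le_mul_of_one_le_left (by omega) (by omega)
    nlinarith

lemma cnt_gcd (L : List ℤ) : Int.gcd (cnt L).1 (cnt L).2 = 1 := by
  induction L with
  | nil => simp [cnt]
  | cons x xs ih =>
    simp only [cnt]
    rw [← Int.isCoprime_iff_gcd_eq_one] at ih ⊢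
    have : x * (cnt xs).1 - (cnt xs).2 = (-(cnt xs).2) + (cnt xs).1 * x := by ring
    rw [this]
    exact (ih.symm.neg_left).add_mul_left_left x

lemma ncf_cnt {L : List ℤ} (h : ∀ y ∈ L, 2 ≤ y) :
    ncfZ L = ((cnt L).1 : ℚ) / ((cnt L).2 : ℚ) := by
  induction L with
  | nil => simp [ncfZ, cnt]
  | cons x xs ih =>
    have hxs : ∀ y ∈ xs, 2 ≤ y := fun y hy => h y (by simp [hy])
    obtain ⟨h1, h2⟩ := cnt_pos hxs
    have hpos : (0:ℤ) < (cnt xs).1 := lt_of_le_of_lt h1 h2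
    have hne : ((cnt xs).1 : ℚ) ≠ 0 := by exact_mod_cast hpos.ne'
    simp only [ncfZ, cnt, ih hxs]
    rw [inv_div]
    field_simp
    push_cast
    ring

/-- Generalized `Cset` for tuples of arbitrary length. -/
def Dset (m : ℕ) (a : Fin m → ℤ) : Set (Fin m → ℤ) :=
  {c | (∀ i, (2 : ℤ) ∣ (c i - a i)) ∧ (∀ i, 2 - a i ≤ c i ∧ c i ≤ a i) ∧
    ¬ ∃ i j : Fin m, i < j ∧ c i = a i ∧ c j = a j ∧ ∀ k, i < k → k < j → c k = a k - 2}

/-- `c` has a full tank. -/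
def HT (m : ℕ) (a c : Fin m → ℤ) : Prop :=
  ∃ i j : Fin m, i < j ∧ c i = a i ∧ c j = a j ∧ ∀ k, i < k → k < j → c k = a k - 2

/-- `c` has a "prefix pattern": some `c j = a j` with all earlier entries `a k - 2`. -/
def HP (m : ℕ) (a c : Fin m → ℤ) : Prop :=
  ∃ j, c j = a j ∧ ∀ k, k < j → c k = a k - 2

def Forb (m : ℕ) (a : Fin m → ℤ) : Set (Fin m → ℤ) :=
  {c | c ∈ Dset m a ∧ HP m a c}

lemma Cset_eq_Dset (l : ℕ) (a : Fin (l + 1) → ℤ) : Cset l a = Dset (l + 1) a := rfl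

lemma mem_Dset {m : ℕ} {a c : Fin m → ℤ} :
    c ∈ Dset m a ↔ (∀ i, (2 : ℤ) ∣ (c i - a i)) ∧ (∀ i, 2 - a i ≤ c i ∧ c i ≤ a i) ∧
      ¬ HT m a c := Iff.rfl

lemma Dset_finite (m : ℕ) (a : Fin m → ℤ) : (Dset m a).Finite := by
  refine Set.Finite.subset (Set.Finite.pi (fun i : Fin m => Set.finite_Icc (2 - a i) (a i))) ?_
  intro c hc
  rw [Set.mem_pi]
  intro i _
  exact Set.mem_Icc.2 (hc.2.1 i)

lemma Forb_subset (m : ℕ) (a : Fin m → ℤ) : Forb m a ⊆ Dset m a := fun _ h => h.1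

lemma ht_succ {m : ℕ} {a : Fin (m + 1) → ℤ} {c₀ : ℤ} {t : Fin m → ℤ}
    (h : HT m (Fin.tail a) t) : HT (m + 1) a (Fin.cons c₀ t) := by
  obtain ⟨i, j, hij, hi, hj, hk⟩ := h
  refine ⟨i.succ, j.succ, Fin.succ_lt_succ_iff.2 hij, by simpa [Fin.tail] using hi, by simpa [Fin.tail] using hj, ?_⟩
  intro k hk1 hk2
  obtain ⟨k', rfl⟩ : ∃ k', k = Fin.succ k' := by
    refine Fin.eq_succ_of_ne_zero ?_
    intro h0
    rw [h0] at hk1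
    exact absurd hk1 (Fin.not_lt.2 (Fin.zero_le _))
  have := hk k' (Fin.succ_lt_succ_iff.1 hk1) (Fin.succ_lt_succ_iff.1 hk2)
  simpa [Fin.tail] using this

lemma ht_down {m : ℕ} {a : Fin (m + 1) → ℤ} {c₀ : ℤ} {t : Fin m → ℤ}
    (hne : c₀ ≠ a 0) (h : HT (m + 1) a (Fin.cons c₀ t)) : HT m (Fin.tail a) t := by
  obtain ⟨i, j, hij, hi, hj, hk⟩ := h
  obtain ⟨i', rfl⟩ : ∃ i', i = Fin.succ i' := by
    refine Fin.eq_succ_of_ne_zero ?_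
    rintro rfl
    exact hne (by simpa using hi)
  obtain ⟨j', rfl⟩ : ∃ j', j = Fin.succ j' := by
    refine Fin.eq_succ_of_ne_zero ?_
    rintro rfl
    exact absurd hij (Fin.not_lt.2 (Fin.zero_le _))
  refine ⟨i', j', Fin.succ_lt_succ_iff.1 hij, by simpa [Fin.tail] using hi, by simpa [Fin.tail] using hj, ?_⟩
  intro k hk1 hk2
  have := hk k.succ (Fin.succ_lt_succ_iff.2 hk1) (Fin.succ_lt_succ_iff.2 hk2)
  simpa [Fin.tail] using this

lemma ht_top_iff {m : ℕ} {a : Fin (m + 1) → ℤ} {t : Fin m → ℤ} :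
    HT (m + 1) a (Fin.cons (a 0) t) ↔ HT m (Fin.tail a) t ∨ HP m (Fin.tail a) t := by
  constructor
  · rintro ⟨i, j, hij, hi, hj, hk⟩
    by_cases h0 : i = 0
    · subst h0
      right
      obtain ⟨j', rfl⟩ : ∃ j', j = Fin.succ j' := Fin.eq_succ_of_ne_zero (by
        rintro rfl; exact absurd hij (lt_irrefl _))
      refine ⟨j', by simpa [Fin.tail] using hj, ?_⟩
      intro k hk2
      have := hk k.succ (Fin.succ_pos _) (Fin.succ_lt_succ_iff.2 hk2)
      simpa [Fin.tail] using this
    · left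
      obtain ⟨i', rfl⟩ := Fin.eq_succ_of_ne_zero h0
      obtain ⟨j', rfl⟩ : ∃ j', j = Fin.succ j' := Fin.eq_succ_of_ne_zero (by
        rintro rfl; exact absurd hij (Fin.not_lt.2 (Fin.zero_le _)))
      refine ⟨i', j', Fin.succ_lt_succ_iff.1 hij, by simpa [Fin.tail] using hi, by simpa [Fin.tail] using hj, ?_⟩
      intro k hk1 hk2
      have := hk k.succ (Fin.succ_lt_succ_iff.2 hk1) (Fin.succ_lt_succ_iff.2 hk2)
      simpa [Fin.tail] using this
  · rintro (h | ⟨j, hj, hk⟩)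
    · exact ht_succ h
    · refine ⟨0, j.succ, Fin.succ_pos _, by simp, by simpa [Fin.tail] using hj, ?_⟩
      intro k hk1 hk2
      obtain ⟨k', rfl⟩ : ∃ k', k = Fin.succ k' := Fin.eq_succ_of_ne_zero (by
        rintro rfl; exact absurd hk1 (lt_irrefl _))
      have := hk k' (Fin.succ_lt_succ_iff.1 hk2)
      simpa [Fin.tail] using this

lemma hp_down {m : ℕ} {a : Fin (m + 1) → ℤ} {c₀ : ℤ} {t : Fin m → ℤ}
    (hne : c₀ ≠ a 0) (h : HP (m + 1) a (Fin.cons c₀ t)) :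
    c₀ = a 0 - 2 ∧ HP m (Fin.tail a) t := by
  obtain ⟨j, hj, hk⟩ := h
  obtain ⟨j', rfl⟩ : ∃ j', j = Fin.succ j' := Fin.eq_succ_of_ne_zero (by
    rintro rfl; exact hne (by simpa using hj))
  constructor
  · have := hk 0 (Fin.succ_pos _)
    simpa using this
  · refine ⟨j', by simpa [Fin.tail] using hj, ?_⟩
    intro k hk2
    have := hk k.succ (Fin.succ_lt_succ_iff.2 hk2)
    simpa [Fin.tail] using this

lemma hp_up {m : ℕ} {a : Fin (m + 1) → ℤ} {t : Fin m → ℤ}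
    (h : HP m (Fin.tail a) t) : HP (m + 1) a (Fin.cons (a 0 - 2) t) := by
  obtain ⟨j, hj, hk⟩ := h
  refine ⟨j.succ, by simpa [Fin.tail] using hj, ?_⟩
  intro k hk2
  obtain rfl | ⟨k', rfl⟩ := (Fin.eq_zero_or_eq_succ k)
  · simp
  · have := hk k' (Fin.succ_lt_succ_iff.1 hk2)
    simpa [Fin.tail] using this

lemma mem_Dset_cons_ne {m : ℕ} {a : Fin (m + 1) → ℤ} {c₀ : ℤ} {t : Fin m → ℤ}
    (hne : c₀ ≠ a 0) :
    Fin.cons c₀ t ∈ Dset (m + 1) a ↔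
      ((2 : ℤ) ∣ c₀ - a 0) ∧ (2 - a 0 ≤ c₀ ∧ c₀ ≤ a 0) ∧ t ∈ Dset m (Fin.tail a) := by
  constructor
  · rintro ⟨hpar, hbnd, htf⟩
    refine ⟨by simpa using hpar 0, by simpa using hbnd 0,
      fun i => by simpa [Fin.tail] using hpar i.succ,
      fun i => by simpa [Fin.tail] using hbnd i.succ,
      fun ht => htf (ht_succ ht)⟩
  · rintro ⟨hpar0, hbnd0, hpar, hbnd, htf⟩
    refine ⟨?_, ?_, fun ht => htf (ht_down hne ht)⟩
    · intro i
      obtain rfl | ⟨i', rfl⟩ := Fin.eq_zero_or_eq_succ i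
      · simpa using hpar0
      · simpa [Fin.tail] using hpar i'
    · intro i
      obtain rfl | ⟨i', rfl⟩ := Fin.eq_zero_or_eq_succ i
      · simpa using hbnd0
      · simpa [Fin.tail] using hbnd i'

lemma mem_Dset_cons_top {m : ℕ} {a : Fin (m + 1) → ℤ} {t : Fin m → ℤ} (ha0 : 1 ≤ a 0) :
    Fin.cons (a 0) t ∈ Dset (m + 1) a ↔
      t ∈ Dset m (Fin.tail a) ∧ ¬ HP m (Fin.tail a) t := by
  constructor
  · rintro ⟨hpar, hbnd, htf⟩
    have htf' := fun h => htf (ht_top_iff.2 h)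
    refine ⟨⟨fun i => by simpa [Fin.tail] using hpar i.succ,
      fun i => by simpa [Fin.tail] using hbnd i.succ,
      fun h => htf' (Or.inl h)⟩, fun h => htf' (Or.inr h)⟩
  · rintro ⟨⟨hpar, hbnd, htf⟩, hnp⟩
    refine ⟨?_, ?_, fun ht => (ht_top_iff.1 ht).elim htf hnp⟩
    · intro i
      obtain rfl | ⟨i', rfl⟩ := Fin.eq_zero_or_eq_succ i
      · simp
      · simpa [Fin.tail] using hpar i'
    · intro i
      obtain rfl | ⟨i', rfl⟩ := Fin.eq_zero_or_eq_succ i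
      · simp; omega
      · simpa [Fin.tail] using hbnd i'

lemma slice_ne {m : ℕ} (a : Fin (m + 1) → ℤ) {c₀ : ℤ} (hne : c₀ ≠ a 0)
    (hpar : (2 : ℤ) ∣ c₀ - a 0) (hlb : 2 - a 0 ≤ c₀) (hub : c₀ ≤ a 0) :
    {c ∈ Dset (m + 1) a | c 0 = c₀} = Fin.cons c₀ '' Dset m (Fin.tail a) := by
  ext c
  constructor
  · rintro ⟨hc, h0⟩
    refine ⟨Fin.tail c, ?_, by rw [← h0]; exact Fin.cons_self_tail c⟩
    have hc' : Fin.cons c₀ (Fin.tail c) ∈ Dset (m + 1) a := by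
      rw [← h0, Fin.cons_self_tail]; exact hc
    exact ((mem_Dset_cons_ne hne).1 hc').2.2
  · rintro ⟨t, ht, rfl⟩
    exact ⟨(mem_Dset_cons_ne hne).2 ⟨hpar, ⟨hlb, hub⟩, ht⟩, Fin.cons_zero _ _⟩

lemma slice_top {m : ℕ} (a : Fin (m + 1) → ℤ) (ha0 : 1 ≤ a 0) :
    {c ∈ Dset (m + 1) a | c 0 = a 0} =
      Fin.cons (a 0) '' (Dset m (Fin.tail a) \ Forb m (Fin.tail a)) := by
  ext c
  constructor
  · rintro ⟨hc, h0⟩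
    refine ⟨Fin.tail c, ?_, by rw [← h0]; exact Fin.cons_self_tail c⟩
    have hc' : Fin.cons (a 0) (Fin.tail c) ∈ Dset (m + 1) a := by
      rw [← h0, Fin.cons_self_tail]; exact hc
    obtain ⟨hd, hnp⟩ := (mem_Dset_cons_top ha0).1 hc'
    exact ⟨hd, fun hf => hnp hf.2⟩
  · rintro ⟨t, ⟨ht, hnf⟩, rfl⟩
    exact ⟨(mem_Dset_cons_top ha0).2 ⟨ht, fun hp => hnf ⟨ht, hp⟩⟩, Fin.cons_zero _ _⟩

lemma forb_decomp {m : ℕ} (a : Fin (m + 1) → ℤ) (ha : ∀ i, 2 ≤ a i) :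
    Forb (m + 1) a =
      {c ∈ Dset (m + 1) a | c 0 = a 0} ∪ Fin.cons (a 0 - 2) '' Forb m (Fin.tail a) := by
  have ha0 : (1 : ℤ) ≤ a 0 := le_trans one_le_two (ha 0)
  have hne : a 0 - 2 ≠ a 0 := by omega
  ext c
  constructor
  · rintro ⟨hc, hp⟩
    by_cases h0 : c 0 = a 0
    · exact Or.inl ⟨hc, h0⟩
    · right
      have hc' : Fin.cons (c 0) (Fin.tail c) ∈ Dset (m + 1) a := by
        rw [Fin.cons_self_tail]; exact hc
      have hp' : HP (m + 1) a (Fin.cons (c 0) (Fin.tail c)) := by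
        rw [Fin.cons_self_tail]; exact hp
      obtain ⟨h02, htp⟩ := hp_down h0 hp'
      refine ⟨Fin.tail c, ⟨?_, htp⟩, by rw [← h02]; exact Fin.cons_self_tail c⟩
      rw [h02] at hc'
      exact ((mem_Dset_cons_ne hne).1 hc').2.2
  · rintro (⟨hc, h0⟩ | ⟨t, ⟨ht, htp⟩, rfl⟩)
    · exact ⟨hc, 0, h0, fun k hk => absurd hk (Fin.not_lt.2 (Fin.zero_le _))⟩
    · refine ⟨(mem_Dset_cons_ne hne).2 ⟨by simp, ⟨by have := ha 0; omega, by omega⟩, ht⟩, hp_up htp⟩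

lemma ncard_biUnion_aux {α ι : Type*} [DecidableEq ι] (s : Finset ι) (f : ι → Set α)
    (hfin : ∀ i ∈ s, (f i).Finite)
    (hdisj : ∀ i ∈ s, ∀ j ∈ s, i ≠ j → Disjoint (f i) (f j)) :
    (⋃ i ∈ s, f i).ncard = ∑ i ∈ s, (f i).ncard := by
  induction s using Finset.induction_on with
  | empty => simp
  | @insert x s hx ih =>
    rw [Finset.set_biUnion_insert, Finset.sum_insert hx,
      Set.ncard_union_eq ?_ (hfin x (Finset.mem_insert_self _ _)) ?_,
      ih (fun i hi => hfin i (Finset.mem_insert_of_mem hi))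
        (fun i hi j hj hij => hdisj i (Finset.mem_insert_of_mem hi)
          j (Finset.mem_insert_of_mem hj) hij)]
    · rw [Set.disjoint_iUnion_right]
      intro i
      rw [Set.disjoint_iUnion_right]
      intro hi
      exact hdisj x (Finset.mem_insert_self _ _) i (Finset.mem_insert_of_mem hi)
        (by rintro rfl; exact hx hi)
    · exact Set.Finite.biUnion s.finite_toSet
        (fun i hi => hfin i (Finset.mem_insert_of_mem hi))

lemma consZ_injective {m : ℕ} (c₀ : ℤ) :
    Function.Injective (@Fin.cons m (fun _ => ℤ) c₀) := by
  intro s t h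
  funext i
  have := congrFun h i.succ
  simpa using this

lemma slice_ne_card {m : ℕ} (a : Fin (m + 1) → ℤ) {c₀ : ℤ} (hne : c₀ ≠ a 0)
    (hpar : (2 : ℤ) ∣ c₀ - a 0) (hlb : 2 - a 0 ≤ c₀) (hub : c₀ ≤ a 0) :
    ({c ∈ Dset (m + 1) a | c 0 = c₀}).ncard = (Dset m (Fin.tail a)).ncard := by
  rw [slice_ne a hne hpar hlb hub,
    Set.ncard_image_of_injective _ (consZ_injective c₀)]

lemma slice_top_card {m : ℕ} (a : Fin (m + 1) → ℤ) (ha0 : 1 ≤ a 0) :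
    (({c ∈ Dset (m + 1) a | c 0 = a 0}).ncard : ℤ)
      = ((Dset m (Fin.tail a)).ncard : ℤ) - ((Forb m (Fin.tail a)).ncard : ℤ) := by
  have hle := Set.ncard_le_ncard (Forb_subset m (Fin.tail a)) (Dset_finite _ _)
  rw [slice_top a ha0, Set.ncard_image_of_injective _ (consZ_injective _),
    Set.ncard_diff (Forb_subset _ _) ((Dset_finite _ _).subset (Forb_subset _ _)),
    Nat.cast_sub hle]

lemma Dset_card_succ {m : ℕ} (a : Fin (m + 1) → ℤ) (ha0 : 1 ≤ a 0) :
    ((Dset (m + 1) a).ncard : ℤ)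
      = a 0 * ((Dset m (Fin.tail a)).ncard : ℤ) - ((Forb m (Fin.tail a)).ncard : ℤ) := by
  set n := (a 0).toNat with hn
  have hna : (n : ℤ) = a 0 := Int.toNat_of_nonneg (by omega)
  have hn1 : 1 ≤ n := by omega
  set T : Finset ℤ := (Finset.range n).image (fun k : ℕ => a 0 - 2 * k) with hT
  have hU : Dset (m + 1) a = ⋃ c₀ ∈ T, {c ∈ Dset (m + 1) a | c 0 = c₀} := by
    ext c
    simp only [Set.mem_iUnion, hT, Finset.mem_coe, Finset.mem_image, Finset.mem_range,
      Set.mem_setOf_eq]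
    constructor
    · intro hc
      have hpar := hc.1
      have hbnd := hc.2.1
      obtain ⟨t, htt⟩ := hpar 0
      have h1 := (hbnd 0).1
      have h2 := (hbnd 0).2
      exact ⟨c 0, ⟨⟨(-t).toNat, by omega, by omega⟩, hc, rfl⟩⟩
    · rintro ⟨c₀, _, hc, _⟩
      exact hc
  have hfin : ∀ c₀ ∈ T, ({c ∈ Dset (m + 1) a | c 0 = c₀}).Finite :=
    fun c₀ _ => (Dset_finite _ _).subset (fun c hc => hc.1)
  have hdisj : ∀ c₀ ∈ T, ∀ c₁ ∈ T, c₀ ≠ c₁ →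
      Disjoint {c ∈ Dset (m + 1) a | c 0 = c₀} {c ∈ Dset (m + 1) a | c 0 = c₁} := by
    intro c₀ _ c₁ _ hne
    rw [Set.disjoint_left]
    rintro c ⟨_, h0⟩ ⟨_, h1⟩
    exact hne (h0 ▸ h1 ▸ rfl)
  rw [hU, ncard_biUnion_aux T _ hfin hdisj]
  push_cast [hT]
  rw [Finset.sum_image (by intro x _ y _ h; have h' : a 0 - 2 * (x:ℤ) = a 0 - 2 * (y:ℤ) := h; omega)]
  have hterm : ∀ k ∈ Finset.range n,
      (({c ∈ Dset (m + 1) a | c 0 = a 0 - 2 * (k : ℤ)}).ncard : ℤ)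
        = ((Dset m (Fin.tail a)).ncard : ℤ)
          - (if k = 0 then ((Forb m (Fin.tail a)).ncard : ℤ) else 0) := by
    intro k hk
    have hkn : (k : ℤ) < a 0 := by
      rw [← hna]; exact_mod_cast Finset.mem_range.1 hk
    by_cases hk0 : k = 0
    · subst hk0
      have h : a 0 - 2 * ((0 : ℕ) : ℤ) = a 0 := by norm_num
      rw [h, slice_top_card a ha0]
      simp
    · have hk1 : 1 ≤ (k : ℤ) := by exact_mod_cast Nat.one_le_iff_ne_zero.2 hk0
      rw [slice_ne_card a (by omega) ⟨-(k : ℤ), by ring⟩ (by omega) (by omega)]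
      simp [hk0]
  rw [Finset.sum_congr rfl hterm, Finset.sum_sub_distrib, Finset.sum_const,
    Finset.sum_ite_eq' (Finset.range n) 0 (fun _ => ((Forb m (Fin.tail a)).ncard : ℤ))]
  simp only [Finset.mem_range, nsmul_eq_mul, Finset.card_range]
  rw [if_pos (by omega : 0 < n), hna]

lemma Forb_card_succ {m : ℕ} (a : Fin (m + 1) → ℤ) (ha : ∀ i, 2 ≤ a i) :
    ((Forb (m + 1) a).ncard : ℤ) = ((Dset m (Fin.tail a)).ncard : ℤ) := by
  have ha0 : (1 : ℤ) ≤ a 0 := le_trans one_le_two (ha 0)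
  have hdis : Disjoint {c ∈ Dset (m + 1) a | c 0 = a 0}
      (Fin.cons (a 0 - 2) '' Forb m (Fin.tail a)) := by
    rw [Set.disjoint_left]
    rintro c ⟨_, h0⟩ ⟨t, _, rfl⟩
    rw [Fin.cons_zero] at h0
    omega
  have hfin1 : ({c ∈ Dset (m + 1) a | c 0 = a 0}).Finite :=
    (Dset_finite _ _).subset (fun c hc => hc.1)
  have hfin2 : (@Fin.cons m (fun _ => ℤ) (a 0 - 2) '' Forb m (Fin.tail a)).Finite := by
    exact (((Dset_finite m (Fin.tail a)).subset (Forb_subset _ _)).image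
      (@Fin.cons m (fun _ => ℤ) (a 0 - 2)))
  rw [forb_decomp a ha, Set.ncard_union_eq hdis hfin1 hfin2]
  push_cast
  rw [slice_top_card a ha0,
    Set.ncard_image_of_injective _ (consZ_injective (a 0 - 2))]
  ring

lemma key : ∀ (m : ℕ) (a : Fin m → ℤ),
    ((∀ i : Fin m, 1 ≤ a i ∧ (0 < (i : ℕ) → 2 ≤ a i)) →
      ((Dset m a).ncard : ℤ) = (cnt (List.ofFn a)).1) ∧
    ((∀ i, 2 ≤ a i) → ((Forb m a).ncard : ℤ) = (cnt (List.ofFn a)).2) := by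
  intro m
  induction m with
  | zero =>
    intro a
    constructor
    · intro _
      have h1 : Dset 0 a = Set.univ := by
        ext c
        simp only [mem_Dset, Set.mem_univ, iff_true]
        exact ⟨fun i => i.elim0, fun i => i.elim0, fun ⟨i, _⟩ => i.elim0⟩
      rw [h1, Set.ncard_univ]
      simp [cnt, List.ofFn_zero, Nat.card_unique]
    · intro _
      have h2 : Forb 0 a = ∅ := by
        ext c
        simp only [Forb, HP, Set.mem_setOf_eq, Set.mem_empty_iff_false, iff_false]
        rintro ⟨_, j, _⟩
        exact j.elim0
      rw [h2]
      simp [cnt]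
  | succ m ih =>
    intro a
    have hcnt : cnt (List.ofFn a) =
        (a 0 * (cnt (List.ofFn (Fin.tail a))).1 - (cnt (List.ofFn (Fin.tail a))).2,
         (cnt (List.ofFn (Fin.tail a))).1) := by
      rw [List.ofFn_succ]
      rfl
    constructor
    · intro hw
      have ha' : ∀ i, 2 ≤ Fin.tail a i := fun i => (hw i.succ).2 (by simp)
      have hD' := (ih (Fin.tail a)).1 (fun i => ⟨by linarith [ha' i], fun _ => ha' i⟩)
      have hF' := (ih (Fin.tail a)).2 ha'
      rw [hcnt, Dset_card_succ a (hw 0).1, hD', hF']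
    · intro hs
      have ha' : ∀ i, 2 ≤ Fin.tail a i := fun i => hs i.succ
      have hD' := (ih (Fin.tail a)).1 (fun i => ⟨by linarith [ha' i], fun _ => ha' i⟩)
      rw [hcnt, Forb_card_succ a hs, hD']

/-- `|C| = p`, and for `c ≡ a₀ (mod 2)` the number of elements of `C`
with `c₀ = c` is `q` if `-a₀ < c < a₀` and `q - r` if `c = a₀`. -/
theorem Cset_count (l : ℕ) (a : Fin (l + 1) → ℤ) (ha0 : 1 ≤ a 0)
    (ha : ∀ i : Fin (l + 1), 0 < (i : ℕ) → 2 ≤ a i)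
    (p q r : ℤ) (hq : 0 < q) (hr0 : 0 ≤ r) (hrq : r < q)
    (hp : p = a 0 * q - r) (hcop : Int.gcd q r = 1)
    (hcf : (q : ℚ) / (r : ℚ) = ncfZ (List.ofFn a).tail)
    (hcfp : (p : ℚ) / (q : ℚ) = ncfZ (List.ofFn a)) :
    ((Cset l a).ncard : ℤ) = p ∧
    ∀ c₀ : ℤ, (2 : ℤ) ∣ (c₀ - a 0) →
      ((-a 0 < c₀ ∧ c₀ < a 0 → (({c ∈ Cset l a | c 0 = c₀}).ncard : ℤ) = q) ∧
       (c₀ = a 0 → (({c ∈ Cset l a | c 0 = c₀}).ncard : ℤ) = q - r)) := by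
  have htail : (List.ofFn a).tail = List.ofFn (Fin.tail a) := by
    rw [List.ofFn_succ]
    rfl
  have ha' : ∀ y ∈ List.ofFn (Fin.tail a), 2 ≤ y := by
    intro y hy
    obtain ⟨i, rfl⟩ := List.mem_ofFn.1 hy
    exact ha i.succ (by simp)
  have ha'' : ∀ i, 2 ≤ Fin.tail a i := fun i => ha i.succ (by simp)
  set P := (cnt (List.ofFn (Fin.tail a))).1 with hPdef
  set Q := (cnt (List.ofFn (Fin.tail a))).2 with hQdef
  obtain ⟨hQ0, hQP⟩ : 0 ≤ Q ∧ Q < P := cnt_pos ha'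
  have hgcd : Int.gcd P Q = 1 := cnt_gcd (List.ofFn (Fin.tail a))
  have hPpos : 0 < P := lt_of_le_of_lt hQ0 hQP
  have hcf' : (q : ℚ) / (r : ℚ) = (P : ℚ) / (Q : ℚ) := by
    rw [hcf, htail, ncf_cnt ha']
  -- pin down q = P and r = Q
  have hqr : q = P ∧ r = Q := by
    rcases eq_or_lt_of_le hQ0 with hQ | hQ
    · have hP1 : P = 1 := by
        rw [← hQ, Int.gcd_zero_right] at hgcd
        omega
      have hr : r = 0 := by
        by_contra hr
        rw [← hQ] at hcf'
        simp only [Int.cast_zero, div_zero] at hcf'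
        rcases div_eq_zero_iff.1 hcf' with h | h
        · exact absurd (by exact_mod_cast h) (by omega : q ≠ 0)
        · exact hr (by exact_mod_cast h)
      have : q = 1 := by
        rw [hr, Int.gcd_zero_right] at hcop
        omega
      exact ⟨by omega, by omega⟩
    · have hrne : r ≠ 0 := by
        intro hr
        rw [hr] at hcf'
        simp only [Int.cast_zero, div_zero] at hcf'
        rcases div_eq_zero_iff.1 hcf'.symm with h | h
        · exact absurd (by exact_mod_cast h) (by omega : P ≠ 0)
        · exact absurd (by exact_mod_cast h) (by omega : Q ≠ 0)
      have hcross : q * Q = P * r := by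
        have h1 : ((r : ℚ)) ≠ 0 := by exact_mod_cast hrne
        have h2 : ((Q : ℚ)) ≠ 0 := by
          have : Q ≠ 0 := by omega
          exact_mod_cast this
        rw [div_eq_div_iff h1 h2] at hcf'
        exact_mod_cast hcf'
      have hcq : IsCoprime q r := Int.isCoprime_iff_gcd_eq_one.2 hcop
      have hcP : IsCoprime P Q := Int.isCoprime_iff_gcd_eq_one.2 hgcd
      have h1 : q ∣ P := hcq.dvd_of_dvd_mul_right ⟨Q, hcross.symm ▸ by ring⟩
      have h2 : P ∣ q := hcP.dvd_of_dvd_mul_right ⟨r, by linarith [hcross]⟩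
      have hqP : q = P := Int.dvd_antisymm (le_of_lt hq) (le_of_lt hPpos) h1 h2
      refine ⟨hqP, ?_⟩
      have : q * Q = q * r := by rw [hcross, hqP]
      have := mul_left_cancel₀ (by omega : q ≠ 0) this
      omega
  obtain ⟨hqP, hrQ⟩ := hqr
  have hcnt : cnt (List.ofFn a) = (a 0 * P - Q, P) := by
    rw [List.ofFn_succ]
    rfl
  have hkeyD := (key (l + 1) a).1 (by
    intro i
    constructor
    · rcases Nat.eq_zero_or_pos (i : ℕ) with h | h
      · have : i = 0 := Fin.ext (by simpa using h)
        rw [this]; exact ha0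
      · linarith [ha i h]
    · exact ha i)
  have hD' := (key l (Fin.tail a)).1 (fun i => ⟨by linarith [ha'' i], fun _ => ha'' i⟩)
  have hF' := (key l (Fin.tail a)).2 ha''
  constructor
  · rw [Cset_eq_Dset, hkeyD, hcnt, hp, hqP, hrQ]
  · intro c₀ hpar
    constructor
    · rintro ⟨h1, h2⟩
      have hlb : 2 - a 0 ≤ c₀ := by omega
      rw [Cset_eq_Dset, slice_ne_card a (by omega) hpar hlb (by omega), hD', hqP]
    · rintro rfl
      rw [Cset_eq_Dset, slice_top_card a ha0, hD', hF', hqP, hrQ]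
end
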